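/- arXiv:2501.16202 — 7 statements merged into one kernel-verified Lean document; each statement's English description precedes it below -/
import Mathlib

section
/- Let C be an odd cluster in T_d and let D be the set induced by C. Then D is connected with respect to the double-neighbor relation (so if D is nonempty it is an even cluster). The same statement holds with the roles of odd and even exchanged. -/
open MeasureTheory

/-- `x` has at least two `G`-neighbors in the set `B`. -/
def TwoNbrsIn {V : Type} (G : SimpleGraph V) (B : Set V) (x : V) : Prop :=
  ∃ y ∈ B, ∃ z ∈ B, y ≠ z ∧ G.Adj x y ∧ G.Adj x z

/-- `x` is an odd vertex: its graph distance to the fixed root `o` is odd. -/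
def IsOddV {V : Type} (G : SimpleGraph V) (o x : V) : Prop := Odd (G.dist o x)

/-- `x` is an even vertex: its graph distance to the fixed root `o` is even. -/
def IsEvenV {V : Type} (G : SimpleGraph V) (o x : V) : Prop := Even (G.dist o x)

/-- `S` is connected with respect to the double-neighbor relation (graph distance 2)
within `S`. -/
def DNConnected {V : Type} (G : SimpleGraph V) (S : Set V) : Prop :=
  ∀ x ∈ S, ∀ y ∈ S,
    Relation.ReflTransGen (fun a b => a ∈ S ∧ b ∈ S ∧ G.dist a b = 2) x y

/-- An odd cluster: a finite nonempty set of odd vertices, connected under the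
double-neighbor relation. -/
def IsOddCluster {V : Type} (G : SimpleGraph V) (o : V) (A : Set V) : Prop :=
  A.Finite ∧ A.Nonempty ∧ (∀ x ∈ A, IsOddV G o x) ∧ DNConnected G A

/-- An even cluster: a finite nonempty set of even vertices, connected under the
double-neighbor relation. -/
def IsEvenCluster {V : Type} (G : SimpleGraph V) (o : V) (A : Set V) : Prop :=
  A.Finite ∧ A.Nonempty ∧ (∀ x ∈ A, IsEvenV G o x) ∧ DNConnected G A

/-- Two vertex sets (of the same parity) are non-adjacent: they are disjoint and no
pair of points of the two sets is at graph distance 2 (so their graph distance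
exceeds 2). -/
def NonAdj {V : Type} (G : SimpleGraph V) (A B : Set V) : Prop :=
  Disjoint A B ∧ ∀ a ∈ A, ∀ b ∈ B, G.dist a b ≠ 2

/-- The neighborhood `N(A)` of a vertex set `A`. -/
def nbhd {V : Type} (G : SimpleGraph V) (A : Set V) : Set V := {y | ∃ x ∈ A, G.Adj x y}

/-- `Prr G A B`: the set of elements of `A` having at least two neighbors in `B`. -/
def Prr {V : Type} (G : SimpleGraph V) (A B : Set V) : Set V := {v ∈ A | TwoNbrsIn G B v}

/-- The set induced by `B`: vertices outside `B` with at least two neighbors in `B`. -/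
def inducedSet {V : Type} (G : SimpleGraph V) (B : Set V) : Set V :=
  {x | x ∉ B ∧ TwoNbrsIn G B x}

/-- `ℬ(A)`: the collection of sets `B ⊆ N(A)` such that no proper subset of `B` has the
same `Prr`-value. -/
def minimalB {V : Type} (G : SimpleGraph V) (A : Set V) : Set (Set V) :=
  {B | B ⊆ nbhd G A ∧ ∀ B' : Set V, B' ⊂ B → Prr G A B' ≠ Prr G A B}

/-- `ℬ(A, C)`: the members of `ℬ(A)` whose `Prr`-value is `C`. -/
def minimalBC {V : Type} (G : SimpleGraph V) (A C : Set V) : Set (Set V) :=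
  {B | B ∈ minimalB G A ∧ Prr G A B = C}

/-!
Let `D` be the set induced by an odd cluster `C`. Every `x ∈ D` has a neighbour in `C`, and two
vertices of `D` with a common neighbour are double neighbours (the tree has no triangles). If
`b, c ∈ C` are double neighbours, their midpoint is not in `C` (odd vertices are never adjacent), so
it lies in `D`. Following a double-neighbour chain in `C` between neighbours of `x, x' ∈ D` and
replacing each step by its midpoint therefore yields a double-neighbour chain in `D` from `x`
to `x'`.
-/

/-- `DNConnected G S` is connectivity of `S` under this relation. -/
def DNRel {V : Type} (G : SimpleGraph V) (S : Set V) (a b : V) : Prop :=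
  a ∈ S ∧ b ∈ S ∧ G.dist a b = 2

namespace SimpleGraph

variable {V : Type} {G : SimpleGraph V} {u v w : V}

lemma dist_eq_two_iff :
    G.dist u v = 2 ↔ u ≠ v ∧ ¬ G.Adj u v ∧ (G.commonNeighbors u v).Nonempty := by
  rw [dist, ENat.toNat_eq_iff two_ne_zero]
  exact edist_eq_two_iff

lemma exists_adj_adj_of_dist_eq_two (h : G.dist u w = 2) : ∃ m, G.Adj u m ∧ G.Adj m w := by
  obtain ⟨m, hum, hwm⟩ := (dist_eq_two_iff.mp h).2.2
  exact ⟨m, hum, hwm.symm⟩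

lemma IsAcyclic.dist_eq_two_of_adj_of_adj (hG : G.IsAcyclic) (hu : G.Adj v u) (hw : G.Adj v w)
    (huw : u ≠ w) : G.dist u w = 2 := by
  classical
  have hnadj : ¬ G.Adj u w := fun h =>
    hG.cliqueFree le_rfl {v, u, w} (is3Clique_triple_iff.mpr ⟨hu, hw, h⟩)
  exact dist_eq_two_iff.mpr ⟨huw, hnadj, v, hu.symm, hw.symm⟩

lemma IsTree.isIndepSet_setOf_odd_dist (hG : G.IsTree) (o : V) :
    G.IsIndepSet {x | Odd (G.dist o x)} := by
  intro u (hu : Odd _) v (hv : Odd _) _ huv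
  rcases hG.dist_eq_dist_add_one_of_adj o huv with h | h <;>
    simp_all [Nat.odd_add_one]

lemma IsTree.isIndepSet_setOf_even_dist (hG : G.IsTree) (o : V) :
    G.IsIndepSet {x | Even (G.dist o x)} := by
  intro u (hu : Even _) v (hv : Even _) _ huv
  rcases hG.dist_eq_dist_add_one_of_adj o huv with h | h <;>
    simp_all [Nat.even_add_one]

lemma IsAcyclic.reflTransGen_dnRel_of_adj_of_adj (hG : G.IsAcyclic) {S : Set V} {x x' c : V}
    (hx : x ∈ S) (hx' : x' ∈ S) (hxc : G.Adj x c) (hx'c : G.Adj x' c) :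
    Relation.ReflTransGen (DNRel G S) x x' := by
  by_cases hxx' : x = x'
  · rw [hxx']
  · exact .single ⟨hx, hx', hG.dist_eq_two_of_adj_of_adj hxc.symm hx'c.symm hxx'⟩

lemma IsIndepSet.mem_inducedSet_of_adj_of_adj {C : Set V} (hC : G.IsIndepSet C) {b c m : V}
    (hb : b ∈ C) (hc : c ∈ C) (hbc : b ≠ c) (hbm : G.Adj b m) (hmc : G.Adj m c) :
    m ∈ inducedSet G C :=
  ⟨fun hm => hC hb hm hbm.ne hbm, b, hb, c, hc, hbc, hbm.symm, hmc⟩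

end SimpleGraph

open SimpleGraph

lemma dnConnected_inducedSet {V : Type} {G : SimpleGraph V} (hG : G.IsAcyclic) {C : Set V}
    (hind : G.IsIndepSet C) (hC : DNConnected G C) : DNConnected G (inducedSet G C) := by
  rintro x hx x' hx'
  obtain ⟨y, hy, -, -, -, hxy, -⟩ := hx.2
  obtain ⟨y', hy', -, -, -, hx'y', -⟩ := hx'.2
  suffices key : ∀ c, Relation.ReflTransGen (DNRel G C) y c →
      ∀ z ∈ inducedSet G C, G.Adj z c → Relation.ReflTransGen (DNRel G (inducedSet G C)) x z from
    key y' (hC y hy y' hy') x' hx' hx'y'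
  intro c hyc
  induction hyc with
  | refl => exact fun z hz hzy => hG.reflTransGen_dnRel_of_adj_of_adj hx hz hxy hzy
  | tail _ hbc ih =>
    obtain ⟨hb, hc, hdist⟩ := hbc
    obtain ⟨m, hbm, hmc⟩ := exists_adj_adj_of_dist_eq_two hdist
    have hm := hind.mem_inducedSet_of_adj_of_adj hb hc (dist_eq_two_iff.mp hdist).1 hbm hmc
    exact fun z hz hzc =>
      (ih m hm hbm.symm).trans (hG.reflTransGen_dnRel_of_adj_of_adj hm hz hmc hzc)

theorem induced_set_connected_general
    (V : Type) (G : SimpleGraph V) (o : V)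
    (hconn : G.Connected) (hacyc : G.IsAcyclic) :
    (∀ C : Set V, IsOddCluster G o C → DNConnected G (inducedSet G C)) ∧
    (∀ C : Set V, IsEvenCluster G o C → DNConnected G (inducedSet G C)) := by
  have hT : G.IsTree := ⟨hconn, hacyc⟩
  refine ⟨fun C ⟨_, _, hodd, hC⟩ => ?_, fun C ⟨_, _, heven, hC⟩ => ?_⟩
  · exact dnConnected_inducedSet hacyc ((hT.isIndepSet_setOf_odd_dist o).mono hodd) hC
  · exact dnConnected_inducedSet hacyc ((hT.isIndepSet_setOf_even_dist o).mono heven) hC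

/-- **Lemma.** On the infinite `d`-regular tree, the set induced by an odd cluster is
connected with respect to the double-neighbor relation (hence, if nonempty, it is an
even cluster); and the same holds with odd and even exchanged. -/
theorem induced_set_connected (d : ℕ) (hd : 3 ≤ d)
    (V : Type) (G : SimpleGraph V) (o : V)
    (hconn : G.Connected) (hacyc : G.IsAcyclic)
    (hreg : ∀ v : V, (G.neighborSet v).ncard = d) :
    (∀ C : Set V, IsOddCluster G o C → DNConnected G (inducedSet G C)) ∧
    (∀ C : Set V, IsEvenCluster G o C → DNConnected G (inducedSet G C)) :=
  induced_set_connected_general V G o hconn hacyc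
end

section
/- Let A be an odd cluster in T_d and let B be a disjoint union of r pairwise non-adjacent even clusters. Then ξ*(A,B) + |Prr(A,B)| ≤ |B| − r. -/
open MeasureTheory

/-- `Ξ_p(A,B)`: the set of `v ∈ A` with exactly `p` neighbors in `B`. -/
def xiSet {V : Type} (G : SimpleGraph V) (A B : Set V) (p : ℕ) : Set V :=
  {v ∈ A | {y ∈ B | G.Adj v y}.ncard = p}

/-- `ξ*(A,B) = Σ_{p=3}^d (p-2) · |Ξ_p(A,B)|`. -/
noncomputable def xiStar {V : Type} (G : SimpleGraph V) (d : ℕ) (A B : Set V) : ℕ :=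
  ∑ p ∈ Finset.Icc 3 d, (p - 2) * (xiSet G A B p).ncard

section AuxLemmas

variable {V : Type} {G : SimpleGraph V}

lemma aux_not_adj_of_common (hac : G.IsAcyclic) {v b b' : V} (h1 : G.Adj v b) (h2 : G.Adj v b')
    (hne : b ≠ b') : ¬ G.Adj b b' := by
  intro hadj
  have hp2 : (SimpleGraph.Walk.cons h1.symm (SimpleGraph.Walk.cons h2 SimpleGraph.Walk.nil)).IsPath := by
    simp [SimpleGraph.Walk.isPath_def, h1.ne', h2.ne, hne]
  have heq := hac.path_unique ⟨hadj.toWalk, by simp [hne]⟩ ⟨_, hp2⟩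
  have := congrArg (fun q : G.Path b b' => q.1.length) heq
  simp [SimpleGraph.Adj.toWalk] at this

lemma aux_dist_two (hac : G.IsAcyclic) {v b b' : V} (h1 : G.Adj v b) (h2 : G.Adj v b')
    (hne : b ≠ b') : G.dist b b' = 2 := by
  have hle : G.dist b b' ≤ 2 := by
    simpa using SimpleGraph.dist_le
      (SimpleGraph.Walk.cons h1.symm (SimpleGraph.Walk.cons h2 SimpleGraph.Walk.nil))
  have h0 : G.dist b b' ≠ 0 := by
    rw [Ne, SimpleGraph.dist_eq_zero_iff_eq_or_not_reachable]
    push_neg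
    exact ⟨hne, ⟨SimpleGraph.Walk.cons h1.symm (SimpleGraph.Walk.cons h2 SimpleGraph.Walk.nil)⟩⟩
  have h1' : G.dist b b' ≠ 1 := by
    rw [Ne, SimpleGraph.dist_eq_one_iff_adj]
    exact aux_not_adj_of_common hac h1 h2 hne
  omega

lemma aux_mid {a b : V} (h : G.dist a b = 2) : ∃ m, G.Adj a m ∧ G.Adj m b := by
  have hr : G.Reachable a b := SimpleGraph.Reachable.of_dist_ne_zero (by rw [h]; omega)
  obtain ⟨w, hw⟩ := hr.exists_walk_length_eq_dist
  rw [h] at hw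
  match w, hw with
  | .cons h1 (.cons h2 .nil), _ => exact ⟨_, h1, h2⟩

lemma key_cluster (hac : G.IsAcyclic) (hnbr : ∀ v : V, (G.neighborSet v).Finite)
    {C P : Set V} (hCfin : C.Finite) (hCne : C.Nonempty) (hCconn : DNConnected G C)
    (hPfin : P.Finite) (hPC : ∀ v ∈ P, v ∉ C)
    (hdeg : ∀ v ∈ P, 2 ≤ {y ∈ C | G.Adj v y}.ncard) :
    (∑ v ∈ hPfin.toFinset, ({y ∈ C | G.Adj v y}.ncard - 1)) + 1 ≤ C.ncard := by
  classical
  set M : Set V := {m | m ∉ C ∧ m ∉ P ∧ TwoNbrsIn G C m} with hM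
  have hMfin : M.Finite := by
    refine Set.Finite.subset (hCfin.biUnion (fun c _ => hnbr c)) ?_
    rintro m ⟨-, -, y, hy, z, hz, hyz, had1, had2⟩
    exact Set.mem_biUnion hy had1.symm
  set S : Set V := P ∪ C ∪ M with hS
  have hSfin : S.Finite := (hPfin.union hCfin).union hMfin
  have hPS : P ⊆ S := fun x hx => Or.inl (Or.inl hx)
  have hCS : C ⊆ S := fun x hx => Or.inl (Or.inr hx)
  have hMS : M ⊆ S := fun x hx => Or.inr hx
  haveI : Fintype ↥S := hSfin.fintype
  -- reachability within the induced graph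
  have hstep : ∀ a, ∀ ha : a ∈ C, ∀ b, ∀ hb : b ∈ C, G.dist a b = 2 →
      (G.induce S).Reachable ⟨a, hCS ha⟩ ⟨b, hCS hb⟩ := by
    intro a ha b hb hd
    obtain ⟨m, h1, h2⟩ := aux_mid hd
    have hmS : m ∈ S := by
      by_cases hmc : m ∈ C
      · exact hCS hmc
      by_cases hmp : m ∈ P
      · exact hPS hmp
      refine hMS ⟨hmc, hmp, a, ha, b, hb, ?_, h1.symm, h2⟩
      rintro rfl
      rw [SimpleGraph.dist_self] at hd
      omega
    have e1 : (G.induce S).Adj ⟨a, hCS ha⟩ ⟨m, hmS⟩ := h1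
    have e2 : (G.induce S).Adj ⟨m, hmS⟩ ⟨b, hCS hb⟩ := h2
    exact (e1.reachable).trans e2.reachable
  have hreachC : ∀ a (ha : a ∈ C), ∀ b (hb : b ∈ C),
      (G.induce S).Reachable ⟨a, hCS ha⟩ ⟨b, hCS hb⟩ := by
    intro a ha b hb
    have h := hCconn a ha b hb
    induction h with
    | refl => rfl
    | tail h1 h2 ih =>
      obtain ⟨hb1, hb2, hd⟩ := h2
      exact (ih hb1).trans (hstep _ hb1 _ hb2 hd)
  have htoC : ∀ x (hx : x ∈ S), ∃ c, ∃ hc : c ∈ C,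
      (G.induce S).Reachable ⟨x, hx⟩ ⟨c, hCS hc⟩ := by
    intro x hx
    by_cases hxC : x ∈ C
    · exact ⟨x, hxC, by rfl⟩
    by_cases hxP : x ∈ P
    · have hne : ({y ∈ C | G.Adj x y}).Nonempty := by
        rw [← Set.ncard_pos (hCfin.subset (fun y hy => hy.1))]
        have h2 := hdeg x hxP
        omega
      obtain ⟨y, hyC, hadj⟩ := hne
      have e : (G.induce S).Adj ⟨x, hx⟩ ⟨y, hCS hyC⟩ := hadj
      exact ⟨y, hyC, e.reachable⟩
    · have hxM : x ∈ M := by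
        rcases hx with (h | h) | h
        · exact absurd h hxP
        · exact absurd h hxC
        · exact h
      obtain ⟨-, -, y, hy, z, hz, hyz, had1, had2⟩ := hxM
      have e : (G.induce S).Adj ⟨x, hx⟩ ⟨y, hCS hy⟩ := had1
      exact ⟨y, hy, e.reachable⟩
  have hconn' : (G.induce S).Connected := by
    rw [SimpleGraph.connected_iff]
    refine ⟨fun x y => ?_, ⟨⟨hCne.choose, hCS hCne.choose_spec⟩⟩⟩
    obtain ⟨c, hc, hr1⟩ := htoC x.1 x.2
    obtain ⟨c', hc', hr2⟩ := htoC y.1 y.2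
    exact (hr1.trans (hreachC c hc c' hc')).trans hr2.symm
  have hacyc' : (G.induce S).IsAcyclic := by
    intro v c hc
    exact hac _ ((SimpleGraph.Walk.map_isCycle_iff_of_injective
      (f := (SimpleGraph.Embedding.induce S).toHom) Subtype.val_injective).mpr hc)
  have htree : (G.induce S).IsTree := ⟨hconn', hacyc'⟩
  haveI : Fintype (G.induce S).edgeSet := Fintype.ofFinite _
  have hcardtree := htree.card_edgeFinset
  -- the edge set within S, as a set of Sym2 V
  set E : Set (Sym2 V) := {e | e ∈ G.edgeSet ∧ ∀ x ∈ e, x ∈ S} with hE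
  have hsurj : Set.SurjOn (Sym2.map (Subtype.val : ↥S → V))
      ↑(G.induce S).edgeFinset E := by
    rintro e ⟨hadj, hmem⟩
    induction e with
    | _ a b =>
      have ha : a ∈ S := hmem a (Sym2.mem_mk_left a b)
      have hb : b ∈ S := hmem b (Sym2.mem_mk_right a b)
      refine ⟨s(⟨a, ha⟩, ⟨b, hb⟩), ?_, by simp⟩
      simp only [Finset.coe_sort_coe, Finset.mem_coe, SimpleGraph.mem_edgeFinset,
        SimpleGraph.mem_edgeSet]
      exact hadj
  have hEfin : E.Finite :=
    Set.Finite.of_surjOn _ hsurj (Set.toFinite _)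
  have hcard1 : hEfin.toFinset.card ≤ (G.induce S).edgeFinset.card := by
    apply Finset.card_le_card_of_surjOn
    rwa [Set.Finite.coe_toFinset]
  -- the pairs finset
  have hPMfin : (P ∪ M).Finite := hPfin.union hMfin
  set Pairs : Finset (V × V) := hPMfin.toFinset.biUnion
    (fun x => (hCfin.toFinset.filter (fun y => G.Adj x y)).image (fun b => (x, b))) with hPairs
  have hfc : ∀ x : V, (hCfin.toFinset.filter (fun y => G.Adj x y)).card
      = ({y ∈ C | G.Adj x y}).ncard := by
    intro x
    rw [Set.ncard_eq_toFinset_card _ (hCfin.subset (fun y hy => hy.1))]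
    congr 1
    ext y
    simp [Set.Finite.mem_toFinset]
  have hPairscard : Pairs.card = ∑ x ∈ hPMfin.toFinset, ({y ∈ C | G.Adj x y}).ncard := by
    rw [hPairs, Finset.card_biUnion]
    · exact Finset.sum_congr rfl (fun x _ => by
        rw [Finset.card_image_of_injective _ (fun a b h => congrArg Prod.snd h), hfc])
    · intro x hx y hy hxy
      simp only [Finset.disjoint_left, Finset.mem_image, Finset.mem_filter]
      rintro p ⟨a, ha, rfl⟩ ⟨b, hb, hEq⟩
      exact hxy (congrArg Prod.fst hEq).symm
  have hPairmem : ∀ p ∈ Pairs, p.1 ∈ P ∪ M ∧ p.2 ∈ C ∧ G.Adj p.1 p.2 := by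
    intro p hp
    simp only [hPairs, Finset.mem_biUnion, Finset.mem_image, Finset.mem_filter,
      Set.Finite.mem_toFinset] at hp
    obtain ⟨x, hx, b, ⟨hbC, hadj⟩, rfl⟩ := hp
    exact ⟨hx, hbC, hadj⟩
  have hPMC : ∀ x ∈ P ∪ M, x ∉ C := by
    rintro x (hx | hx)
    · exact hPC x hx
    · exact hx.1
  have hcard2 : Pairs.card ≤ hEfin.toFinset.card := by
    apply Finset.card_le_card_of_injOn (s := Pairs) (t := hEfin.toFinset) (fun p => s(p.1, p.2))
    · intro p hp
      obtain ⟨h1, h2, h3⟩ := hPairmem p hp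
      rw [Finset.mem_coe, Set.Finite.mem_toFinset]
      constructor
      · exact h3
      · intro x hxmem
        rcases Sym2.mem_iff.mp hxmem with rfl | rfl
        · rcases h1 with h | h
          · exact hPS h
          · exact hMS h
        · exact hCS h2
    · intro p hp q hq hEq
      obtain ⟨hp1, hp2, -⟩ := hPairmem p hp
      obtain ⟨hq1, hq2, -⟩ := hPairmem q hq
      rw [Sym2.mk_eq_mk_iff] at hEq
      rcases hEq with h | h
      · exact h
      · exfalso
        exact hPMC p.1 hp1 (by rw [show p.1 = q.2 from congrArg Prod.fst h]; exact hq2)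
  -- lower bound from M side
  have hMdeg : ∀ m ∈ M, 2 ≤ ({y ∈ C | G.Adj m y}).ncard := by
    rintro m ⟨-, -, y, hy, z, hz, hyz, had1, had2⟩
    have : 1 < ({y ∈ C | G.Adj m y}).ncard := by
      rw [Set.one_lt_ncard (hCfin.subset (fun y hy => hy.1))]
      exact ⟨y, ⟨hy, had1⟩, z, ⟨hz, had2⟩, hyz⟩
    omega
  have hMsum : 2 * hMfin.toFinset.card ≤ ∑ x ∈ hMfin.toFinset, ({y ∈ C | G.Adj x y}).ncard := by
    calc 2 * hMfin.toFinset.card = hMfin.toFinset.card • 2 := by ring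
    _ ≤ _ := Finset.card_nsmul_le_sum _ _ _ (fun x hx => hMdeg x (hMfin.mem_toFinset.mp hx))
  have hsplit : hPMfin.toFinset = hPfin.toFinset ∪ hMfin.toFinset := by
    ext x; simp [Set.Finite.mem_toFinset]
  have hPMdisj : Disjoint hPfin.toFinset hMfin.toFinset := by
    rw [Finset.disjoint_left]
    intro x hx hx'
    exact ((hMfin.mem_toFinset.mp hx').2.1) (hPfin.mem_toFinset.mp hx)
  have hsumsplit : ∑ x ∈ hPMfin.toFinset, ({y ∈ C | G.Adj x y}).ncard
      = (∑ x ∈ hPfin.toFinset, ({y ∈ C | G.Adj x y}).ncard)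
        + ∑ x ∈ hMfin.toFinset, ({y ∈ C | G.Adj x y}).ncard := by
    rw [hsplit, Finset.sum_union hPMdisj]
  -- cardinality of S
  have hScard : Fintype.card ↥S = S.ncard := by
    rw [← Nat.card_coe_set_eq, Nat.card_eq_fintype_card]
  have hSle : S.ncard ≤ P.ncard + C.ncard + M.ncard :=
    le_trans (Set.ncard_union_le _ _) (add_le_add_left (Set.ncard_union_le _ _) _)
  have hPcard : P.ncard = hPfin.toFinset.card := Set.ncard_eq_toFinset_card _ hPfin
  have hMcard : M.ncard = hMfin.toFinset.card := Set.ncard_eq_toFinset_card _ hMfin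
  have hdegsum : (∑ v ∈ hPfin.toFinset, (({y ∈ C | G.Adj v y}).ncard - 1)) + hPfin.toFinset.card
      = ∑ v ∈ hPfin.toFinset, ({y ∈ C | G.Adj v y}).ncard := by
    rw [Finset.card_eq_sum_ones, ← Finset.sum_add_distrib]
    exact Finset.sum_congr rfl (fun v hv => by
      have := hdeg v (hPfin.mem_toFinset.mp hv); omega)
  omega

end AuxLemmas

/-- **Lemma.** On the infinite `d`-regular tree, if `A` is an odd cluster and `B` is
the disjoint union of `r` pairwise non-adjacent even clusters, then
`ξ*(A,B) + |Prr(A,B)| ≤ |B| - r` (stated additively to avoid truncated subtraction). -/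
theorem leaf_trifurcation_relation (d : ℕ) (hd : 3 ≤ d)
    (V : Type) (G : SimpleGraph V) (o : V)
    (hconn : G.Connected) (hacyc : G.IsAcyclic)
    (hreg : ∀ v : V, (G.neighborSet v).ncard = d)
    (A : Set V) (hA : IsOddCluster G o A)
    (r : ℕ) (Bs : Fin r → Set V)
    (hBs : ∀ i, IsEvenCluster G o (Bs i))
    (hBadj : ∀ i j, i ≠ j → NonAdj G (Bs i) (Bs j))
    (B : Set V) (hB : B = ⋃ i, Bs i) :
    xiStar G d A B + (Prr G A B).ncard + r ≤ B.ncard := by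
  classical
  subst hB
  obtain ⟨hAfin, hAne, hAodd, hAconn⟩ := hA
  have hBsfin : ∀ i, (Bs i).Finite := fun i => (hBs i).1
  have hBfin : (⋃ i, Bs i).Finite := Set.finite_iUnion hBsfin
  have hnbrfin : ∀ v : V, (G.neighborSet v).Finite := by
    intro v
    rw [← Set.not_infinite]
    intro hinf
    have := hinf.ncard
    rw [hreg v] at this
    omega
  -- any two distinct common neighbors determine the same cluster
  have hsame : ∀ v : V, ∀ i j : Fin r, ∀ y ∈ Bs i, ∀ z ∈ Bs j,
      G.Adj v y → G.Adj v z → i = j := by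
    intro v i j y hy z hz ad1 ad2
    by_contra hij
    have hyz : y ≠ z := by
      rintro rfl
      exact (Set.disjoint_left.mp (hBadj i j hij).1 hy) hz
    exact (hBadj i j hij).2 y hy z hz (aux_dist_two hacyc ad1 ad2 hyz)
  -- the local degree sets
  have hsubfinB : ∀ v : V, ({y ∈ ⋃ i, Bs i | G.Adj v y}).Finite :=
    fun v => hBfin.subset (fun y hy => hy.1)
  have hsubfin : ∀ (i : Fin r) (v : V), ({y ∈ Bs i | G.Adj v y}).Finite :=
    fun i v => (hBsfin i).subset (fun y hy => hy.1)
  set P : Fin r → Set V := fun i => {v ∈ A | 2 ≤ ({y ∈ Bs i | G.Adj v y}).ncard} with hP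
  have hPfin : ∀ i, (P i).Finite := fun i => hAfin.subset (fun v hv => hv.1)
  have hPrrfin : (Prr G A (⋃ i, Bs i)).Finite := hAfin.subset (fun v hv => hv.1)
  have hPrr_eq : Prr G A (⋃ i, Bs i) = ⋃ i, P i := by
    ext v
    constructor
    · rintro ⟨hvA, y, hy, z, hz, hyz, ad1, ad2⟩
      obtain ⟨i, hyi⟩ := Set.mem_iUnion.mp hy
      obtain ⟨j, hzj⟩ := Set.mem_iUnion.mp hz
      obtain rfl := hsame v i j y hyi z hzj ad1 ad2
      refine Set.mem_iUnion.mpr ⟨i, hvA, ?_⟩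
      have : 1 < ({y ∈ Bs i | G.Adj v y}).ncard := by
        rw [Set.one_lt_ncard (hsubfin i v)]
        exact ⟨y, ⟨hyi, ad1⟩, z, ⟨hzj, ad2⟩, hyz⟩
      omega
    · intro hv
      obtain ⟨i, hvA, hvdeg⟩ := Set.mem_iUnion.mp hv
      refine ⟨hvA, ?_⟩
      have : 1 < ({y ∈ Bs i | G.Adj v y}).ncard := by omega
      rw [Set.one_lt_ncard (hsubfin i v)] at this
      obtain ⟨y, ⟨hy, ad1⟩, z, ⟨hz, ad2⟩, hyz⟩ := this
      exact ⟨y, Set.mem_iUnion.mpr ⟨i, hy⟩, z, Set.mem_iUnion.mpr ⟨i, hz⟩, hyz, ad1, ad2⟩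
  have hflocal : ∀ i, ∀ v ∈ P i,
      {y ∈ ⋃ k, Bs k | G.Adj v y} = {y ∈ Bs i | G.Adj v y} := by
    intro i v hv
    ext y
    constructor
    · rintro ⟨hy, ad⟩
      obtain ⟨j, hyj⟩ := Set.mem_iUnion.mp hy
      have hne : ({y ∈ Bs i | G.Adj v y}).Nonempty := by
        rw [← Set.ncard_pos (hsubfin i v)]
        have := hv.2
        omega
      obtain ⟨w, hw, adw⟩ := hne
      obtain rfl := hsame v i j w hw y hyj adw ad
      exact ⟨hyj, ad⟩
    · rintro ⟨hy, ad⟩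
      exact ⟨Set.mem_iUnion.mpr ⟨i, hy⟩, ad⟩
  have hPdisj : ∀ i j : Fin r, i ≠ j → Disjoint (P i) (P j) := by
    intro i j hij
    rw [Set.disjoint_left]
    rintro v ⟨hvA, hdi⟩ ⟨-, hdj⟩
    have hni : ({y ∈ Bs i | G.Adj v y}).Nonempty := by
      rw [← Set.ncard_pos (hsubfin i v)]; omega
    have hnj : ({y ∈ Bs j | G.Adj v y}).Nonempty := by
      rw [← Set.ncard_pos (hsubfin j v)]; omega
    obtain ⟨w, hw, adw⟩ := hni
    obtain ⟨z, hz, adz⟩ := hnj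
    exact hij (hsame v i j w hw z hz adw adz)
  -- bound xiStar + Prr by the sum of (deg - 1) over Prr
  set F : Finset V := hPrrfin.toFinset with hFdef
  have hdegF : ∀ v ∈ F, 2 ≤ ({y ∈ ⋃ i, Bs i | G.Adj v y}).ncard := by
    intro v hv
    obtain ⟨-, y, hy, z, hz, hyz, ad1, ad2⟩ := hPrrfin.mem_toFinset.mp hv
    have : 1 < ({y ∈ ⋃ i, Bs i | G.Adj v y}).ncard := by
      rw [Set.one_lt_ncard (hsubfinB v)]
      exact ⟨y, ⟨hy, ad1⟩, z, ⟨hz, ad2⟩, hyz⟩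
    omega
  have hxifin : ∀ p, (xiSet G A (⋃ i, Bs i) p).Finite :=
    fun p => hAfin.subset (fun v hv => hv.1)
  have hxiStar_le : xiStar G d A (⋃ i, Bs i)
      ≤ ∑ v ∈ F, (({y ∈ ⋃ i, Bs i | G.Adj v y}).ncard - 2) := by
    have hterm : ∀ p ∈ Finset.Icc 3 d, (p - 2) * (xiSet G A (⋃ i, Bs i) p).ncard
        = ∑ v ∈ (hxifin p).toFinset, (({y ∈ ⋃ i, Bs i | G.Adj v y}).ncard - 2) := by
      intro p hp
      rw [Set.ncard_eq_toFinset_card _ (hxifin p)]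
      rw [Finset.sum_congr rfl (fun v hv => ?_), Finset.sum_const, smul_eq_mul, mul_comm]
      have := ((hxifin p).mem_toFinset.mp hv).2
      rw [this]
    rw [xiStar, Finset.sum_congr rfl hterm, ← Finset.sum_biUnion ?disj]
    case disj =>
      intro p hp q hq hpq
      simp only [Function.onFun, Finset.disjoint_left]
      intro v hv hv'
      have h1 := ((hxifin p).mem_toFinset.mp hv).2
      have h2 := ((hxifin q).mem_toFinset.mp hv').2
      exact hpq (h1 ▸ h2 ▸ rfl)
    apply Finset.sum_le_sum_of_subset
    intro v hv
    obtain ⟨p, hp, hv⟩ := Finset.mem_biUnion.mp hv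
    obtain ⟨hvA, hvcard⟩ := (hxifin p).mem_toFinset.mp hv
    rw [Finset.mem_Icc] at hp
    rw [hFdef, hPrrfin.mem_toFinset]
    refine ⟨hvA, ?_⟩
    have : 1 < ({y ∈ ⋃ i, Bs i | G.Adj v y}).ncard := by omega
    rw [Set.one_lt_ncard (hsubfinB v)] at this
    obtain ⟨y, ⟨hy, ad1⟩, z, ⟨hz, ad2⟩, hyz⟩ := this
    exact ⟨y, hy, z, hz, hyz, ad1, ad2⟩
  have hPrrcard : (Prr G A (⋃ i, Bs i)).ncard = ∑ _v ∈ F, 1 := by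
    rw [Set.ncard_eq_toFinset_card _ hPrrfin, Finset.sum_const, smul_eq_mul, mul_one]
  have hmain1 : xiStar G d A (⋃ i, Bs i) + (Prr G A (⋃ i, Bs i)).ncard
      ≤ ∑ v ∈ F, (({y ∈ ⋃ i, Bs i | G.Adj v y}).ncard - 1) := by
    rw [hPrrcard]
    refine le_trans (add_le_add_left hxiStar_le _) ?_
    rw [← Finset.sum_add_distrib]
    exact Finset.sum_le_sum (fun v hv => by have := hdegF v hv; omega)
  -- split the sum over clusters
  have hFsplit : F = Finset.univ.biUnion (fun i : Fin r => (hPfin i).toFinset) := by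
    ext v
    simp only [hFdef, Set.Finite.mem_toFinset, Finset.mem_biUnion, Finset.mem_univ, true_and]
    rw [show (v ∈ Prr G A (⋃ i, Bs i)) ↔ v ∈ ⋃ i, P i from hPrr_eq ▸ Iff.rfl]
    exact Set.mem_iUnion
  have hsum_split : ∑ v ∈ F, (({y ∈ ⋃ i, Bs i | G.Adj v y}).ncard - 1)
      = ∑ i : Fin r, ∑ v ∈ (hPfin i).toFinset, (({y ∈ Bs i | G.Adj v y}).ncard - 1) := by
    rw [hFsplit, Finset.sum_biUnion ?disj2]
    case disj2 =>
      intro i _ j _ hij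
      simp only [Function.onFun, Finset.disjoint_left]
      intro v hv hv'
      exact Set.disjoint_left.mp (hPdisj i j hij)
        ((hPfin i).mem_toFinset.mp hv) ((hPfin j).mem_toFinset.mp hv')
    refine Finset.sum_congr rfl (fun i _ => Finset.sum_congr rfl (fun v hv => ?_))
    rw [hflocal i v ((hPfin i).mem_toFinset.mp hv)]
  -- apply the cluster lemma
  have hcluster : ∀ i : Fin r,
      (∑ v ∈ (hPfin i).toFinset, (({y ∈ Bs i | G.Adj v y}).ncard - 1)) + 1 ≤ (Bs i).ncard := by
    intro i
    obtain ⟨hCfin, hCne, hCeven, hCconn⟩ := hBs i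
    refine key_cluster hacyc hnbrfin hCfin hCne hCconn (hPfin i) ?_ (fun v hv => hv.2)
    intro v hv hvC
    have h1 := hAodd v hv.1
    have h2 := hCeven v hvC
    rw [IsOddV] at h1
    rw [IsEvenV] at h2
    exact (Nat.not_odd_iff_even.mpr h2) h1
  -- total size of B
  have hBcard : (⋃ i, Bs i).ncard = ∑ i : Fin r, (Bs i).ncard := by
    rw [Set.ncard_eq_toFinset_card _ hBfin]
    have : hBfin.toFinset = Finset.univ.biUnion (fun i => (hBsfin i).toFinset) := by
      ext v
      simp [Set.Finite.mem_toFinset]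
    rw [this, Finset.card_biUnion]
    · exact Finset.sum_congr rfl (fun i _ => (Set.ncard_eq_toFinset_card _ (hBsfin i)).symm)
    · intro i _ j _ hij
      rw [Function.onFun, Finset.disjoint_left]
      intro v hv hv'
      exact Set.disjoint_left.mp (hBadj i j hij).1
        ((hBsfin i).mem_toFinset.mp hv) ((hBsfin j).mem_toFinset.mp hv')
  -- conclude
  calc xiStar G d A (⋃ i, Bs i) + (Prr G A (⋃ i, Bs i)).ncard + r
      ≤ (∑ v ∈ F, (({y ∈ ⋃ i, Bs i | G.Adj v y}).ncard - 1)) + r :=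
        add_le_add_left hmain1 r
    _ = ∑ i : Fin r, ((∑ v ∈ (hPfin i).toFinset, (({y ∈ Bs i | G.Adj v y}).ncard - 1)) + 1) := by
        rw [hsum_split, Finset.sum_add_distrib]
        simp
    _ ≤ ∑ i : Fin r, (Bs i).ncard := Finset.sum_le_sum (fun i _ => hcluster i)
    _ = (⋃ i, Bs i).ncard := hBcard.symm
end

section
/- Let A be an odd cluster in T_d with χ(A) = STri(A) + DTri(A). Then for every sequence 𝒞 = (C₁, …, C_r) of pairwise disjoint odd clusters each contained in A, the collection 𝔅(A,𝒞) satisfies |𝔅(A,𝒞)| ≤ (d−1)^{2r + χ(A)}. -/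
open MeasureTheory

/-- `x` is a type-`p` single trifurcation of `A`: it has exactly `p` neighbors in `A`. -/
def IsSingleTri {V : Type} (G : SimpleGraph V) (A : Set V) (p : ℕ) (x : V) : Prop :=
  (G.neighborSet x ∩ A).ncard = p

/-- `x` is a type-`p` double trifurcation of `A`: there are `p` distinct neighbors of
`x` each having a neighbor in `A \ {x}`. -/
def IsDoubleTri {V : Type} (G : SimpleGraph V) (A : Set V) (p : ℕ) (x : V) : Prop :=
  ∃ Y : Finset V, Y.card = p ∧ (∀ y ∈ Y, G.Adj x y) ∧
    ∀ y ∈ Y, (G.neighborSet y ∩ (A \ {x})).Nonempty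

/-- `STri(A) = Σ_{p=3}^d (p-2) · #{type-p single trifurcations of A}`. -/
noncomputable def STri {V : Type} (G : SimpleGraph V) (d : ℕ) (A : Set V) : ℕ :=
  ∑ p ∈ Finset.Icc 3 d, (p - 2) * {x : V | IsSingleTri G A p x}.ncard

/-- `DTri(A) = Σ_{p=3}^d (p-2) · #{type-p double trifurcations of A}`. -/
noncomputable def DTri {V : Type} (G : SimpleGraph V) (d : ℕ) (A : Set V) : ℕ :=
  ∑ p ∈ Finset.Icc 3 d, (p - 2) * {x : V | IsDoubleTri G A p x}.ncard

/-- `𝔅(A, 𝒞)` for a sequence `𝒞 = (C 0, …, C (r-1))` of pairwise disjoint odd clusters: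
the collection of `B ∈ ℬ(A)` which are disjoint unions of pairwise non-adjacent even
clusters `B 0, …, B (r-1)` with `C i` the set induced by `B i` for each `i`. -/
def frakB {V : Type} (G : SimpleGraph V) (o : V) (A : Set V) {r : ℕ}
    (C : Fin r → Set V) : Set (Set V) :=
  {B | B ∈ minimalB G A ∧ ∃ Bs : Fin r → Set V,
    (∀ i, IsEvenCluster G o (Bs i)) ∧
    (∀ i j, i ≠ j → NonAdj G (Bs i) (Bs j)) ∧
    B = ⋃ i, Bs i ∧ ∀ i, inducedSet G (Bs i) = C i}


namespace TreeAux

open SimpleGraph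

variable {V : Type} {G : SimpleGraph V}

lemma nbr_finite {d : ℕ} (hreg : ∀ v : V, (G.neighborSet v).ncard = d) (hd : 3 ≤ d) (v : V) :
    (G.neighborSet v).Finite := by
  by_contra h
  have h' : (G.neighborSet v).Infinite := h
  have h0 := h'.ncard
  have := hreg v
  omega

lemma even_odd_contra {n : ℕ} (he : Even n) (ho : Odd n) : False := by
  rw [Nat.even_iff] at he
  rw [Nat.odd_iff] at ho
  omega

lemma path_len_eq (hacyc : G.IsAcyclic) {u v : V} {p : G.Walk u v} (hp : p.IsPath)
    {q : G.Walk u v} (hq : q.IsPath) : p.length = q.length := by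
  have h := hacyc.path_unique ⟨p, hp⟩ ⟨q, hq⟩
  have := congrArg (fun z : G.Path u v => (z : G.Walk u v).length) h
  simpa using this

lemma path_eq_dist (hacyc : G.IsAcyclic) {u v : V} {p : G.Walk u v} (hp : p.IsPath)
    (hr : G.Reachable u v) : p.length = G.dist u v := by
  obtain ⟨q, hq, hlen⟩ := hr.exists_path_of_dist
  rw [← hlen]
  exact path_len_eq hacyc hp hq

lemma adj_dist_cases (hconn : G.Connected) (hacyc : G.IsAcyclic) (o : V) {x y : V}
    (h : G.Adj x y) :
    G.dist o y = G.dist o x + 1 ∨ G.dist o x = G.dist o y + 1 := by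
  classical
  obtain ⟨p, hp, hlen⟩ := (hconn o x).exists_path_of_dist
  by_cases hy : y ∈ p.support
  · right
    have h1 : (p.takeUntil y hy).IsPath := hp.takeUntil hy
    have h2 : (p.dropUntil y hy).IsPath := hp.dropUntil hy
    have e1 : (p.takeUntil y hy).length = G.dist o y := path_eq_dist hacyc h1 (hconn o y)
    have e2 : (p.dropUntil y hy).length = G.dist y x := path_eq_dist hacyc h2 (hconn y x)
    have e3 : G.dist y x = 1 := by
      have hle : G.dist y x ≤ 1 := by
        have := SimpleGraph.dist_le (Walk.cons h.symm Walk.nil : G.Walk y x)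
        simpa using this
      have hne : G.dist y x ≠ 0 := by
        intro h0
        obtain ⟨q, hq, hlq⟩ := (hconn y x).exists_path_of_dist
        rw [h0] at hlq
        exact h.ne' (Walk.eq_of_length_eq_zero hlq)
      omega
    have e4 : (p.takeUntil y hy).length + (p.dropUntil y hy).length = p.length := by
      have := congrArg Walk.length (p.take_spec hy)
      rw [Walk.length_append] at this
      exact this
    omega
  · left
    have hq : (Walk.cons h.symm p.reverse).IsPath := by
      rw [Walk.cons_isPath_iff]
      exact ⟨hp.reverse, by simpa using hy⟩
    have := path_eq_dist hacyc hq.reverse (hconn o y)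
    simp only [Walk.length_reverse, Walk.length_cons] at this
    omega

lemma adj_parity (hconn : G.Connected) (hacyc : G.IsAcyclic) (o : V) {x y : V}
    (h : G.Adj x y) : (Odd (G.dist o x) ↔ ¬ Odd (G.dist o y)) := by
  rcases adj_dist_cases hconn hacyc o h with h1 | h1 <;>
    · rw [Nat.odd_iff, Nat.odd_iff]
      omega

lemma not_adj_of_odd_odd (hconn : G.Connected) (hacyc : G.IsAcyclic) (o : V) {x y : V}
    (hx : Odd (G.dist o x)) (hy : Odd (G.dist o y)) : ¬ G.Adj x y := by
  intro h
  exact ((adj_parity hconn hacyc o h).1 hx) hy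

lemma not_adj_of_even_even (hconn : G.Connected) (hacyc : G.IsAcyclic) (o : V) {x y : V}
    (hx : Even (G.dist o x)) (hy : Even (G.dist o y)) : ¬ G.Adj x y := by
  intro h
  rw [← Nat.not_odd_iff_even] at hx hy
  have := adj_parity hconn hacyc o h
  tauto

lemma odd_of_adj_even (hconn : G.Connected) (hacyc : G.IsAcyclic) (o : V) {x y : V}
    (h : G.Adj x y) (hy : Even (G.dist o y)) : Odd (G.dist o x) := by
  have := adj_parity hconn hacyc o h
  rw [← Nat.not_odd_iff_even] at hy
  tauto

lemma even_of_adj_odd (hconn : G.Connected) (hacyc : G.IsAcyclic) (o : V) {x y : V}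
    (h : G.Adj x y) (hy : Odd (G.dist o y)) : Even (G.dist o x) := by
  have := adj_parity hconn hacyc o h
  rw [← Nat.not_odd_iff_even]
  tauto

lemma exists_mid_of_dist_two (hconn : G.Connected) {x y : V} (h : G.dist x y = 2) :
    ∃ m, G.Adj x m ∧ G.Adj m y := by
  obtain ⟨p, hp, hlen⟩ := (hconn x y).exists_path_of_dist
  rw [h] at hlen
  cases p with
  | nil => simp at hlen
  | cons h1 q =>
    cases q with
    | nil => simp at hlen
    | cons h2 q2 =>
      cases q2 with
      | nil => exact ⟨_, h1, h2⟩
      | cons h3 q3 => simp [Walk.length_cons] at hlen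

lemma dist_two_of_mid (hconn : G.Connected) {x y m : V} (hxy : x ≠ y) (hnadj : ¬ G.Adj x y)
    (h1 : G.Adj x m) (h2 : G.Adj m y) : G.dist x y = 2 := by
  have hle : G.dist x y ≤ 2 := by
    have := SimpleGraph.dist_le (Walk.cons h1 (Walk.cons h2 Walk.nil) : G.Walk x y)
    simpa using this
  have h0 : G.dist x y ≠ 0 := by
    intro h0
    obtain ⟨q, hq, hlq⟩ := (hconn x y).exists_path_of_dist
    rw [h0] at hlq
    exact hxy (Walk.eq_of_length_eq_zero hlq)
  have h1' : G.dist x y ≠ 1 := by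
    intro h0
    obtain ⟨q, hq, hlq⟩ := (hconn x y).exists_path_of_dist
    rw [h0] at hlq
    cases q with
    | nil => simp at hlq
    | cons ha qq =>
      cases qq with
      | nil => exact hnadj ha
      | cons hb qq2 => simp [Walk.length_cons] at hlq
  omega

lemma mid_unique (hacyc : G.IsAcyclic) {x y m m' : V} (hxy : x ≠ y)
    (h1 : G.Adj x m) (h2 : G.Adj m y) (h3 : G.Adj x m') (h4 : G.Adj m' y) : m = m' := by
  by_cases hmy : m = m'
  · exact hmy
  have p1 : (Walk.cons h1 (Walk.cons h2 Walk.nil) : G.Walk x y).IsPath := by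
    simp [Walk.cons_isPath_iff, h2.ne, hxy, h1.ne]
  have p2 : (Walk.cons h3 (Walk.cons h4 Walk.nil) : G.Walk x y).IsPath := by
    simp [Walk.cons_isPath_iff, h4.ne, hxy, h3.ne]
  have h := hacyc.path_unique ⟨_, p1⟩ ⟨_, p2⟩
  have := congrArg (fun z : G.Path x y => (z : G.Walk x y).support) h
  simp at this
  exact this

lemma path_support_subset (hacyc : G.IsAcyclic) {S : Set V} {u v : V}
    (w : G.Walk u v) (hw : ∀ x ∈ w.support, x ∈ S)
    {p : G.Walk u v} (hp : p.IsPath) : ∀ x ∈ p.support, x ∈ S := by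
  classical
  have h := hacyc.path_unique ⟨p, hp⟩ ⟨w.bypass, w.bypass_isPath⟩
  have hsup : p.support = w.bypass.support := by
    have := congrArg (fun z : G.Path u v => (z : G.Walk u v).support) h
    simpa using this
  intro x hx
  rw [hsup] at hx
  exact hw x (w.support_bypass_subset hx)

end TreeAux

namespace Enum

open SimpleGraph TreeAux

/-- The set of "midpoints": vertices with at least two neighbors in `S`. -/
def Mset {V : Type} (G : SimpleGraph V) (S : Set V) : Set V := {m | TwoNbrsIn G S m}

variable {V : Type} {G : SimpleGraph V} {o : V} {A : Set V} {r : ℕ}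
  {C : Fin r → Set V} {B : Set V} {Bs : Fin r → Set V} {d : ℕ}

lemma finite_nbhd (hreg : ∀ v : V, (G.neighborSet v).ncard = d) (hd : 3 ≤ d)
    {S : Set V} (hS : S.Finite) : (nbhd G S).Finite := by
  have : nbhd G S = ⋃ x ∈ S, G.neighborSet x := by
    ext y
    simp only [nbhd, Set.mem_setOf_eq, Set.mem_iUnion, SimpleGraph.mem_neighborSet]
    tauto
  rw [this]
  exact hS.biUnion (fun x _ => nbr_finite hreg hd x)

/-- Existence of a "witness" for each element of a minimal `B`. -/
lemma witness_exists (hBm : B ∈ minimalB G A) {b : V} (hb : b ∈ B) :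
    ∃ v ∈ A, G.Adj v b ∧
      (∀ y ∈ B, G.Adj v y → y ≠ b → ∀ z ∈ B, G.Adj v z → z ≠ b → y = z) ∧
      TwoNbrsIn G B v := by
  have hsub : B \ {b} ⊂ B := by
    constructor
    · exact Set.diff_subset
    · intro hsup
      exact (hsup hb).2 rfl
  have hne := hBm.2 _ hsub
  have hmono : Prr G A (B \ {b}) ⊆ Prr G A B := by
    rintro v ⟨hvA, y, hy, z, hz, hyz, h1, h2⟩
    exact ⟨hvA, y, hy.1, z, hz.1, hyz, h1, h2⟩
  obtain ⟨v, hvB, hvnB'⟩ : ∃ v, v ∈ Prr G A B ∧ v ∉ Prr G A (B \ {b}) := by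
    by_contra hcon
    push_neg at hcon
    exact hne (Set.Subset.antisymm hmono hcon)
  obtain ⟨hvA, y, hy, z, hz, hyz, h1, h2⟩ := hvB
  have hadj : G.Adj v b := by
    by_contra hnadj
    apply hvnB'
    refine ⟨hvA, y, ⟨hy, ?_⟩, z, ⟨hz, ?_⟩, hyz, h1, h2⟩
    · intro h; apply hnadj; rwa [← Set.mem_singleton_iff.mp h]
    · intro h; apply hnadj; rwa [← Set.mem_singleton_iff.mp h]
  refine ⟨v, hvA, hadj, ?_, ⟨y, hy, z, hz, hyz, h1, h2⟩⟩
  intro y' hy' hady' hyb z' hz' hadz' hzb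
  by_contra hneq
  apply hvnB'
  exact ⟨hvA, y', ⟨hy', hyb⟩, z', ⟨hz', hzb⟩, hneq, hady', hadz'⟩

/-- Two distinct common neighbors of a vertex lying in the (even) pieces must lie in the
same piece. -/
lemma comps_same (hconn : G.Connected) (hacyc : G.IsAcyclic)
    (hEC : ∀ i, IsEvenCluster G o (Bs i))
    (hNA : ∀ i j, i ≠ j → NonAdj G (Bs i) (Bs j))
    {v y z : V} {i j : Fin r} (hy : y ∈ Bs i) (hz : z ∈ Bs j) (hyz : y ≠ z)
    (h1 : G.Adj v y) (h2 : G.Adj v z) : i = j := by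
  by_contra hij
  have hyE : Even (G.dist o y) := (hEC i).2.2.1 y hy
  have hzE : Even (G.dist o z) := (hEC j).2.2.1 z hz
  have hnadj : ¬ G.Adj y z := not_adj_of_even_even hconn hacyc o hyE hzE
  have hdist : G.dist y z = 2 := dist_two_of_mid hconn hyz hnadj h1.symm h2
  exact (hNA i j hij).2 y hy z hz hdist

/-- No vertex of `C i` is adjacent to a vertex of `Bs j` for `j ≠ i`. -/
lemma no_cross (hconn : G.Connected) (hacyc : G.IsAcyclic)
    (hEC : ∀ i, IsEvenCluster G o (Bs i))
    (hNA : ∀ i j, i ≠ j → NonAdj G (Bs i) (Bs j))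
    (hInd : ∀ i, inducedSet G (Bs i) = C i)
    {i j : Fin r} (hij : j ≠ i) {v b : V} (hv : v ∈ C i) (hb : b ∈ Bs j)
    (hadj : G.Adj v b) : False := by
  have hv' : v ∈ inducedSet G (Bs i) := by rw [hInd i]; exact hv
  obtain ⟨hvnot, y, hy, z, hz, hyz, h1, h2⟩ := hv'
  by_cases hby : b = y
  · subst hby
    exact (Set.disjoint_left.mp (hNA j i hij).1 hb) hy
  · have : i = j := comps_same hconn hacyc hEC hNA hy hb (Ne.symm hby) h1 hadj
    exact hij this.symm

/-- Connectivity of `Bs i ∪ C i` by walks inside the set. -/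
lemma Ti_walk (hconn : G.Connected) (hacyc : G.IsAcyclic)
    (hC : ∀ i, IsOddCluster G o (C i))
    (hEC : ∀ i, IsEvenCluster G o (Bs i))
    (hInd : ∀ i, inducedSet G (Bs i) = C i) (i : Fin r) :
    ∀ x ∈ Bs i ∪ C i, ∀ y ∈ Bs i ∪ C i,
      ∃ w : G.Walk x y, ∀ t ∈ w.support, t ∈ Bs i ∪ C i := by
  have hBB : ∀ b b' : V, Relation.ReflTransGen
      (fun a b => a ∈ Bs i ∧ b ∈ Bs i ∧ G.dist a b = 2) b b' → b ∈ Bs i →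
      ∃ w : G.Walk b b', ∀ t ∈ w.support, t ∈ Bs i ∪ C i := by
    intro b b' hDN
    induction hDN with
    | refl => exact fun hb => ⟨Walk.nil, by intro t ht; simp at ht; subst ht; exact Or.inl hb⟩
    | @tail c c' hcc hstep ih =>
      intro hb
      obtain ⟨w, hw⟩ := ih hb
      obtain ⟨hc, hc', hd2⟩ := hstep
      have hne : c ≠ c' := by
        intro h; subst h; rw [SimpleGraph.dist_self] at hd2; exact two_ne_zero hd2.symm
      obtain ⟨m, hm1, hm2⟩ := exists_mid_of_dist_two hconn hd2
      have hcE : Even (G.dist o c) := (hEC i).2.2.1 c hc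
      have hmO : Odd (G.dist o m) := odd_of_adj_even hconn hacyc o hm1.symm hcE
      have hmB : m ∉ Bs i := fun hmem =>
        even_odd_contra ((hEC i).2.2.1 m hmem) hmO
      have hmC : m ∈ C i := by
        rw [← hInd i]
        exact ⟨hmB, c, hc, c', hc', hne, hm1.symm, hm2⟩
      refine ⟨w.append (Walk.cons hm1 (Walk.cons hm2 Walk.nil)), ?_⟩
      intro t ht
      rw [Walk.mem_support_append_iff] at ht
      rcases ht with ht | ht
      · exact hw t ht
      · simp only [Walk.support_cons, Walk.support_nil, List.mem_cons,
          List.mem_singleton] at ht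
        rcases ht with rfl | rfl | rfl | h
        · exact Or.inl hc
        · exact Or.inr hmC
        · exact Or.inl hc'
        · exact absurd h List.not_mem_nil
  have hCB : ∀ x ∈ Bs i ∪ C i, ∃ b ∈ Bs i,
      ∃ w : G.Walk x b, ∀ t ∈ w.support, t ∈ Bs i ∪ C i := by
    rintro x (hx | hx)
    · exact ⟨x, hx, Walk.nil, by intro t ht; simp at ht; subst ht; exact Or.inl hx⟩
    · have hx' : x ∈ inducedSet G (Bs i) := by rw [hInd i]; exact hx
      obtain ⟨hxnot, y, hy, z, hz, hyz, h1, h2⟩ := hx'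
      refine ⟨y, hy, Walk.cons h1 Walk.nil, ?_⟩
      intro t ht
      simp only [Walk.support_cons, Walk.support_nil, List.mem_cons,
        List.mem_singleton] at ht
      rcases ht with rfl | rfl | h
      · exact Or.inr hx
      · exact Or.inl hy
      · exact absurd h (by simp)
  intro x hx y hy
  obtain ⟨bx, hbx, wx, hwx⟩ := hCB x hx
  obtain ⟨by', hby, wy, hwy⟩ := hCB y hy
  obtain ⟨wm, hwm⟩ := hBB bx by' ((hEC i).2.2.2 bx hbx by' hby) hbx
  refine ⟨(wx.append wm).append wy.reverse, ?_⟩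
  intro t ht
  rw [Walk.mem_support_append_iff] at ht
  rcases ht with ht | ht
  · rw [Walk.mem_support_append_iff] at ht
    rcases ht with ht | ht
    · exact hwx t ht
    · exact hwm t ht
  · rw [Walk.support_reverse, List.mem_reverse] at ht
    exact hwy t ht

/-- Midpoints of `C i` belong to `Bs i`. -/
lemma Mset_sub (hconn : G.Connected) (hacyc : G.IsAcyclic)
    (hC : ∀ i, IsOddCluster G o (C i))
    (hEC : ∀ i, IsEvenCluster G o (Bs i))
    (hInd : ∀ i, inducedSet G (Bs i) = C i) (i : Fin r) :
    Mset G (C i) ⊆ Bs i := by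
  rintro m ⟨v, hv, v', hv', hne, h1, h2⟩
  have hvO : Odd (G.dist o v) := (hC i).2.2.1 v hv
  have hv'O : Odd (G.dist o v') := (hC i).2.2.1 v' hv'
  have hmE : Even (G.dist o m) := even_of_adj_odd hconn hacyc o h1 hvO
  obtain ⟨w, hw⟩ := Ti_walk hconn hacyc hC hEC hInd i v (Or.inr hv) v' (Or.inr hv')
  have hp : (Walk.cons h1.symm (Walk.cons h2 Walk.nil) : G.Walk v v').IsPath := by
    simp [Walk.cons_isPath_iff, h2.ne, hne, h1.ne']
  have hsup := path_support_subset hacyc w hw hp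
  have hmT : m ∈ Bs i ∪ C i := by
    apply hsup
    simp
  rcases hmT with h | h
  · exact h
  · exact absurd hmE (fun hE => even_odd_contra hE ((hC i).2.2.1 m h))

end Enum

namespace Enum

open SimpleGraph TreeAux

variable {V : Type} {G : SimpleGraph V} {o : V} {A : Set V} {r : ℕ}
  {C : Fin r → Set V} {B : Set V} {Bs : Fin r → Set V} {d : ℕ}

/-- The witness of `b ∈ Bs i` lies in `C i`. -/
lemma witness_in_C (hconn : G.Connected) (hacyc : G.IsAcyclic)
    (hA : IsOddCluster G o A)
    (hBm : B ∈ minimalB G A)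
    (hEC : ∀ i, IsEvenCluster G o (Bs i))
    (hNA : ∀ i j, i ≠ j → NonAdj G (Bs i) (Bs j))
    (hBU : B = ⋃ i, Bs i)
    (hInd : ∀ i, inducedSet G (Bs i) = C i)
    {i : Fin r} {b : V} (hb : b ∈ Bs i) :
    ∃ v ∈ C i, G.Adj v b ∧
      ∀ y ∈ B, G.Adj v y → y ≠ b → ∀ z ∈ B, G.Adj v z → z ≠ b → y = z := by
  have hbB : b ∈ B := by rw [hBU]; exact Set.mem_iUnion.mpr ⟨i, hb⟩
  obtain ⟨v, hvA, hadj, huniq, y, hy, z, hz, hyz, h1, h2⟩ := witness_exists hBm hbB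
  obtain ⟨k, hyk⟩ : ∃ k, y ∈ Bs k := by
    rw [hBU] at hy; exact Set.mem_iUnion.mp hy
  obtain ⟨k', hzk⟩ : ∃ k', z ∈ Bs k' := by
    rw [hBU] at hz; exact Set.mem_iUnion.mp hz
  have hkk : k = k' := comps_same hconn hacyc hEC hNA hyk hzk hyz h1 h2
  subst hkk
  have hvO : Odd (G.dist o v) := hA.2.2.1 v hvA
  have hvno : v ∉ Bs k := fun hmem => even_odd_contra ((hEC k).2.2.1 v hmem) hvO
  have hvind : v ∈ inducedSet G (Bs k) := ⟨hvno, y, hyk, z, hzk, hyz, h1, h2⟩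
  rw [hInd k] at hvind
  by_cases hbk : b ∈ Bs k
  · have hki : k = i := by
      by_contra hne
      exact (Set.disjoint_left.mp (hNA k i hne).1 hbk) hb
    subst hki
    exact ⟨v, hvind, hadj, huniq⟩
  · exfalso
    have hby : y ≠ b := fun h => hbk (h ▸ hyk)
    have : k = i := comps_same hconn hacyc hEC hNA hyk hb hby h1 hadj
    exact hbk (this ▸ hb)

/-- The `B`-neighborhood of `v ∈ C i` lies in `Bs i`. -/
lemma Sv_sub (hconn : G.Connected) (hacyc : G.IsAcyclic)
    (hEC : ∀ i, IsEvenCluster G o (Bs i))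
    (hNA : ∀ i j, i ≠ j → NonAdj G (Bs i) (Bs j))
    (hBU : B = ⋃ i, Bs i)
    (hInd : ∀ i, inducedSet G (Bs i) = C i)
    {i : Fin r} {v : V} (hv : v ∈ C i) :
    G.neighborSet v ∩ B ⊆ Bs i := by
  rintro b ⟨hadj, hbB⟩
  rw [hBU] at hbB
  obtain ⟨j, hbj⟩ := Set.mem_iUnion.mp hbB
  by_cases hji : j = i
  · exact hji ▸ hbj
  · exact absurd (no_cross hconn hacyc hEC hNA hInd hji hv hbj hadj) not_false

/-- `N(v) ∩ (⋃ j, Mset (C j)) = N(v) ∩ Mset (C i)` for `v ∈ C i`. -/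
lemma Mcross (hconn : G.Connected) (hacyc : G.IsAcyclic)
    (hC : ∀ i, IsOddCluster G o (C i))
    (hEC : ∀ i, IsEvenCluster G o (Bs i))
    (hNA : ∀ i j, i ≠ j → NonAdj G (Bs i) (Bs j))
    (hInd : ∀ i, inducedSet G (Bs i) = C i)
    {i : Fin r} {v : V} (hv : v ∈ C i) :
    G.neighborSet v ∩ (⋃ j, Mset G (C j)) = G.neighborSet v ∩ Mset G (C i) := by
  ext m
  constructor
  · rintro ⟨hadj, hm⟩
    obtain ⟨j, hmj⟩ := Set.mem_iUnion.mp hm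
    by_cases hji : j = i
    · exact ⟨hadj, hji ▸ hmj⟩
    · exact absurd (no_cross hconn hacyc hEC hNA hInd hji hv
        (Mset_sub hconn hacyc hC hEC hInd j hmj) hadj) not_false
  · rintro ⟨hadj, hm⟩
    exact ⟨hadj, Set.mem_iUnion.mpr ⟨i, hm⟩⟩

/-- If `b` is a non-midpoint `B`-neighbor of `v ∈ C i`, then `v`'s `B`-neighborhood is a
pair containing `b`. -/
lemma leaf_pair (hconn : G.Connected) (hacyc : G.IsAcyclic)
    (hA : IsOddCluster G o A)
    (hBm : B ∈ minimalB G A)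
    (hEC : ∀ i, IsEvenCluster G o (Bs i))
    (hNA : ∀ i j, i ≠ j → NonAdj G (Bs i) (Bs j))
    (hBU : B = ⋃ i, Bs i)
    (hInd : ∀ i, inducedSet G (Bs i) = C i)
    {i : Fin r} {v b : V} (hv : v ∈ C i) (hb : b ∈ G.neighborSet v ∩ B)
    (hbM : b ∉ Mset G (C i)) :
    ∃ w, w ≠ b ∧ G.neighborSet v ∩ B = {b, w} := by
  have hbBsi : b ∈ Bs i := Sv_sub hconn hacyc hEC hNA hBU hInd hv hb
  obtain ⟨v', hv', hadj', huniq'⟩ := witness_in_C hconn hacyc hA hBm hEC hNA hBU hInd hbBsi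
  have hv'v : v = v' := by
    by_contra hne
    exact hbM ⟨v', hv', v, hv, fun h => hne h.symm, hadj'.symm, hb.1.symm⟩
  subst hv'v
  have hvind : v ∈ inducedSet G (Bs i) := by rw [hInd i]; exact hv
  obtain ⟨hvnot, y, hy, z, hz, hyz, h1, h2⟩ := hvind
  have hyB : y ∈ B := by rw [hBU]; exact Set.mem_iUnion.mpr ⟨i, hy⟩
  have hzB : z ∈ B := by rw [hBU]; exact Set.mem_iUnion.mpr ⟨i, hz⟩
  have key : ∀ w', w' ≠ b → w' ∈ G.neighborSet v ∩ B →
      ∀ w'', w'' ≠ b → w'' ∈ G.neighborSet v ∩ B → w' = w'' := by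
    intro w' hne' hw' w'' hne'' hw''
    exact huniq' w' hw'.2 hw'.1 hne' w'' hw''.2 hw''.1 hne''
  by_cases hyb : y = b
  · subst hyb
    refine ⟨z, hyz.symm, ?_⟩
    apply Set.Subset.antisymm
    · intro u hu
      by_cases hub : u = y
      · exact hub ▸ Set.mem_insert _ _
      · have : u = z := key u hub hu z hyz.symm ⟨h2, hzB⟩
        exact this ▸ Set.mem_insert_of_mem _ rfl
    · rintro u (rfl | rfl)
      · exact hb
      · exact ⟨h2, hzB⟩
  · refine ⟨y, hyb, ?_⟩
    apply Set.Subset.antisymm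
    · intro u hu
      by_cases hub : u = b
      · exact hub ▸ Set.mem_insert _ _
      · have : u = y := key u hub hu y hyb ⟨h1, hyB⟩
        exact this ▸ Set.mem_insert_of_mem _ rfl
    · rintro u (rfl | rfl)
      · exact hb
      · exact ⟨h1, hyB⟩

end Enum

namespace Enum

open SimpleGraph TreeAux

variable {V : Type} {G : SimpleGraph V} {o : V} {A : Set V} {r : ℕ}
  {C : Fin r → Set V} {B : Set V} {Bs : Fin r → Set V} {d : ℕ}

/-- Cardinality of the "free part" of the `B`-neighborhood of `v ∈ C i`. -/
lemma Sv_card (hconn : G.Connected) (hacyc : G.IsAcyclic)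
    (hreg : ∀ v : V, (G.neighborSet v).ncard = d) (hd : 3 ≤ d)
    (hA : IsOddCluster G o A)
    (hC : ∀ i, IsOddCluster G o (C i))
    (hBm : B ∈ minimalB G A)
    (hEC : ∀ i, IsEvenCluster G o (Bs i))
    (hNA : ∀ i j, i ≠ j → NonAdj G (Bs i) (Bs j))
    (hBU : B = ⋃ i, Bs i)
    (hInd : ∀ i, inducedSet G (Bs i) = C i)
    {i : Fin r} {v : V} (hv : v ∈ C i) :
    ((G.neighborSet v ∩ B) \ (⋃ j, Mset G (C j))).ncard
      = 2 - min ((G.neighborSet v ∩ (⋃ j, Mset G (C j))).ncard) 2 := by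
  have hNfin : (G.neighborSet v).Finite := nbr_finite hreg hd v
  have hcross := Mcross hconn hacyc hC hEC hNA hInd hv
  rw [hcross]
  -- the free part only removes `Mset G (C i)`:
  have hfree : (G.neighborSet v ∩ B) \ (⋃ j, Mset G (C j))
      = (G.neighborSet v ∩ B) \ Mset G (C i) := by
    ext b
    simp only [Set.mem_diff, Set.mem_inter_iff]
    constructor
    · rintro ⟨⟨ha, hbB⟩, hnm⟩
      exact ⟨⟨ha, hbB⟩, fun hm => hnm (Set.mem_iUnion.mpr ⟨i, hm⟩)⟩
    · rintro ⟨⟨ha, hbB⟩, hnm⟩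
      refine ⟨⟨ha, hbB⟩, fun hm => ?_⟩
      have : b ∈ G.neighborSet v ∩ (⋃ j, Mset G (C j)) := ⟨ha, hm⟩
      rw [hcross] at this
      exact hnm this.2
  rw [hfree]
  have hMB : G.neighborSet v ∩ Mset G (C i) ⊆ G.neighborSet v ∩ B := by
    rintro m ⟨ha, hm⟩
    refine ⟨ha, ?_⟩
    rw [hBU]
    exact Set.mem_iUnion.mpr ⟨i, Mset_sub hconn hacyc hC hEC hInd i hm⟩
  have hvind : v ∈ inducedSet G (Bs i) := by rw [hInd i]; exact hv
  obtain ⟨hvnot, y, hy, z, hz, hyz, h1, h2⟩ := hvind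
  have hyS : y ∈ G.neighborSet v ∩ B :=
    ⟨h1, by rw [hBU]; exact Set.mem_iUnion.mpr ⟨i, hy⟩⟩
  have hzS : z ∈ G.neighborSet v ∩ B :=
    ⟨h2, by rw [hBU]; exact Set.mem_iUnion.mpr ⟨i, hz⟩⟩
  set q := (G.neighborSet v ∩ Mset G (C i)).ncard with hq
  rcases Nat.lt_or_ge q 2 with hq2 | hq2
  · interval_cases q
    · -- q = 0 : the intersection with midpoints is empty
      have hfin0 : (G.neighborSet v ∩ Mset G (C i)).Finite :=
        hNfin.subset Set.inter_subset_left
      have hemp : G.neighborSet v ∩ Mset G (C i) = ∅ := by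
        rw [← Set.ncard_eq_zero hfin0]; exact hq.symm
      have hyM : y ∉ Mset G (C i) := by
        intro hm
        have : y ∈ G.neighborSet v ∩ Mset G (C i) := ⟨h1, hm⟩
        rw [hemp] at this
        exact this
      obtain ⟨w, hwb, hSv⟩ := leaf_pair hconn hacyc hA hBm hEC hNA hBU hInd hv hyS hyM
      have hwM : w ∉ Mset G (C i) := by
        intro hm
        have hwS : w ∈ G.neighborSet v ∩ B := by rw [hSv]; exact Set.mem_insert_of_mem _ rfl
        have : w ∈ G.neighborSet v ∩ Mset G (C i) := ⟨hwS.1, hm⟩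
        rw [hemp] at this
        exact this
      have : (G.neighborSet v ∩ B) \ Mset G (C i) = {y, w} := by
        rw [hSv]
        apply Set.Subset.antisymm
        · exact fun u hu => hu.1
        · rintro u (rfl | rfl)
          · exact ⟨Set.mem_insert _ _, hyM⟩
          · exact ⟨Set.mem_insert_of_mem _ rfl, hwM⟩
      rw [this, Set.ncard_pair (Ne.symm hwb)]
      omega
    · -- q = 1
      obtain ⟨m₁, hm₁⟩ := Set.ncard_eq_one.mp hq.symm
      have hm₁M : m₁ ∈ G.neighborSet v ∩ Mset G (C i) := by rw [hm₁]; rfl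
      -- one of y,z differs from m₁
      obtain ⟨b, hbS, hbm₁⟩ : ∃ b, b ∈ G.neighborSet v ∩ B ∧ b ≠ m₁ := by
        by_cases hym : y = m₁
        · exact ⟨z, hzS, fun h => hyz (hym ▸ h ▸ rfl)⟩
        · exact ⟨y, hyS, hym⟩
      have hbM : b ∉ Mset G (C i) := by
        intro hm
        have : b ∈ G.neighborSet v ∩ Mset G (C i) := ⟨hbS.1, hm⟩
        rw [hm₁] at this
        exact hbm₁ this
      obtain ⟨w, hwb, hSv⟩ := leaf_pair hconn hacyc hA hBm hEC hNA hBU hInd hv hbS hbM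
      have hm₁S : m₁ ∈ G.neighborSet v ∩ B := hMB hm₁M
      have hm₁w : m₁ = w := by
        rw [hSv] at hm₁S
        rcases hm₁S with h | h
        · exact absurd h.symm hbm₁
        · exact h
      have : (G.neighborSet v ∩ B) \ Mset G (C i) = {b} := by
        rw [hSv]
        apply Set.Subset.antisymm
        · rintro u ⟨(rfl | rfl), hu⟩
          · rfl
          · exact absurd (hm₁w ▸ hm₁M).2 hu
        · rintro u rfl
          exact ⟨Set.mem_insert _ _, hbM⟩
      rw [this, Set.ncard_singleton]
      omega
  · -- q ≥ 2 : no free part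
    have hmin : min q 2 = 2 := min_eq_right hq2
    rw [hmin]
    have : (G.neighborSet v ∩ B) \ Mset G (C i) = ∅ := by
      rw [Set.eq_empty_iff_forall_notMem]
      rintro b ⟨hbS, hbM⟩
      obtain ⟨w, hwb, hSv⟩ := leaf_pair hconn hacyc hA hBm hEC hNA hBU hInd hv hbS hbM
      have hsub : G.neighborSet v ∩ Mset G (C i) ⊆ ({w} : Set V) := by
        intro m hm
        have hmS : m ∈ G.neighborSet v ∩ B := hMB hm
        rw [hSv] at hmS
        rcases hmS with h | h
        · exact absurd (h ▸ hm).2 hbM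
        · exact h
      have := Set.ncard_le_ncard hsub (Set.finite_singleton w)
      rw [Set.ncard_singleton] at this
      omega
    rw [this, Set.ncard_empty]

/-- Reconstruction: `B` is determined by its free parts. -/
lemma recon (hconn : G.Connected) (hacyc : G.IsAcyclic)
    (hA : IsOddCluster G o A)
    (hC : ∀ i, IsOddCluster G o (C i))
    (hBm : B ∈ minimalB G A)
    (hEC : ∀ i, IsEvenCluster G o (Bs i))
    (hNA : ∀ i j, i ≠ j → NonAdj G (Bs i) (Bs j))
    (hBU : B = ⋃ i, Bs i)
    (hInd : ∀ i, inducedSet G (Bs i) = C i) :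
    B = (⋃ j, Mset G (C j)) ∪
      ⋃ v ∈ (⋃ j, C j), ((G.neighborSet v ∩ B) \ (⋃ j, Mset G (C j))) := by
  apply Set.Subset.antisymm
  · intro b hb
    by_cases hbM : b ∈ ⋃ j, Mset G (C j)
    · exact Or.inl hbM
    · right
      have hbB := hb
      rw [hBU] at hbB
      obtain ⟨i, hbi⟩ := Set.mem_iUnion.mp hbB
      obtain ⟨v, hv, hadj, _⟩ := witness_in_C hconn hacyc hA hBm hEC hNA hBU hInd hbi
      refine Set.mem_biUnion (Set.mem_iUnion.mpr ⟨i, hv⟩) ?_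
      exact ⟨⟨hadj, hb⟩, hbM⟩
  · rintro b (hb | hb)
    · obtain ⟨j, hbj⟩ := Set.mem_iUnion.mp hb
      rw [hBU]
      exact Set.mem_iUnion.mpr ⟨j, Mset_sub hconn hacyc hC hEC hInd j hbj⟩
    · obtain ⟨v, _, hmem⟩ := Set.mem_iUnion₂.mp hb
      exact hmem.1.2

end Enum

namespace Enum

open SimpleGraph TreeAux

variable {V : Type} {G : SimpleGraph V} {o : V} {A : Set V} {r : ℕ}
  {C : Fin r → Set V} {B : Set V} {Bs : Fin r → Set V} {d : ℕ}

lemma fiber_sum_le (s : Finset V) (g : V → ℕ) (T : ℕ → Set V)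
    (hfin : ∀ p, 3 ≤ p → p ≤ d → (T p).Finite)
    (hmem : ∀ v ∈ s, 3 ≤ g v → v ∈ T (g v))
    (hle : ∀ v ∈ s, g v ≤ d) :
    ∑ v ∈ s, (g v - 2) ≤ ∑ p ∈ Finset.Icc 3 d, (p - 2) * (T p).ncard := by
  classical
  have h1 : ∑ v ∈ s.filter (fun v => 3 ≤ g v), (g v - 2) = ∑ v ∈ s, (g v - 2) := by
    apply Finset.sum_filter_of_ne
    intro x _ hne
    omega
  rw [← h1]
  have hmap : ∀ v ∈ s.filter (fun v => 3 ≤ g v), g v ∈ Finset.Icc 3 d := by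
    intro v hv
    rw [Finset.mem_filter] at hv
    exact Finset.mem_Icc.mpr ⟨hv.2, hle v hv.1⟩
  rw [← Finset.sum_fiberwise_of_maps_to hmap (fun v => g v - 2)]
  apply Finset.sum_le_sum
  intro p hp
  rw [Finset.mem_Icc] at hp
  have heq : ∑ v ∈ (s.filter (fun v => 3 ≤ g v)).filter (fun v => g v = p), (g v - 2)
      = (p - 2) * ((s.filter (fun v => 3 ≤ g v)).filter (fun v => g v = p)).card := by
    rw [Finset.sum_congr rfl (fun v hv => by rw [(Finset.mem_filter.mp hv).2])]
    rw [Finset.sum_const, smul_eq_mul, mul_comm]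
  rw [heq]
  apply Nat.mul_le_mul_left
  have hsub : ↑((s.filter (fun v => 3 ≤ g v)).filter (fun v => g v = p)) ⊆ T p := by
    intro v hv
    rw [Finset.mem_coe, Finset.mem_filter, Finset.mem_filter] at hv
    obtain ⟨⟨hvs, hv3⟩, hvp⟩ := hv
    exact hvp ▸ hmem v hvs hv3
  calc ((s.filter (fun v => 3 ≤ g v)).filter (fun v => g v = p)).card
      = (↑((s.filter (fun v => 3 ≤ g v)).filter (fun v => g v = p)) : Set V).ncard :=
        (Set.ncard_coe_finset _).symm
    _ ≤ (T p).ncard := Set.ncard_le_ncard hsub (hfin p hp.1 hp.2)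

lemma singleTri_finite (hreg : ∀ v : V, (G.neighborSet v).ncard = d) (hd : 3 ≤ d)
    (hA : A.Finite) {p : ℕ} (hp3 : 3 ≤ p) : {x | IsSingleTri G A p x}.Finite := by
  apply (finite_nbhd hreg hd hA).subset
  intro x hx
  have hx' : (G.neighborSet x ∩ A).ncard = p := hx
  have hne : (G.neighborSet x ∩ A).Nonempty := by
    rw [Set.nonempty_iff_ne_empty]
    intro h
    rw [h, Set.ncard_empty] at hx'
    omega
  obtain ⟨a, ha1, ha2⟩ := hne
  exact ⟨a, ha2, ha1.symm⟩

lemma doubleTri_finite (hreg : ∀ v : V, (G.neighborSet v).ncard = d) (hd : 3 ≤ d)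
    (hA : A.Finite) {p : ℕ} (hp3 : 3 ≤ p) : {x | IsDoubleTri G A p x}.Finite := by
  apply (finite_nbhd hreg hd (finite_nbhd hreg hd hA)).subset
  rintro x ⟨Y, hYcard, hYadj, hYnbr⟩
  have hYne : Y.Nonempty := by
    rw [← Finset.card_pos, hYcard]; omega
  obtain ⟨y, hy⟩ := hYne
  obtain ⟨w, hw1, hw2, _⟩ := hYnbr y hy
  exact ⟨y, ⟨w, hw2, hw1.symm⟩, (hYadj y hy).symm⟩

lemma isDoubleTri_of (hreg : ∀ v : V, (G.neighborSet v).ncard = d) (hd : 3 ≤ d)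
    (hCsub : ∀ i, C i ⊆ A) {v : V}
    (hv3 : 3 ≤ (G.neighborSet v ∩ ⋃ j, Mset G (C j)).ncard) :
    IsDoubleTri G A ((G.neighborSet v ∩ ⋃ j, Mset G (C j)).ncard) v := by
  have hfin : (G.neighborSet v ∩ ⋃ j, Mset G (C j)).Finite :=
    (nbr_finite hreg hd v).subset Set.inter_subset_left
  refine ⟨hfin.toFinset, ?_, ?_, ?_⟩
  · rw [← Set.ncard_eq_toFinset_card _ hfin]
  · intro y hy
    rw [Set.Finite.mem_toFinset] at hy
    exact hy.1
  · intro y hy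
    rw [Set.Finite.mem_toFinset] at hy
    obtain ⟨j, hj⟩ := Set.mem_iUnion.mp hy.2
    obtain ⟨a, ha, a', ha', hne, had1, had2⟩ := hj
    by_cases hav : a = v
    · refine ⟨a', had2, (hCsub j) ha', fun h => ?_⟩
      rw [Set.mem_singleton_iff] at h
      exact hne (by rw [hav, h])
    · exact ⟨a, had1, (hCsub j) ha, fun h => hav (Set.mem_singleton_iff.mp h)⟩

end Enum

namespace Enum

open SimpleGraph TreeAux

variable {V : Type} {G : SimpleGraph V} {o : V} {d : ℕ}

lemma comp_bound (hconn : G.Connected) (hacyc : G.IsAcyclic)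
    (hreg : ∀ v : V, (G.neighborSet v).ncard = d) (hd : 3 ≤ d)
    {Ci : Set V} (hCi : IsOddCluster G o Ci) {MU : Set V}
    (hMU : ∀ v ∈ Ci, G.neighborSet v ∩ MU = G.neighborSet v ∩ Mset G Ci)
    (sC sM : Finset V) (hsC : ∀ x, x ∈ sC ↔ x ∈ Ci) (hsM : ∀ x, x ∈ sM ↔ x ∈ Mset G Ci) :
    ∑ v ∈ sC, (2 - min ((G.neighborSet v ∩ MU).ncard) 2)
      ≤ 2 + (∑ v ∈ sC, ((G.neighborSet v ∩ MU).ncard - 2)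
          + ∑ m ∈ sM, ((G.neighborSet m ∩ Ci).ncard - 2)) := by
  classical
  set S : Set V := Ci ∪ Mset G Ci with hS
  have hOdd : ∀ v ∈ Ci, Odd (G.dist o v) := hCi.2.2.1
  have hMeven : ∀ m ∈ Mset G Ci, Even (G.dist o m) := by
    rintro m ⟨a, ha, a', ha', hne, h1, h2⟩
    exact even_of_adj_odd hconn hacyc o h1 (hOdd a ha)
  have hdisj : Disjoint Ci (Mset G Ci) := by
    rw [Set.disjoint_left]
    intro x hx1 hx2
    exact even_odd_contra (hMeven x hx2) (hOdd x hx1)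
  -- degree identities
  have hDC : ∀ v ∈ Ci, G.neighborSet v ∩ S = G.neighborSet v ∩ Mset G Ci := by
    intro v hv
    ext u
    constructor
    · rintro ⟨ha, hu | hu⟩
      · exact absurd ha (not_adj_of_odd_odd hconn hacyc o (hOdd v hv) (hOdd u hu))
      · exact ⟨ha, hu⟩
    · rintro ⟨ha, hu⟩
      exact ⟨ha, Or.inr hu⟩
  have hDM : ∀ m ∈ Mset G Ci, G.neighborSet m ∩ S = G.neighborSet m ∩ Ci := by
    intro m hm
    ext u
    constructor
    · rintro ⟨ha, hu | hu⟩
      · exact ⟨ha, hu⟩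
      · exact absurd ha (not_adj_of_even_even hconn hacyc o (hMeven m hm) (hMeven u hu))
    · rintro ⟨ha, hu⟩
      exact ⟨ha, Or.inl hu⟩
  -- finiteness
  have hMfin : (Mset G Ci).Finite := by
    apply (finite_nbhd hreg hd hCi.1).subset
    rintro m ⟨a, ha, a', ha', hne, h1, h2⟩
    exact ⟨a, ha, h1.symm⟩
  have hSfin : S.Finite := hCi.1.union hMfin
  haveI : Fintype ↥S := hSfin.fintype
  set H := G.induce S with hH
  haveI : DecidableRel H.Adj := Classical.decRel _
  -- connectivity of H
  have hreachC : ∀ a b : V, Relation.ReflTransGen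
      (fun x y => x ∈ Ci ∧ y ∈ Ci ∧ G.dist x y = 2) a b →
      ∀ (ha : a ∈ Ci) (hb : b ∈ Ci),
        H.Reachable ⟨a, Or.inl ha⟩ ⟨b, Or.inl hb⟩ := by
    intro a b hab
    induction hab with
    | refl => intro ha hb; rfl
    | @tail c c' hcc hstep ih =>
      intro ha hb
      obtain ⟨hc, hc', hd2⟩ := hstep
      have hr1 : H.Reachable ⟨a, Or.inl ha⟩ ⟨c, Or.inl hc⟩ := ih ha hc
      have hne : c ≠ c' := by
        intro h; subst h; rw [SimpleGraph.dist_self] at hd2; exact two_ne_zero hd2.symm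
      obtain ⟨m, hm1, hm2⟩ := exists_mid_of_dist_two hconn hd2
      have hmM : m ∈ Mset G Ci := ⟨c, hc, c', hc', hne, hm1.symm, hm2⟩
      have e1 : H.Adj ⟨c, Or.inl hc⟩ ⟨m, Or.inr hmM⟩ := by
        simp only [hH, SimpleGraph.comap_adj, Function.Embedding.coe_subtype]
        exact hm1
      have e2 : H.Adj ⟨m, Or.inr hmM⟩ ⟨c', Or.inl hb⟩ := by
        simp only [hH, SimpleGraph.comap_adj, Function.Embedding.coe_subtype]
        exact hm2
      exact hr1.trans (e1.reachable.trans e2.reachable)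
  have htoC : ∀ x : ↥S, ∃ v : V, ∃ hv : v ∈ Ci, H.Reachable x ⟨v, Or.inl hv⟩ := by
    rintro ⟨x, hx | hx⟩
    · exact ⟨x, hx, by rfl⟩
    · have hxM : x ∈ Mset G Ci := hx
      obtain ⟨a, ha, a', ha', hne, h1, h2⟩ := hx
      refine ⟨a, ha, ?_⟩
      have : H.Adj ⟨x, Or.inr hxM⟩ ⟨a, Or.inl ha⟩ := by
        simp only [hH, SimpleGraph.comap_adj, Function.Embedding.coe_subtype]
        exact h1
      exact this.reachable
  have hconnH : H.Connected := by
    rw [SimpleGraph.connected_iff]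
    constructor
    · intro x y
      obtain ⟨vx, hvx, hrx⟩ := htoC x
      obtain ⟨vy, hvy, hry⟩ := htoC y
      have := hreachC vx vy (hCi.2.2.2 vx hvx vy hvy) hvx hvy
      exact (hrx.trans this).trans hry.symm
    · obtain ⟨v, hv⟩ := hCi.2.1
      exact ⟨⟨v, Or.inl hv⟩⟩
  have hacycH : H.IsAcyclic := by
    intro x c hc
    have hinj : Function.Injective (fun (y : ↥S) => (y : V)) := Subtype.val_injective
    have hmap : ((c.map ⟨Subtype.val, fun {a b} h => h⟩ : G.Walk x x)).IsCycle :=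
      hc.map hinj
    exact hacyc _ hmap
  have htree : H.IsTree := ⟨hconnH, hacycH⟩
  have hEdge := htree.card_edgeFinset
  have hHand := SimpleGraph.sum_degrees_eq_twice_card_edges H
  -- degree = D
  set D : V → ℕ := fun x => (G.neighborSet x ∩ S).ncard with hD
  have hdeg : ∀ x : ↥S, H.degree x = D ↑x := by
    intro x
    rw [← SimpleGraph.card_neighborSet_eq_degree]
    show Fintype.card ↥(H.neighborSet x) = (G.neighborSet (↑x) ∩ S).ncard
    rw [← Nat.card_coe_set_eq, Nat.card_eq_fintype_card]
    apply Fintype.card_congr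
    refine ⟨fun y => ⟨↑↑y, y.2, (↑y : ↥S).2⟩, fun z => ⟨⟨z.1, z.2.2⟩, z.2.1⟩, ?_, ?_⟩
    · intro y; rfl
    · intro z; rfl
  have hsum : ∑ x : ↥S, D ↑x = 2 * (Fintype.card ↥S) - 2 := by
    have h1 : ∑ x : ↥S, D ↑x = ∑ x : ↥S, H.degree x :=
      Finset.sum_congr rfl (fun x _ => (hdeg x).symm)
    rw [h1, hHand]
    omega
  -- transfer to Finset sums
  have hdisjF : Disjoint sC sM := by
    rw [Finset.disjoint_left]
    intro x hx1 hx2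
    exact Set.disjoint_left.mp hdisj ((hsC x).mp hx1) ((hsM x).mp hx2)
  have hSF : ∀ x, x ∈ sC ∪ sM ↔ x ∈ S := by
    intro x
    rw [Finset.mem_union, hS, Set.mem_union, hsC, hsM]
  have hsum2 : ∑ x ∈ sC ∪ sM, D x = 2 * (Fintype.card ↥S) - 2 := by
    rw [Finset.sum_subtype (sC ∪ sM) hSF D]
    exact hsum
  have hcard : Fintype.card ↥S = (sC ∪ sM).card := by
    have : ((sC ∪ sM : Finset V) : Set V) = S := by
      ext x
      rw [Finset.mem_coe]
      exact hSF x
    rw [← Nat.card_eq_fintype_card, Nat.card_coe_set_eq, ← this, Set.ncard_coe_finset]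
  -- min-degree bounds
  have hDM2 : ∀ m ∈ sM, 2 ≤ D m := by
    intro m hm
    have hmM := (hsM m).mp hm
    obtain ⟨a, ha, a', ha', hne, h1, h2⟩ := hmM
    have hfin : (G.neighborSet m ∩ S).Finite := (nbr_finite hreg hd m).subset Set.inter_subset_left
    have h2' : 1 < (G.neighborSet m ∩ S).ncard := by
      rw [Set.one_lt_ncard_iff hfin]
      exact ⟨a, a', ⟨h1, Or.inl ha⟩, ⟨h2, Or.inl ha'⟩, hne⟩
    show 2 ≤ (G.neighborSet m ∩ S).ncard
    omega
  -- main arithmetic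
  have hCne : sC.Nonempty := by
    obtain ⟨v, hv⟩ := hCi.2.1
    exact ⟨v, (hsC v).mpr hv⟩
  have hTcard : 1 ≤ (sC ∪ sM).card := by
    obtain ⟨v, hv⟩ := hCne
    exact Finset.card_pos.mpr ⟨v, Finset.mem_union_left _ hv⟩
  have e1 : ∑ x ∈ sC ∪ sM, ((2 - min (D x) 2) + min (D x) 2) = 2 * (sC ∪ sM).card := by
    rw [Finset.sum_congr rfl (fun x _ => by omega : ∀ x ∈ sC ∪ sM, (2 - min (D x) 2) + min (D x) 2 = 2)]
    rw [Finset.sum_const, smul_eq_mul, mul_comm]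
  have e2 : ∑ x ∈ sC ∪ sM, ((D x - 2) + min (D x) 2) = 2 * (sC ∪ sM).card - 2 := by
    rw [Finset.sum_congr rfl (fun x _ => by omega : ∀ x ∈ sC ∪ sM, (D x - 2) + min (D x) 2 = D x)]
    rw [hsum2, hcard]
  rw [Finset.sum_add_distrib] at e1 e2
  have key : ∑ x ∈ sC ∪ sM, (2 - min (D x) 2) = 2 + ∑ x ∈ sC ∪ sM, (D x - 2) := by omega
  -- identify the pieces
  have hLHS : ∑ v ∈ sC, (2 - min ((G.neighborSet v ∩ MU).ncard) 2)
      = ∑ x ∈ sC ∪ sM, (2 - min (D x) 2) := by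
    rw [Finset.sum_union hdisjF]
    have hz : ∑ m ∈ sM, (2 - min (D m) 2) = 0 := by
      apply Finset.sum_eq_zero
      intro m hm
      have := hDM2 m hm
      omega
    rw [hz, add_zero]
    apply Finset.sum_congr rfl
    intro v hv
    have hvC := (hsC v).mp hv
    show (2 - (G.neighborSet v ∩ MU).ncard ⊓ 2) = (2 - (G.neighborSet v ∩ S).ncard ⊓ 2)
    rw [hMU v hvC, hDC v hvC]
  have hRHS : ∑ x ∈ sC ∪ sM, (D x - 2)
      = ∑ v ∈ sC, ((G.neighborSet v ∩ MU).ncard - 2)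
        + ∑ m ∈ sM, ((G.neighborSet m ∩ Ci).ncard - 2) := by
    rw [Finset.sum_union hdisjF]
    congr 1
    · apply Finset.sum_congr rfl
      intro v hv
      have hvC := (hsC v).mp hv
      show (G.neighborSet v ∩ S).ncard - 2 = (G.neighborSet v ∩ MU).ncard - 2
      rw [hMU v hvC, hDC v hvC]
    · apply Finset.sum_congr rfl
      intro m hm
      have hmM := (hsM m).mp hm
      show (G.neighborSet m ∩ S).ncard - 2 = (G.neighborSet m ∩ Ci).ncard - 2
      rw [hDM m hmM]
  rw [hLHS, key, hRHS]

end Enum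
/-- **Lemma.** On the infinite `d`-regular tree, for an odd cluster `A` with
`χ(A) = STri(A) + DTri(A)` and any sequence `𝒞 = (C₁, …, C_r)` of pairwise disjoint odd
clusters contained in `A`, one has `|𝔅(A,𝒞)| ≤ (d-1)^{2r + χ(A)}`. -/
theorem enumeration_induced_relation (d : ℕ) (hd : 3 ≤ d)
    (V : Type) (G : SimpleGraph V) (o : V)
    (hconn : G.Connected) (hacyc : G.IsAcyclic)
    (hreg : ∀ v : V, (G.neighborSet v).ncard = d)
    (A : Set V) (hA : IsOddCluster G o A)
    (r : ℕ) (C : Fin r → Set V)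
    (hC : ∀ i, IsOddCluster G o (C i))
    (hCsub : ∀ i, C i ⊆ A)
    (hCdisj : ∀ i j, i ≠ j → Disjoint (C i) (C j)) :
    (frakB G o A C).ncard ≤ (d - 1) ^ (2 * r + (STri G d A + DTri G d A)) := by
  classical
  rcases Set.eq_empty_or_nonempty (frakB G o A C) with hempty | ⟨B₀, hB₀⟩
  · rw [hempty, Set.ncard_empty]
    exact Nat.zero_le _
  obtain ⟨hBm₀, Bs₀, hEC₀, hNA₀, hBU₀, hInd₀⟩ := hB₀
  set MU : Set V := ⋃ j, Enum.Mset G (C j) with hMUdef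
  set Cstar : Set V := ⋃ j, C j with hCstardef
  have hCsfin : Cstar.Finite := hA.1.subset (Set.iUnion_subset hCsub)
  set sF : Finset V := hCsfin.toFinset with hsFdef
  have hsFmem : ∀ x, x ∈ sF ↔ x ∈ Cstar := fun x => Set.Finite.mem_toFinset _
  set tf : V → ℕ := fun v => 2 - min ((G.neighborSet v ∩ MU).ncard) 2 with htfdef
  have hnb : ∀ v : V, (G.neighborSet v).Finite := TreeAux.nbr_finite hreg hd
  have hnbdiff_fin : ∀ v : V, (G.neighborSet v \ MU).Finite :=
    fun v => (hnb v).subset Set.diff_subset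
  set K : V → Finset (Finset V) :=
    fun v => ((hnbdiff_fin v).toFinset.powersetCard (tf v)) with hKdef
  -- encoding facts
  have hFfin : ∀ (B : Set V) (v : V), ((G.neighborSet v ∩ B) \ MU).Finite :=
    fun B v => (hnb v).subset (fun x hx => hx.1.1)
  have hcardF : ∀ B ∈ frakB G o A C, ∀ v ∈ sF,
      ((G.neighborSet v ∩ B) \ MU).ncard = tf v := by
    intro B hB v hv
    obtain ⟨hBm, Bs, hEC, hNA, hBU, hInd⟩ := hB
    obtain ⟨i, hvi⟩ := Set.mem_iUnion.mp ((hsFmem v).mp hv)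
    exact Enum.Sv_card hconn hacyc hreg hd hA hC hBm hEC hNA hBU hInd hvi
  have hrecon : ∀ B ∈ frakB G o A C,
      B = MU ∪ ⋃ v ∈ Cstar, ((G.neighborSet v ∩ B) \ MU) := by
    intro B hB
    obtain ⟨hBm, Bs, hEC, hNA, hBU, hInd⟩ := hB
    exact Enum.recon hconn hacyc hA hC hBm hEC hNA hBU hInd
  have hKmem : ∀ B ∈ frakB G o A C, ∀ v ∈ sF, (hFfin B v).toFinset ∈ K v := by
    intro B hB v hv
    rw [Finset.mem_powersetCard]
    constructor
    · rw [Set.Finite.toFinset_subset_toFinset]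
      exact fun x hx => ⟨hx.1.1, hx.2⟩
    · rw [← Set.ncard_eq_toFinset_card _ (hFfin B v)]
      exact hcardF B hB v hv
  -- the injection
  set Φ : ↥(frakB G o A C) → ((v : ↥sF) → ↥(K (↑v : V))) :=
    fun Bp v => ⟨(hFfin ↑Bp ↑v).toFinset, hKmem ↑Bp Bp.2 ↑v v.2⟩ with hΦdef
  have hinj : Function.Injective Φ := by
    rintro ⟨B, hB⟩ ⟨B', hB'⟩ h
    have hFeq : ∀ v ∈ Cstar, (G.neighborSet v ∩ B) \ MU = (G.neighborSet v ∩ B') \ MU := by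
      intro v hv
      have h1 := congrFun h ⟨v, (hsFmem v).mpr hv⟩
      have h2 := congrArg Subtype.val h1
      simp only [hΦdef] at h2
      rwa [Set.Finite.toFinset_inj] at h2
    apply Subtype.ext
    show B = B'
    rw [hrecon B hB, hrecon B' hB']
    congr 1
    exact Set.iUnion₂_congr hFeq
  -- cardinality chain
  have hcount : (frakB G o A C).ncard ≤ ∏ v ∈ sF, (K v).card := by
    rw [← Nat.card_coe_set_eq]
    have hle := Nat.card_le_card_of_injective Φ hinj
    have hpi : Nat.card ((v : ↥sF) → ↥(K (↑v : V))) = ∏ v ∈ sF, (K v).card := by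
      rw [Nat.card_pi]
      have hfac : ∀ v : ↥sF, Nat.card ↥(K (↑v : V)) = (K (↑v : V)).card := by
        intro v
        rw [Nat.card_eq_fintype_card, Fintype.card_coe]
      rw [Finset.prod_congr rfl (fun v _ => hfac v)]
      exact (Finset.prod_subtype sF (fun x => Iff.rfl) (fun v => (K v).card)).symm
    rw [hpi] at hle
    exact hle
  -- bounding each factor
  have hKbound : ∀ v ∈ sF, (K v).card ≤ (d - 1) ^ (tf v) := by
    intro v _
    have hch : (K v).card = ((G.neighborSet v \ MU).ncard).choose (tf v) := by
      show ((hnbdiff_fin v).toFinset.powersetCard (tf v)).card = _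
      rw [Finset.card_powersetCard, ← Set.ncard_eq_toFinset_card _ (hnbdiff_fin v)]
    have hsumd : (G.neighborSet v ∩ MU).ncard + (G.neighborSet v \ MU).ncard = d := by
      rw [Set.ncard_inter_add_ncard_diff_eq_ncard _ _ (hnb v)]
      exact hreg v
    set m := (G.neighborSet v ∩ MU).ncard with hmdef
    have htfv : tf v = 2 - min m 2 := rfl
    rcases Nat.lt_or_ge m 1 with h0 | h1
    · -- m = 0, tf = 2
      have hm0 : m = 0 := by omega
      have htf2 : tf v = 2 := by rw [htfv, hm0]; omega
      have hdc : (G.neighborSet v \ MU).ncard = d := by omega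
      rw [hch, htf2, hdc, Nat.choose_two_right, pow_two]
      apply Nat.div_le_of_le_mul
      calc d * (d - 1) ≤ (2 * (d - 1)) * (d - 1) :=
            Nat.mul_le_mul_right _ (by omega)
        _ = 2 * ((d - 1) * (d - 1)) := by ring
    rcases Nat.lt_or_ge m 2 with h2 | h2
    · -- m = 1, tf = 1
      have hm1 : m = 1 := by omega
      have htf1 : tf v = 1 := by rw [htfv, hm1]; omega
      have hdc : (G.neighborSet v \ MU).ncard = d - 1 := by omega
      rw [hch, htf1, hdc, Nat.choose_one_right, pow_one]
    · -- m ≥ 2, tf = 0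
      have htf0 : tf v = 0 := by rw [htfv]; omega
      rw [hch, htf0, Nat.choose_zero_right, pow_zero]
  have hprod : ∏ v ∈ sF, (K v).card ≤ (d - 1) ^ (∑ v ∈ sF, tf v) := by
    rw [← Finset.prod_pow_eq_pow_sum]
    exact Finset.prod_le_prod' hKbound
  -- the exponent bound
  have hMfin : ∀ i, (Enum.Mset G (C i)).Finite := by
    intro i
    apply (Enum.finite_nbhd hreg hd (hC i).1).subset
    rintro m ⟨a, ha, a', ha', hne, h1, h2⟩
    exact ⟨a, ha, h1.symm⟩
  set sCF : Fin r → Finset V := fun i => (hC i).1.toFinset with hsCFdef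
  set sMF : Fin r → Finset V := fun i => (hMfin i).toFinset with hsMFdef
  have hsCFmem : ∀ i x, x ∈ sCF i ↔ x ∈ C i := fun i x => Set.Finite.mem_toFinset _
  have hsMFmem : ∀ i x, x ∈ sMF i ↔ x ∈ Enum.Mset G (C i) :=
    fun i x => Set.Finite.mem_toFinset _
  have hsFsplit : sF = Finset.univ.biUnion sCF := by
    ext x
    rw [hsFmem, Finset.mem_biUnion]
    constructor
    · intro hx
      obtain ⟨i, hi⟩ := Set.mem_iUnion.mp hx
      exact ⟨i, Finset.mem_univ i, (hsCFmem i x).mpr hi⟩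
    · rintro ⟨i, _, hi⟩
      exact Set.mem_iUnion.mpr ⟨i, (hsCFmem i x).mp hi⟩
  have hCdisjF : Set.PairwiseDisjoint (↑(Finset.univ : Finset (Fin r))) sCF := by
    intro i _ j _ hij
    exact Finset.disjoint_left.mpr (fun {x} hxi hxj =>
      Set.disjoint_left.mp (hCdisj i j hij) ((hsCFmem i x).mp hxi) ((hsCFmem j x).mp hxj))
  have hMdisjF : Set.PairwiseDisjoint (↑(Finset.univ : Finset (Fin r))) sMF := by
    intro i _ j _ hij
    exact Finset.disjoint_left.mpr (fun {x} hxi hxj =>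
      Set.disjoint_left.mp (hNA₀ i j hij).1
        (Enum.Mset_sub hconn hacyc hC hEC₀ hInd₀ i ((hsMFmem i x).mp hxi))
        (Enum.Mset_sub hconn hacyc hC hEC₀ hInd₀ j ((hsMFmem j x).mp hxj)))
  have hsplitsum : ∑ v ∈ sF, tf v = ∑ i : Fin r, ∑ v ∈ sCF i, tf v := by
    rw [hsFsplit, Finset.sum_biUnion hCdisjF]
  have hcomp : ∀ i : Fin r, ∑ v ∈ sCF i, tf v
      ≤ 2 + (∑ v ∈ sCF i, ((G.neighborSet v ∩ MU).ncard - 2)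
          + ∑ m ∈ sMF i, ((G.neighborSet m ∩ C i).ncard - 2)) := by
    intro i
    have hMUi : ∀ v ∈ C i, G.neighborSet v ∩ MU = G.neighborSet v ∩ Enum.Mset G (C i) :=
      fun v hv => Enum.Mcross hconn hacyc hC hEC₀ hNA₀ hInd₀ hv
    exact Enum.comp_bound hconn hacyc hreg hd (hC i) hMUi (sCF i) (sMF i)
      (hsCFmem i) (hsMFmem i)
  -- double trifurcation bound
  have hDbound : ∑ v ∈ sF, ((G.neighborSet v ∩ MU).ncard - 2) ≤ DTri G d A := by
    apply Enum.fiber_sum_le sF (fun v => (G.neighborSet v ∩ MU).ncard)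
        (fun p => {x | IsDoubleTri G A p x})
    · intro p hp3 _
      exact Enum.doubleTri_finite hreg hd hA.1 hp3
    · intro v _ hv3
      exact Enum.isDoubleTri_of hreg hd hCsub hv3
    · intro v _
      have := Set.ncard_le_ncard (Set.inter_subset_left :
        G.neighborSet v ∩ MU ⊆ G.neighborSet v) (hnb v)
      rw [hreg v] at this
      exact this
  -- single trifurcation bound
  have hSbound : ∑ i : Fin r, ∑ m ∈ sMF i, ((G.neighborSet m ∩ C i).ncard - 2)
      ≤ STri G d A := by
    have step1 : ∑ i : Fin r, ∑ m ∈ sMF i, ((G.neighborSet m ∩ C i).ncard - 2)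
        ≤ ∑ i : Fin r, ∑ m ∈ sMF i, ((G.neighborSet m ∩ A).ncard - 2) := by
      apply Finset.sum_le_sum
      intro i _
      apply Finset.sum_le_sum
      intro m _
      apply Nat.sub_le_sub_right
      exact Set.ncard_le_ncard (Set.inter_subset_inter_right _ (hCsub i)) ((hnb m).inter_of_left _)
    have step2 : ∑ i : Fin r, ∑ m ∈ sMF i, ((G.neighborSet m ∩ A).ncard - 2)
        = ∑ m ∈ Finset.univ.biUnion sMF, ((G.neighborSet m ∩ A).ncard - 2) :=
      (Finset.sum_biUnion hMdisjF).symm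
    have step3 : ∑ m ∈ Finset.univ.biUnion sMF, ((G.neighborSet m ∩ A).ncard - 2)
        ≤ STri G d A := by
      apply Enum.fiber_sum_le _ (fun m => (G.neighborSet m ∩ A).ncard)
          (fun p => {x | IsSingleTri G A p x})
      · intro p hp3 _
        exact Enum.singleTri_finite hreg hd hA.1 hp3
      · intro m _ _
        exact rfl
      · intro m _
        have := Set.ncard_le_ncard (Set.inter_subset_left :
          G.neighborSet m ∩ A ⊆ G.neighborSet m) (hnb m)
        rw [hreg m] at this
        exact this
    omega
  -- combine exponent bound
  have hsum_tf : ∑ v ∈ sF, tf v ≤ 2 * r + (STri G d A + DTri G d A) := by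
    have htot : ∑ i : Fin r, ∑ v ∈ sCF i, tf v
        ≤ ∑ i : Fin r, (2 + (∑ v ∈ sCF i, ((G.neighborSet v ∩ MU).ncard - 2)
            + ∑ m ∈ sMF i, ((G.neighborSet m ∩ C i).ncard - 2))) :=
      Finset.sum_le_sum (fun i _ => hcomp i)
    have hsplit2 : ∑ i : Fin r, (2 + (∑ v ∈ sCF i, ((G.neighborSet v ∩ MU).ncard - 2)
            + ∑ m ∈ sMF i, ((G.neighborSet m ∩ C i).ncard - 2)))
        = 2 * r + (∑ i : Fin r, ∑ v ∈ sCF i, ((G.neighborSet v ∩ MU).ncard - 2)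
            + ∑ i : Fin r, ∑ m ∈ sMF i, ((G.neighborSet m ∩ C i).ncard - 2)) := by
      rw [Finset.sum_add_distrib, Finset.sum_add_distrib, Finset.sum_const,
        Finset.card_univ, Fintype.card_fin, smul_eq_mul, mul_comm]
    have hDsum : ∑ i : Fin r, ∑ v ∈ sCF i, ((G.neighborSet v ∩ MU).ncard - 2)
        = ∑ v ∈ sF, ((G.neighborSet v ∩ MU).ncard - 2) := by
      rw [hsFsplit, Finset.sum_biUnion hCdisjF]
    rw [hsplitsum]
    calc ∑ i : Fin r, ∑ v ∈ sCF i, tf v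
        ≤ 2 * r + (∑ i : Fin r, ∑ v ∈ sCF i, ((G.neighborSet v ∩ MU).ncard - 2)
            + ∑ i : Fin r, ∑ m ∈ sMF i, ((G.neighborSet m ∩ C i).ncard - 2)) := by
          rw [← hsplit2]; exact htot
      _ ≤ 2 * r + (STri G d A + DTri G d A) := by
          rw [hDsum]
          have := hDbound
          have := hSbound
          omega
  calc (frakB G o A C).ncard ≤ ∏ v ∈ sF, (K v).card := hcount
    _ ≤ (d - 1) ^ (∑ v ∈ sF, tf v) := hprod
    _ ≤ (d - 1) ^ (2 * r + (STri G d A + DTri G d A)) :=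
        Nat.pow_le_pow_right (by omega) hsum_tf
end

section
/- Fix ε ∈ (0,1) and nonnegative integers n, χ. For nonnegative integers r₁, r₂ define F(r₁, r₂) = Σ_{m₁ ≥ 0, m₂ ≥ 0} C(n−m₁−m₂+r₁+r₂+χ, r₁+r₂+χ) · C(m₁−1, r₁−1) · C(m₂−1, r₂−1) · 2^{−n+m₁} · (1−ε/2)^{m₁+m₂}, where for integers a,b the binomial coefficient C(a,b) is the usual one when 0 ≤ b ≤ a, equals 0 when b ≥ 0 and a < b (in particular when a < 0), and equals the indicator 1_{a=b} when b < 0. Then: (i) for all r₁, r₂ ≥ 0, F(r₁, r₂) ≤ 2^{2r₁+2r₂+χ} · ε^{−r₁}; (ii) F(1,0) ≤ 2^{χ+2}; (iii) F(0,1) ≤ 2^{χ+1}. -/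
open MeasureTheory

/-- Binomial coefficient for integer arguments, with the conventions: the usual
binomial coefficient when `0 ≤ b ≤ a`; `0` when `b ≥ 0` and `a < b`; and the indicator
`1_{a = b}` when `b < 0`. -/
def binomZ (a b : ℤ) : ℕ :=
  if b < 0 then (if a = b then 1 else 0)
  else if a < b then 0
  else Nat.choose a.toNat b.toNat

/-- The quantity `F(r₁, r₂) = F(n, χ; r₁, r₂)`: the sum over all nonnegative integers
`m₁, m₂` of
`C(n-m₁-m₂+r₁+r₂+χ, r₁+r₂+χ) · C(m₁-1, r₁-1) · C(m₂-1, r₂-1) · 2^{-n+m₁} ·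
 (1-ε/2)^{m₁+m₂}`. -/
noncomputable def Fsum (ε : ℝ) (n χ r₁ r₂ : ℕ) : ℝ :=
  ∑' m : ℕ × ℕ,
    (binomZ ((n : ℤ) - m.1 - m.2 + r₁ + r₂ + χ) ((r₁ : ℤ) + r₂ + χ) : ℝ)
      * (binomZ ((m.1 : ℤ) - 1) ((r₁ : ℤ) - 1) : ℝ)
      * (binomZ ((m.2 : ℤ) - 1) ((r₂ : ℤ) - 1) : ℝ)
      * (2 : ℝ) ^ ((m.1 : ℤ) - n)
      * (1 - ε / 2) ^ (m.1 + m.2)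

lemma nat_choose_le_two_pow (n k : ℕ) : n.choose k ≤ 2 ^ n := by
  rcases le_or_gt k n with h | h
  · calc n.choose k ≤ ∑ i ∈ Finset.range (n+1), n.choose i :=
          Finset.single_le_sum (fun i _ => Nat.zero_le _) (Finset.mem_range.2 (by omega))
    _ = 2 ^ n := Nat.sum_range_choose n
  · simp [Nat.choose_eq_zero_of_lt h]

lemma binomZ_cast_le (a b : ℤ) (hb : 0 ≤ b) : (binomZ a b : ℝ) ≤ 2 ^ a.toNat := by
  unfold binomZ
  rw [if_neg (not_lt.2 hb)]
  split
  · norm_num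
  · exact_mod_cast nat_choose_le_two_pow a.toNat b.toNat

lemma binomZ_eq_zero (a b : ℤ) (hb : 0 ≤ b) (hab : a < b) : binomZ a b = 0 := by
  unfold binomZ; rw [if_neg (not_lt.2 hb), if_pos hab]

lemma binomZ_zero_le_one (a : ℤ) : (binomZ a 0 : ℝ) ≤ 1 := by
  unfold binomZ
  rw [if_neg (by norm_num)]
  split
  · simp
  · simp [Nat.choose_zero_right]

lemma keyAP (n R m₁ m₂ : ℕ) (a b : ℤ) (ha : a = (n:ℤ) - m₁ - m₂ + R) (hb : b = (R:ℤ)) :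
    (binomZ a b : ℝ) * (2:ℝ) ^ ((m₁:ℤ) - n) ≤ 2 ^ R * (1/2:ℝ) ^ m₂ := by
  subst ha hb
  rcases le_or_gt (m₁ + m₂) n with h | h
  · have h1 : (binomZ ((n:ℤ) - m₁ - m₂ + R) (R:ℤ) : ℝ) ≤ 2 ^ (n - m₁ - m₂ + R) := by
      have := binomZ_cast_le ((n:ℤ) - m₁ - m₂ + R) (R:ℤ) (by positivity)
      have ht : ((n:ℤ) - m₁ - m₂ + R).toNat = n - m₁ - m₂ + R := by omega
      rwa [ht] at this
    calc (binomZ ((n:ℤ) - m₁ - m₂ + R) (R:ℤ) : ℝ) * (2:ℝ) ^ ((m₁:ℤ) - n)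
        ≤ 2 ^ (n - m₁ - m₂ + R) * (2:ℝ) ^ ((m₁:ℤ) - n) := by
          exact mul_le_mul_of_nonneg_right h1 (by positivity)
      _ = 2 ^ R * (1/2:ℝ) ^ m₂ := by
          rw [← zpow_natCast (2:ℝ) (n - m₁ - m₂ + R), ← zpow_add₀ (by norm_num : (2:ℝ) ≠ 0)]
          have he : ((n - m₁ - m₂ + R : ℕ) : ℤ) + ((m₁:ℤ) - n) = (R : ℤ) - m₂ := by
            push_cast; omega
          rw [he, zpow_sub₀ (by norm_num : (2:ℝ) ≠ 0), zpow_natCast, zpow_natCast]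
          rw [div_eq_mul_inv, ← inv_pow]
          norm_num
  · have : binomZ ((n:ℤ) - m₁ - m₂ + R) (R:ℤ) = 0 :=
      binomZ_eq_zero _ _ (by positivity) (by omega)
    rw [this]
    simp

lemma hasSum_binomZ_mul_pow (r : ℕ) {x : ℝ} (hx0 : 0 ≤ x) (hx1 : x < 1) :
    HasSum (fun m : ℕ => (binomZ ((m:ℤ) - 1) ((r:ℤ) - 1) : ℝ) * x ^ m)
      ((x / (1 - x)) ^ r) := by
  cases r with
  | zero =>
    have hfun : (fun m : ℕ => (binomZ ((m:ℤ) - 1) (((0:ℕ):ℤ) - 1) : ℝ) * x ^ m)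
        = fun m : ℕ => if m = 0 then (1:ℝ) else 0 := by
      funext m
      have h1 : (((0:ℕ):ℤ) - 1 < 0) := by norm_num
      rw [binomZ, if_pos h1]
      by_cases hm : m = 0
      · subst hm; norm_num
      · rw [if_neg (by omega)]
        simp [hm]
    rw [hfun]
    simpa using hasSum_ite_eq (0:ℕ) (1:ℝ)
  | succ r' =>
    have hnorm : ‖x‖ < 1 := by rw [Real.norm_eq_abs, abs_of_nonneg hx0]; exact hx1
    have key := (hasSum_choose_mul_geometric_of_norm_lt_one r' hnorm).mul_right (x ^ (r'+1))
    have hinj : Function.Injective (fun k : ℕ => k + (r'+1)) :=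
      fun a b hab => by simpa using hab
    refine (Function.Injective.hasSum_iff hinj ?_).mp ?_
    · intro m hm
      have hmlt : m < r' + 1 := by
        by_contra hc
        exact hm ⟨m - (r'+1), by show m - (r'+1) + (r'+1) = m; omega⟩
      have hz : binomZ ((m:ℤ) - 1) (((r'+1:ℕ):ℤ) - 1) = 0 :=
        binomZ_eq_zero _ _ (by push_cast; omega) (by push_cast; omega)
      rw [hz]
      simp
    · convert key using 1
      · rfl
      · funext k
        simp only [Function.comp]
        have hb : binomZ (((k + (r'+1) : ℕ):ℤ) - 1) (((r'+1:ℕ):ℤ) - 1)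
            = (k + r').choose r' := by
          unfold binomZ
          rw [if_neg (by push_cast; omega), if_neg (by push_cast; omega)]
          congr 1 <;> omega
        rw [hb, pow_add]
        ring
      · rw [div_pow]
        ring

lemma Fsum_le_general (ε : ℝ) (hε0 : 0 < ε) (hε1 : ε < 1) (n χ r₁ r₂ : ℕ) :
    Fsum ε n χ r₁ r₂ ≤ 2 ^ (r₁ + r₂ + χ) *
      (((1 - ε/2) / (ε/2)) ^ r₁ *
        (((1 - ε/2)/2) / (1 - (1 - ε/2)/2)) ^ r₂) := by
  have hq0 : (0:ℝ) ≤ 1 - ε/2 := by linarith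
  have hq1 : (1 - ε/2 : ℝ) < 1 := by linarith
  have hq20 : (0:ℝ) ≤ (1 - ε/2)/2 := by linarith
  have hq21 : ((1 - ε/2)/2 : ℝ) < 1 := by linarith
  have h1 := hasSum_binomZ_mul_pow r₁ hq0 hq1
  have h2 := hasSum_binomZ_mul_pow r₂ hq20 hq21
  set f₁ : ℕ → ℝ := fun m => (binomZ ((m:ℤ) - 1) ((r₁:ℤ) - 1) : ℝ) * (1 - ε/2) ^ m with hf₁
  set f₂ : ℕ → ℝ := fun m => (binomZ ((m:ℤ) - 1) ((r₂:ℤ) - 1) : ℝ) * ((1 - ε/2)/2) ^ m with hf₂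
  have hf₁0 : ∀ m, 0 ≤ f₁ m := fun m => mul_nonneg (Nat.cast_nonneg _) (pow_nonneg hq0 _)
  have hf₂0 : ∀ m, 0 ≤ f₂ m := fun m => mul_nonneg (Nat.cast_nonneg _) (pow_nonneg hq20 _)
  have hs : Summable (fun m : ℕ × ℕ => f₁ m.1 * f₂ m.2) :=
    h1.summable.mul_of_nonneg h2.summable hf₁0 hf₂0
  have hmul : HasSum (fun m : ℕ × ℕ => f₁ m.1 * f₂ m.2)
      (((1 - ε/2) / (1 - (1 - ε/2))) ^ r₁ * (((1 - ε/2)/2) / (1 - (1 - ε/2)/2)) ^ r₂) :=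
    (h1.mul_eq h2 hs.hasSum) ▸ hs.hasSum
  have hg : HasSum (fun m : ℕ × ℕ => 2 ^ (r₁ + r₂ + χ) * (f₁ m.1 * f₂ m.2))
      (2 ^ (r₁ + r₂ + χ) *
        (((1 - ε/2) / (1 - (1 - ε/2))) ^ r₁ * (((1 - ε/2)/2) / (1 - (1 - ε/2)/2)) ^ r₂)) :=
    hmul.mul_left _
  have hle : ∀ m : ℕ × ℕ,
      (binomZ ((n : ℤ) - m.1 - m.2 + r₁ + r₂ + χ) ((r₁ : ℤ) + r₂ + χ) : ℝ)
        * (binomZ ((m.1 : ℤ) - 1) ((r₁ : ℤ) - 1) : ℝ)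
        * (binomZ ((m.2 : ℤ) - 1) ((r₂ : ℤ) - 1) : ℝ)
        * (2 : ℝ) ^ ((m.1 : ℤ) - n)
        * (1 - ε / 2) ^ (m.1 + m.2)
      ≤ 2 ^ (r₁ + r₂ + χ) * (f₁ m.1 * f₂ m.2) := by
    intro m
    have hA := keyAP n (r₁ + r₂ + χ) m.1 m.2
      ((n : ℤ) - m.1 - m.2 + r₁ + r₂ + χ) ((r₁ : ℤ) + r₂ + χ)
      (by push_cast; ring) (by push_cast; ring)
    have hnn : (0:ℝ) ≤ (binomZ ((m.1 : ℤ) - 1) ((r₁ : ℤ) - 1) : ℝ) * (1 - ε/2) ^ m.1 *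
        ((binomZ ((m.2 : ℤ) - 1) ((r₂ : ℤ) - 1) : ℝ) * (1 - ε/2) ^ m.2) :=
      mul_nonneg (mul_nonneg (Nat.cast_nonneg _) (pow_nonneg hq0 _))
        (mul_nonneg (Nat.cast_nonneg _) (pow_nonneg hq0 _))
    calc (binomZ ((n : ℤ) - m.1 - m.2 + r₁ + r₂ + χ) ((r₁ : ℤ) + r₂ + χ) : ℝ)
        * (binomZ ((m.1 : ℤ) - 1) ((r₁ : ℤ) - 1) : ℝ)
        * (binomZ ((m.2 : ℤ) - 1) ((r₂ : ℤ) - 1) : ℝ)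
        * (2 : ℝ) ^ ((m.1 : ℤ) - n)
        * (1 - ε / 2) ^ (m.1 + m.2)
        = ((binomZ ((n : ℤ) - m.1 - m.2 + r₁ + r₂ + χ) ((r₁ : ℤ) + r₂ + χ) : ℝ)
            * (2 : ℝ) ^ ((m.1 : ℤ) - n))
          * ((binomZ ((m.1 : ℤ) - 1) ((r₁ : ℤ) - 1) : ℝ) * (1 - ε/2) ^ m.1 *
             ((binomZ ((m.2 : ℤ) - 1) ((r₂ : ℤ) - 1) : ℝ) * (1 - ε/2) ^ m.2)) := by
          rw [pow_add]; ring
      _ ≤ (2 ^ (r₁ + r₂ + χ) * (1/2:ℝ) ^ m.2)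
          * ((binomZ ((m.1 : ℤ) - 1) ((r₁ : ℤ) - 1) : ℝ) * (1 - ε/2) ^ m.1 *
             ((binomZ ((m.2 : ℤ) - 1) ((r₂ : ℤ) - 1) : ℝ) * (1 - ε/2) ^ m.2)) :=
          mul_le_mul_of_nonneg_right hA hnn
      _ = 2 ^ (r₁ + r₂ + χ) * (f₁ m.1 * f₂ m.2) := by
          rw [hf₁, hf₂]
          simp only []
          rw [show ((1 - ε/2)/2 : ℝ) = (1 - ε/2) * (1/2) by ring, mul_pow]
          ring
  have hsummable : Summable (fun m : ℕ × ℕ =>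
      (binomZ ((n : ℤ) - m.1 - m.2 + r₁ + r₂ + χ) ((r₁ : ℤ) + r₂ + χ) : ℝ)
        * (binomZ ((m.1 : ℤ) - 1) ((r₁ : ℤ) - 1) : ℝ)
        * (binomZ ((m.2 : ℤ) - 1) ((r₂ : ℤ) - 1) : ℝ)
        * (2 : ℝ) ^ ((m.1 : ℤ) - n)
        * (1 - ε / 2) ^ (m.1 + m.2)) := by
    apply Summable.of_nonneg_of_le _ hle hg.summable
    intro m
    have : (0:ℝ) ≤ (2 : ℝ) ^ ((m.1 : ℤ) - n) := by positivity
    exact mul_nonneg (mul_nonneg (mul_nonneg (mul_nonneg (Nat.cast_nonneg _)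
      (Nat.cast_nonneg _)) (Nat.cast_nonneg _)) this) (pow_nonneg hq0 _)
  have h1mq : (1:ℝ) - (1 - ε/2) = ε/2 := by ring
  calc Fsum ε n χ r₁ r₂ ≤ 2 ^ (r₁ + r₂ + χ) *
        (((1 - ε/2) / (1 - (1 - ε/2))) ^ r₁ * (((1 - ε/2)/2) / (1 - (1 - ε/2)/2)) ^ r₂) := by
        rw [Fsum]
        rw [← hg.tsum_eq]
        exact Summable.tsum_le_tsum hle hsummable hg.summable
    _ = 2 ^ (r₁ + r₂ + χ) *
        (((1 - ε/2) / (ε/2)) ^ r₁ * (((1 - ε/2)/2) / (1 - (1 - ε/2)/2)) ^ r₂) := by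
        rw [h1mq]

set_option maxHeartbeats 1000000 in
lemma Fsum_one_zero_le (ε : ℝ) (hε0 : 0 < ε) (hε1 : ε < 1) (n χ : ℕ) :
    Fsum ε n χ 1 0 ≤ 2 ^ (χ + 2) := by
  have hq0 : (0:ℝ) ≤ 1 - ε/2 := by linarith
  have hq1 : (1 - ε/2 : ℝ) ≤ 1 := by linarith
  set G : ℕ → ℝ := fun m₁ =>
    (binomZ ((n:ℤ) - m₁ + 1 + χ) (1 + (χ:ℤ)) : ℝ) * (2:ℝ) ^ ((m₁:ℤ) - n) with hG
  have hG0 : ∀ m₁, 0 ≤ G m₁ := fun m₁ => mul_nonneg (Nat.cast_nonneg _) (by positivity)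
  have hGfin : ∀ m₁ ∉ Finset.range (n+1), G m₁ = 0 := by
    intro m₁ hm
    rw [Finset.mem_range, not_lt] at hm
    have : binomZ ((n:ℤ) - m₁ + 1 + χ) (1 + (χ:ℤ)) = 0 :=
      binomZ_eq_zero _ _ (by positivity) (by omega)
    simp [hG, this]
  have hGsum : Summable G := summable_of_ne_finset_zero hGfin
  have hInd : HasSum (fun k : ℕ => if k = 0 then (1:ℝ) else 0) 1 := hasSum_ite_eq 0 1
  have hs : Summable (fun m : ℕ × ℕ => G m.1 * (if m.2 = 0 then (1:ℝ) else 0)) :=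
    hGsum.mul_of_nonneg hInd.summable hG0 (fun k => by dsimp only; split <;> norm_num)
  have htsum_g : ∑' m : ℕ × ℕ, G m.1 * (if m.2 = 0 then (1:ℝ) else 0)
      = (∑' m₁, G m₁) * 1 :=
    (hGsum.hasSum.mul_eq hInd hs.hasSum).symm
  have hle : ∀ m : ℕ × ℕ,
      (binomZ ((n : ℤ) - m.1 - m.2 + (1:ℕ) + (0:ℕ) + χ) (((1:ℕ) : ℤ) + (0:ℕ) + χ) : ℝ)
        * (binomZ ((m.1 : ℤ) - 1) (((1:ℕ) : ℤ) - 1) : ℝ)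
        * (binomZ ((m.2 : ℤ) - 1) (((0:ℕ) : ℤ) - 1) : ℝ)
        * (2 : ℝ) ^ ((m.1 : ℤ) - n)
        * (1 - ε / 2) ^ (m.1 + m.2)
      ≤ G m.1 * (if m.2 = 0 then (1:ℝ) else 0) := by
    intro m
    by_cases h2 : m.2 = 0
    · have hB2 : (binomZ ((m.2:ℤ) - 1) (((0:ℕ):ℤ) - 1) : ℝ) = 1 := by
        rw [h2]; norm_num [binomZ]
      have harg : (n:ℤ) - m.1 - m.2 + ((1:ℕ):ℤ) + ((0:ℕ):ℤ) + χ = (n:ℤ) - m.1 + 1 + χ := by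
        rw [h2]; push_cast; ring
      have hargb : ((1:ℕ):ℤ) + ((0:ℕ):ℤ) + (χ:ℤ) = 1 + (χ:ℤ) := by push_cast; ring
      have hB1 : (binomZ ((m.1:ℤ) - 1) (((1:ℕ):ℤ) - 1) : ℝ) ≤ 1 := by
        rw [show ((1:ℕ):ℤ) - 1 = 0 by norm_num]
        exact binomZ_zero_le_one _
      have hB1' : (0:ℝ) ≤ (binomZ ((m.1:ℤ) - 1) (((1:ℕ):ℤ) - 1) : ℝ) := Nat.cast_nonneg _
      have hqle : (1 - ε/2 : ℝ) ^ (m.1 + m.2) ≤ 1 := pow_le_one₀ hq0 hq1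
      have hqn : (0:ℝ) ≤ (1 - ε/2 : ℝ) ^ (m.1 + m.2) := pow_nonneg hq0 _
      rw [harg, hargb, hB2, if_pos h2]
      calc (binomZ ((n:ℤ) - m.1 + 1 + χ) (1 + (χ:ℤ)) : ℝ)
            * (binomZ ((m.1:ℤ) - 1) (((1:ℕ):ℤ) - 1) : ℝ) * 1
            * (2:ℝ) ^ ((m.1:ℤ) - n) * (1 - ε/2) ^ (m.1 + m.2)
          = ((binomZ ((n:ℤ) - m.1 + 1 + χ) (1 + (χ:ℤ)) : ℝ) * (2:ℝ) ^ ((m.1:ℤ) - n))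
            * ((binomZ ((m.1:ℤ) - 1) (((1:ℕ):ℤ) - 1) : ℝ) * (1 - ε/2) ^ (m.1 + m.2)) := by
            ring
        _ ≤ ((binomZ ((n:ℤ) - m.1 + 1 + χ) (1 + (χ:ℤ)) : ℝ) * (2:ℝ) ^ ((m.1:ℤ) - n))
            * (1 * 1) :=
            mul_le_mul_of_nonneg_left (mul_le_mul hB1 hqle hqn (by norm_num))
              (mul_nonneg (Nat.cast_nonneg _) (by positivity))
        _ = G m.1 * 1 := by rw [hG]; ring
    · have hB2 : (binomZ ((m.2:ℤ) - 1) (((0:ℕ):ℤ) - 1) : ℝ) = 0 := by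
        have : binomZ ((m.2:ℤ) - 1) (((0:ℕ):ℤ) - 1) = 0 := by
          unfold binomZ
          rw [if_pos (by norm_num), if_neg (by omega)]
        rw [this]; norm_num
      rw [hB2, if_neg h2]
      simp
  have hGle : ∑' m₁, G m₁ ≤ 2 ^ (χ + 2) := by
    have hchoose : HasSum (fun k : ℕ => ((k + (χ+1)).choose (χ+1) : ℝ) * (1/2:ℝ) ^ k)
        (1 / (1 - 1/2) ^ ((χ+1) + 1)) :=
      hasSum_choose_mul_geometric_of_norm_lt_one (χ+1)
        (by rw [Real.norm_eq_abs, abs_of_nonneg (by norm_num : (0:ℝ) ≤ 1/2)]; norm_num)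
    have hval : (1:ℝ) / (1 - 1/2) ^ ((χ+1) + 1) = 2 ^ (χ + 2) := by
      rw [show (1:ℝ) - 1/2 = 1/2 by norm_num, one_div, one_div, inv_pow, inv_inv]
    calc ∑' m₁, G m₁ = ∑ m₁ ∈ Finset.range (n+1), G m₁ := tsum_eq_sum hGfin
      _ = ∑ k ∈ Finset.range (n+1), G (n + 1 - 1 - k) :=
          (Finset.sum_range_reflect G (n+1)).symm
      _ ≤ ∑ k ∈ Finset.range (n+1), ((k + (χ+1)).choose (χ+1) : ℝ) * (1/2:ℝ) ^ k := by
          apply Finset.sum_le_sum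
          intro k hk
          rw [Finset.mem_range] at hk
          have h1 : (n + 1 - 1 - k : ℕ) = n - k := by omega
          rw [h1, hG]
          simp only []
          have hcast : ((n - k : ℕ) : ℤ) = (n:ℤ) - k := by omega
          have harg : (n:ℤ) - ((n - k:ℕ):ℤ) + 1 + χ = (k:ℤ) + 1 + χ := by rw [hcast]; ring
          rw [harg]
          have hbz : binomZ ((k:ℤ) + 1 + χ) (1 + (χ:ℤ)) = (k + (χ+1)).choose (χ+1) := by
            unfold binomZ
            rw [if_neg (by omega), if_neg (by omega)]
            congr 1 <;> omega
          rw [hbz]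
          have hpow : (2:ℝ) ^ (((n - k:ℕ):ℤ) - n) = (1/2:ℝ) ^ k := by
            rw [hcast, show (n:ℤ) - k - n = -(k:ℤ) by ring, zpow_neg, zpow_natCast,
              one_div, inv_pow]
          rw [hpow]
      _ ≤ ∑' k, ((k + (χ+1)).choose (χ+1) : ℝ) * (1/2:ℝ) ^ k :=
          Summable.sum_le_tsum _ (fun k _ => by positivity) hchoose.summable
      _ = 2 ^ (χ + 2) := by rw [hchoose.tsum_eq, hval]
  have hnonneg : ∀ m : ℕ × ℕ,
      (0:ℝ) ≤ (binomZ ((n : ℤ) - m.1 - m.2 + (1:ℕ) + (0:ℕ) + χ) (((1:ℕ) : ℤ) + (0:ℕ) + χ) : ℝ)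
        * (binomZ ((m.1 : ℤ) - 1) (((1:ℕ) : ℤ) - 1) : ℝ)
        * (binomZ ((m.2 : ℤ) - 1) (((0:ℕ) : ℤ) - 1) : ℝ)
        * (2 : ℝ) ^ ((m.1 : ℤ) - n)
        * (1 - ε / 2) ^ (m.1 + m.2) := by
    intro m
    have h2p : (0:ℝ) ≤ (2 : ℝ) ^ ((m.1 : ℤ) - n) := by positivity
    exact mul_nonneg (mul_nonneg (mul_nonneg (mul_nonneg (Nat.cast_nonneg _)
      (Nat.cast_nonneg _)) (Nat.cast_nonneg _)) h2p) (pow_nonneg hq0 _)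
  rw [Fsum]
  calc (∑' m : ℕ × ℕ,
      (binomZ ((n : ℤ) - m.1 - m.2 + (1:ℕ) + (0:ℕ) + χ) (((1:ℕ) : ℤ) + (0:ℕ) + χ) : ℝ)
        * (binomZ ((m.1 : ℤ) - 1) (((1:ℕ) : ℤ) - 1) : ℝ)
        * (binomZ ((m.2 : ℤ) - 1) (((0:ℕ) : ℤ) - 1) : ℝ)
        * (2 : ℝ) ^ ((m.1 : ℤ) - n)
        * (1 - ε / 2) ^ (m.1 + m.2))
      ≤ ∑' m : ℕ × ℕ, G m.1 * (if m.2 = 0 then (1:ℝ) else 0) :=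
      Summable.tsum_le_tsum hle (Summable.of_nonneg_of_le hnonneg hle hs) hs
    _ = (∑' m₁, G m₁) * 1 := htsum_g
    _ ≤ 2 ^ (χ + 2) := by rw [mul_one]; exact hGle

/-- **Lemma.** For `ε ∈ (0,1)` and nonnegative integers `n, χ`:
(i) `F(r₁,r₂) ≤ 2^{2r₁+2r₂+χ} ε^{-r₁}` for all `r₁, r₂ ≥ 0`;
(ii) `F(1,0) ≤ 2^{χ+2}`; (iii) `F(0,1) ≤ 2^{χ+1}`. -/
theorem F_bounds (ε : ℝ) (hε0 : 0 < ε) (hε1 : ε < 1) (n χ : ℕ) :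
    (∀ r₁ r₂ : ℕ, Fsum ε n χ r₁ r₂ ≤ 2 ^ (2 * r₁ + 2 * r₂ + χ) * ε ^ (-(r₁ : ℤ))) ∧
    Fsum ε n χ 1 0 ≤ 2 ^ (χ + 2) ∧
    Fsum ε n χ 0 1 ≤ 2 ^ (χ + 1) := by
  have hc0 : (0:ℝ) ≤ ((1 - ε/2)/2)/(1 - (1 - ε/2)/2) :=
    div_nonneg (by linarith) (by linarith)
  have hc1 : ((1 - ε/2)/2)/(1 - (1 - ε/2)/2) ≤ 1 := by
    rw [div_le_one (by linarith)]; linarith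
  refine ⟨?_, Fsum_one_zero_le ε hε0 hε1 n χ, ?_⟩
  · intro r₁ r₂
    have hgen := Fsum_le_general ε hε0 hε1 n χ r₁ r₂
    have hbase0 : (0:ℝ) ≤ (1 - ε/2)/(ε/2) := div_nonneg (by linarith) (by linarith)
    have hX : ((1 - ε/2)/(ε/2)) ≤ 2/ε := by
      rw [div_le_div_iff₀ (by linarith) hε0]
      nlinarith
    have hXp : ((1 - ε/2)/(ε/2))^r₁ ≤ (2/ε)^r₁ := pow_le_pow_left₀ hbase0 hX r₁
    have hYp : (((1 - ε/2)/2)/(1 - (1 - ε/2)/2))^r₂ ≤ 1 := pow_le_one₀ hc0 hc1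
    have hE0 : (0:ℝ) ≤ ε ^ (-(r₁:ℤ)) := zpow_nonneg hε0.le _
    have h2e : (2/ε)^r₁ = 2^r₁ * ε ^ (-(r₁:ℤ)) := by
      rw [div_pow, zpow_neg, zpow_natCast, div_eq_mul_inv]
    calc Fsum ε n χ r₁ r₂
        ≤ 2^(r₁+r₂+χ) * (((1-ε/2)/(ε/2))^r₁ * (((1-ε/2)/2)/(1-(1-ε/2)/2))^r₂) := hgen
      _ ≤ 2^(r₁+r₂+χ) * ((2/ε)^r₁ * 1) := by
          apply mul_le_mul_of_nonneg_left _ (by positivity)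
          exact mul_le_mul hXp hYp (pow_nonneg hc0 _) (by positivity)
      _ = 2^(r₁+r₂+χ) * (2^r₁ * ε ^ (-(r₁:ℤ))) := by rw [h2e, mul_one]
      _ = 2^(r₁+r₂+χ+r₁) * ε ^ (-(r₁:ℤ)) := by rw [pow_add]; ring
      _ ≤ 2^(2*r₁+2*r₂+χ) * ε ^ (-(r₁:ℤ)) := by
          apply mul_le_mul_of_nonneg_right _ hE0
          exact pow_le_pow_right₀ (by norm_num) (by omega)
  · have hgen := Fsum_le_general ε hε0 hε1 n χ 0 1
    calc Fsum ε n χ 0 1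
        ≤ 2^(0+1+χ) * (((1-ε/2)/(ε/2))^0 * (((1-ε/2)/2)/(1-(1-ε/2)/2))^1) := hgen
      _ = 2^(χ+1) * (((1-ε/2)/2)/(1-(1-ε/2)/2)) := by
          rw [pow_zero, pow_one, show 0+1+χ = χ+1 by omega]; ring
      _ ≤ 2^(χ+1) * 1 := mul_le_mul_of_nonneg_left hc1 (by positivity)
      _ = 2^(χ+1) := mul_one _
end

section
/- Let A ⊆ V be the disjoint union of k pairwise non-adjacent odd clusters A₁, …, A_k in T_d. Let B ∈ ℬ(A) and let C be the set induced by B. Then for every x ∈ C \ A there exist 1 ≤ i < j ≤ k such that dist(A_i, x) = dist(A_j, x) = 2. -/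
open MeasureTheory

/-- The graph distance from the set `A` to the point `x`. -/
noncomputable def setDist {V : Type} (G : SimpleGraph V) (A : Set V) (x : V) : ℕ :=
  sInf ((fun a => G.dist a x) '' A)

/-- The set `W` of vertices which are at graph distance 2 from (at least) two distinct
clusters of the family `As`. -/
noncomputable def Wset {V : Type} (G : SimpleGraph V) {k : ℕ} (As : Fin k → Set V) :
    Set V :=
  {x | ∃ i j : Fin k, i < j ∧ setDist G (As i) x = 2 ∧ setDist G (As j) x = 2}

private lemma tree_path_len {V : Type} {G : SimpleGraph V} (hacyc : G.IsAcyclic)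
    {u v : V} (p : G.Walk u v) (hp : p.IsPath) : p.length = G.dist u v := by
  obtain ⟨q, hqp, hql⟩ := SimpleGraph.Reachable.exists_path_of_dist ⟨p⟩
  have := hacyc.path_unique ⟨p, hp⟩ ⟨q, hqp⟩
  rw [Subtype.mk.injEq] at this
  rw [this, hql]

private lemma adj_dist_flip {V : Type} {G : SimpleGraph V} (hconn : G.Connected)
    (hacyc : G.IsAcyclic) (o : V) {u v : V} (h : G.Adj u v) :
    G.dist o u + 1 = G.dist o v ∨ G.dist o v + 1 = G.dist o u := by
  haveI := Classical.decEq V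
  obtain ⟨p, hp, hpl⟩ := hconn.exists_path_of_dist o u
  by_cases hv : v ∈ p.support
  · right
    have h1 := hp.takeUntil hv
    have h2 := hp.dropUntil hv
    have e1 := tree_path_len hacyc _ h1
    have e2 := tree_path_len hacyc _ h2
    have e3 : G.dist v u = 1 := SimpleGraph.dist_eq_one_iff_adj.mpr h.symm
    have e4 := congrArg SimpleGraph.Walk.length (p.take_spec hv)
    rw [SimpleGraph.Walk.length_append] at e4
    omega
  · left
    have h1 : (p.concat h).IsPath := by
      rw [SimpleGraph.Walk.isPath_def, SimpleGraph.Walk.support_concat]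
      rw [List.nodup_append']
      refine ⟨hp.support_nodup, List.nodup_singleton v, ?_⟩
      intro a ha hb
      rw [List.mem_singleton] at hb
      subst hb; exact hv ha
    have := tree_path_len hacyc _ h1
    rw [SimpleGraph.Walk.length_concat, hpl] at this
    exact this

private lemma adj_parity_flip {V : Type} {G : SimpleGraph V} (hconn : G.Connected)
    (hacyc : G.IsAcyclic) (o : V) {u v : V} (h : G.Adj u v) :
    (Odd (G.dist o u) ↔ Even (G.dist o v)) := by
  rcases adj_dist_flip hconn hacyc o h with h1 | h1 <;>
    · rw [Nat.odd_iff, Nat.even_iff]; omega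

private lemma exists_mid_of_dist_two {V : Type} {G : SimpleGraph V} (hconn : G.Connected)
    {b c : V} (h : G.dist b c = 2) : ∃ w, G.Adj b w ∧ G.Adj w c := by
  obtain ⟨p, hp⟩ := hconn.exists_walk_length_eq_dist b c
  rw [h] at hp
  cases p with
  | nil => simp at hp
  | cons h1 q =>
    cases q with
    | nil => simp at hp
    | cons h2 r =>
      simp only [SimpleGraph.Walk.length_cons] at hp
      have hr : r.length = 0 := by omega
      have := SimpleGraph.Walk.eq_of_length_eq_zero hr
      subst this
      exact ⟨_, h1, h2⟩

/-- **Lemma.** On the infinite `d`-regular tree, let `A` be the disjoint union of `k`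
pairwise non-adjacent odd clusters `A₁, …, A_k`, let `B ∈ ℬ(A)` and let `C` be the set
induced by `B`.  Then every `x ∈ C \ A` is at graph distance `2` from (at least) two
distinct clusters `A_i, A_j`. -/
theorem extra_points_lemma (d : ℕ) (hd : 3 ≤ d)
    (V : Type) (G : SimpleGraph V) (o : V)
    (hconn : G.Connected) (hacyc : G.IsAcyclic)
    (hreg : ∀ v : V, (G.neighborSet v).ncard = d)
    (k : ℕ) (As : Fin k → Set V)
    (hAs : ∀ i, IsOddCluster G o (As i))
    (hAadj : ∀ i j, i ≠ j → NonAdj G (As i) (As j))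
    (B : Set V) (hB : B ∈ minimalB G (⋃ i, As i)) :
    ∀ x ∈ inducedSet G B \ ⋃ i, As i,
      ∃ i j : Fin k, i < j ∧ setDist G (As i) x = 2 ∧ setDist G (As j) x = 2 := by
  rintro x ⟨⟨hxB, y, hyB, z, hzB, hyz, hxy, hxz⟩, hxA⟩
  have hBN : B ⊆ nbhd G (⋃ i, As i) := hB.1
  obtain ⟨a, haA, hay⟩ := hBN hyB
  obtain ⟨a', ha'A, ha'z⟩ := hBN hzB
  rw [Set.mem_iUnion] at haA ha'A hxA
  push_neg at hxA
  obtain ⟨i, hai⟩ := haA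
  obtain ⟨j, ha'j⟩ := ha'A
  -- parity facts
  have hodd : ∀ (t : Fin k), ∀ w ∈ As t, Odd (G.dist o w) := fun t w hw => (hAs t).2.2.1 w hw
  have hyeven : Even (G.dist o y) := by
    have := adj_parity_flip hconn hacyc o hay
    exact this.mp (hodd i a hai)
  have hxodd : Odd (G.dist o x) := by
    have := adj_parity_flip hconn hacyc o hxy
    rw [this]; exact hyeven
  have hzeven : Even (G.dist o z) := by
    have := adj_parity_flip hconn hacyc o hxz
    exact this.mp hxodd
  -- no member of any cluster is adjacent to x, and none equals x
  have hnadj : ∀ (t : Fin k), ∀ w ∈ As t, ¬ G.Adj w x := by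
    intro t w hw hadj
    have := (adj_parity_flip hconn hacyc o hadj).mp (hodd t w hw)
    exact (Nat.not_even_iff_odd.mpr hxodd) this
  have hlow : ∀ (t : Fin k), ∀ w ∈ As t, 2 ≤ G.dist w x := by
    intro t w hw
    have h0 : G.dist w x ≠ 0 := by
      intro h
      rcases SimpleGraph.dist_eq_zero_iff_eq_or_not_reachable.mp h with h | h
      · exact hxA t (h ▸ hw)
      · exact h (hconn w x)
    have h1 : G.dist w x ≠ 1 := by
      intro h
      exact hnadj t w hw (SimpleGraph.dist_eq_one_iff_adj.mp h)
    omega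
  -- distance exactly 2 from a and a'
  have hdist2 : ∀ (t : Fin k), ∀ w ∈ As t, ∀ b : V, G.Adj w b → G.Adj x b →
      setDist G (As t) x = 2 := by
    intro t w hw b hwb hxb
    have hle : G.dist w x ≤ 2 := by
      have := SimpleGraph.dist_le (SimpleGraph.Walk.cons hwb
        (SimpleGraph.Walk.cons hxb.symm SimpleGraph.Walk.nil))
      simpa using this
    have heq : G.dist w x = 2 := le_antisymm hle (hlow t w hw)
    have hmem : 2 ∈ ((fun a => G.dist a x) '' (As t)) := ⟨w, hw, heq⟩
    refine le_antisymm (Nat.sInf_le hmem) (le_csInf ⟨2, hmem⟩ ?_)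
    rintro n ⟨c, hc, rfl⟩
    exact hlow t c hc
  have hsdi : setDist G (As i) x = 2 := hdist2 i a hai y hay hxy
  have hsdj : setDist G (As j) x = 2 := hdist2 j a' ha'j z ha'z hxz
  -- i ≠ j via the bridge argument
  have hne : i ≠ j := by
    intro hij
    subst hij
    set S := As i with hS
    have hbridge := (SimpleGraph.isAcyclic_iff_forall_adj_isBridge.mp hacyc) hxy
    rw [SimpleGraph.isBridge_iff] at hbridge
    set G' : SimpleGraph V := G \ SimpleGraph.fromEdgeSet {s(x, y)} with hG'
    have hG'adj : ∀ u w : V, G.Adj u w → s(u, w) ≠ s(x, y) → G'.Adj u w := by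
      intro u w huw hne
      rw [hG', SimpleGraph.sdiff_adj, SimpleGraph.fromEdgeSet_adj]
      exact ⟨huw, fun h => hne h.1⟩
    have hSnex : ∀ w ∈ S, w ≠ x := fun w hw h => hxA i (h ▸ hw)
    have hSney : ∀ w ∈ S, w ≠ y := by
      intro w hw h
      exact (Nat.not_even_iff_odd.mpr (hodd i w hw)) (h ▸ hyeven)
    have hxney : x ≠ y := hxy.ne
    -- a step of the DN relation preserves reachability from y in G'
    have step : ∀ b c : V, b ∈ S → c ∈ S → G.dist b c = 2 → G'.Reachable b c := by
      intro b c hb hc hbc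
      obtain ⟨w, hbw, hwc⟩ := exists_mid_of_dist_two hconn hbc
      have e1 : G'.Adj b w := by
        refine hG'adj b w hbw ?_
        intro h
        rcases Sym2.eq_iff.mp h with ⟨h1, _⟩ | ⟨h1, _⟩
        · exact hSnex b hb h1
        · exact hSney b hb h1
      have e2 : G'.Adj w c := by
        refine hG'adj w c hwc ?_
        intro h
        rcases Sym2.eq_iff.mp h with ⟨_, h2⟩ | ⟨_, h2⟩
        · exact hSney c hc h2
        · exact hSnex c hc h2
      exact e1.reachable.trans e2.reachable
    have hya : G'.Adj y a := by
      refine hG'adj y a hay.symm ?_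
      intro h
      rcases Sym2.eq_iff.mp h with ⟨h1, _⟩ | ⟨_, h2⟩
      · exact hxney h1.symm
      · exact hSnex a hai h2
    have key : ∀ c, Relation.ReflTransGen
        (fun u v => u ∈ S ∧ v ∈ S ∧ G.dist u v = 2) a c → G'.Reachable y c := by
      intro c hc
      induction hc with
      | refl => exact hya.reachable
      | tail hrel hstep ih =>
        obtain ⟨hb, hc2, hbc⟩ := hstep
        exact ih.trans (step _ _ hb hc2 hbc)
    have hya' : G'.Reachable y a' := key a' ((hAs i).2.2.2 a hai a' ha'j)
    have ha'z' : G'.Adj a' z := by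
      refine hG'adj a' z ha'z ?_
      intro h
      rcases Sym2.eq_iff.mp h with ⟨h1, _⟩ | ⟨h1, _⟩
      · exact hSnex a' ha'j h1
      · exact hSney a' ha'j h1
    have hzx : G'.Adj z x := by
      refine hG'adj z x hxz.symm ?_
      intro h
      rcases Sym2.eq_iff.mp h with ⟨_, h2⟩ | ⟨h1, _⟩
      · exact hxney h2
      · exact hyz h1.symm
    exact hbridge (((hya'.trans ha'z'.reachable).trans hzx.reachable).symm)
  rcases lt_or_gt_of_ne hne with h | h
  · exact ⟨i, j, h, hsdi, hsdj⟩
  · exact ⟨j, i, h, hsdj, hsdi⟩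
end

section
/- Let A ⊆ V be the disjoint union of k ≥ 1 pairwise non-adjacent odd clusters A₁, …, A_k in T_d, and let W = {x ∈ V : ∃ 1 ≤ i < j ≤ k with dist(A_i, x) = dist(A_j, x) = 2}. Then |W| ≤ k − 1. -/
open MeasureTheory

section TreeHelpers

open SimpleGraph

variable {V : Type} {G : SimpleGraph V}

/-- In a tree, every path between two vertices has length equal to the distance. -/
lemma tree_path_length (hT : G.IsTree) {u v : V} (p : G.Walk u v) (hp : p.IsPath) :
    p.length = G.dist u v := by
  obtain ⟨q, hq, hql⟩ := hT.isConnected.exists_path_of_dist u v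
  rw [(hT.existsUnique_path u v).unique hp hq, hql]

/-- A vertex on a geodesic splits the distance additively. -/
lemma dist_split (hconn : G.Connected) {u v z : V} (p : G.Walk u v)
    (hl : p.length = G.dist u v) (hz : z ∈ p.support) :
    G.dist u z + G.dist z v = G.dist u v := by
  classical
  have hspec := p.take_spec hz
  have hlen : (p.takeUntil z hz).length + (p.dropUntil z hz).length = p.length := by
    rw [← Walk.length_append, hspec]
  have h1 : G.dist u z ≤ (p.takeUntil z hz).length := dist_le _
  have h2 : G.dist z v ≤ (p.dropUntil z hz).length := dist_le _
  have h3 : G.dist u v ≤ G.dist u z + G.dist z v := hconn.dist_triangle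
  omega

/-- Gate existence: if `u ≠ v` there is a neighbor of `u` strictly closer to `v`. -/
lemma gate_exists (hconn : G.Connected) {u v : V} (h : u ≠ v) :
    ∃ m, G.Adj u m ∧ G.dist m v + 1 = G.dist u v := by
  obtain ⟨p, hp, hl⟩ := hconn.exists_path_of_dist u v
  have hd : 0 < G.dist u v := hconn.pos_dist_of_ne h
  cases p with
  | nil => simp at hl; rw [SimpleGraph.dist_self] at hd; omega
  | cons hadj q =>
    rename_i m
    refine ⟨m, hadj, ?_⟩
    have h1 : G.dist m v ≤ q.length := dist_le _
    have h2 : G.dist u v ≤ 1 + G.dist m v := by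
      have := hconn.dist_triangle (u := u) (v := m) (w := v)
      have : G.dist u m ≤ 1 := by
        rw [show (1:ℕ) = (Walk.cons hadj Walk.nil : G.Walk u m).length by simp]
        exact dist_le _
      omega
    simp only [Walk.length_cons] at hl
    omega

/-- Given a gate `m`, there is a geodesic path from `u` to `v` whose second vertex is `m`. -/
lemma gate_path (hconn : G.Connected) {u v m : V} (hadj : G.Adj u m)
    (hm : G.dist m v + 1 = G.dist u v) :
    ∃ p : G.Walk u v, p.IsPath ∧ p.length = G.dist u v ∧ p.getVert 1 = m := by
  obtain ⟨q, hq, hql⟩ := hconn.exists_path_of_dist m v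
  have hu : u ∉ q.support := by
    intro hu
    have := dist_split hconn q hql hu
    have hmu : 0 < G.dist m u := hconn.pos_dist_of_ne hadj.ne'
    omega
  refine ⟨Walk.cons hadj q, ?_, ?_, ?_⟩
  · exact hq.cons hu
  · simp only [Walk.length_cons, hql]; omega
  · simp [Walk.getVert_cons_succ, Walk.getVert_zero]

/-- Gate uniqueness in a tree. -/
lemma gate_unique (hT : G.IsTree) {u v m m' : V} (hadj : G.Adj u m) (hadj' : G.Adj u m')
    (hm : G.dist m v + 1 = G.dist u v) (hm' : G.dist m' v + 1 = G.dist u v) : m = m' := by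
  obtain ⟨p, hp, -, hp1⟩ := gate_path hT.isConnected hadj hm
  obtain ⟨q, hq, -, hq1⟩ := gate_path hT.isConnected hadj' hm'
  have : p = q := (hT.existsUnique_path u v).unique hp hq
  rw [← hp1, ← hq1, this]

/-- Additivity across a branch point: if `x` is reached through gate `m` and `y` through a
different gate `m'`, then `u` lies on the geodesic from `x` to `y`. -/
lemma dist_add_of_ne_gate (hT : G.IsTree) {u x y m m' : V} (hadj : G.Adj u m) (hadj' : G.Adj u m')
    (hne : m ≠ m') (hm : G.dist m x + 1 = G.dist u x) (hm' : G.dist m' y + 1 = G.dist u y) :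
    G.dist x y = G.dist x u + G.dist u y := by
  classical
  have hconn := hT.isConnected
  have dc : ∀ a b : V, G.dist a b = G.dist b a := fun a b => SimpleGraph.dist_comm
  obtain ⟨pm, hpm, hpml⟩ := hconn.exists_path_of_dist m x
  obtain ⟨qm, hqm, hqml⟩ := hconn.exists_path_of_dist m' y
  have hu1 : u ∉ pm.support := by
    intro hu
    have := dist_split hconn pm hpml hu
    have : 0 < G.dist m u := hconn.pos_dist_of_ne hadj.ne'
    omega
  have hu2 : u ∉ qm.support := by
    intro hu
    have := dist_split hconn qm hqml hu
    have : 0 < G.dist m' u := hconn.pos_dist_of_ne hadj'.ne'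
    omega
  have key : ∀ z, z ∈ pm.support → z ∈ qm.support → False := by
    intro z hz1 hz2
    have h1 := dist_split hconn pm hpml hz1
    have h2 := dist_split hconn qm hqml hz2
    have hum : G.dist u m = 1 := SimpleGraph.dist_eq_one_iff_adj.mpr hadj
    have hum' : G.dist u m' = 1 := SimpleGraph.dist_eq_one_iff_adj.mpr hadj'
    have g1 : G.dist m z + 1 = G.dist u z := by
      have hle : G.dist u z ≤ G.dist u m + G.dist m z := hconn.dist_triangle
      have hge : ¬ (G.dist u z ≤ G.dist m z) := by
        intro hc
        have t1 : G.dist u x ≤ G.dist u z + G.dist z x := hconn.dist_triangle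
        omega
      omega
    have g2 : G.dist m' z + 1 = G.dist u z := by
      have hle : G.dist u z ≤ G.dist u m' + G.dist m' z := hconn.dist_triangle
      have hge : ¬ (G.dist u z ≤ G.dist m' z) := by
        intro hc
        have t1 : G.dist u y ≤ G.dist u z + G.dist z y := hconn.dist_triangle
        omega
      omega
    exact hne (gate_unique hT hadj hadj' g1 g2)
  have hp : ((Walk.cons hadj pm).reverse.append (Walk.cons hadj' qm)).IsPath := by
    apply Walk.IsPath.mk'
    rw [Walk.support_append, Walk.support_reverse, Walk.support_cons, Walk.support_cons]
    simp only [List.tail_cons]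
    rw [List.nodup_append]
    refine ⟨List.nodup_reverse.mpr ?_, hqm.support_nodup, ?_⟩
    · simp only [List.nodup_cons]; exact ⟨hu1, hpm.support_nodup⟩
    intro z hz1 z' hz2 hzz; subst z'
    rw [List.mem_reverse, List.mem_cons] at hz1
    rcases hz1 with rfl | hz1
    · exact hu2 hz2
    · exact key z hz1 hz2
  have := tree_path_length hT _ hp
  rw [Walk.length_append, Walk.length_reverse, Walk.length_cons, Walk.length_cons,
    hpml, hqml] at this
  rw [dc x u]
  omega

/-- In a tree, adjacent vertices have different distances to any root. -/
lemma adj_dist_ne (hT : G.IsTree) (o : V) {x y : V} (hadj : G.Adj x y) :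
    G.dist o x ≠ G.dist o y := by
  classical
  intro he
  have hconn := hT.isConnected
  obtain ⟨p, hp, hl⟩ := hconn.exists_path_of_dist o x
  have hxy : G.dist x y = 1 := SimpleGraph.dist_eq_one_iff_adj.mpr hadj
  by_cases hy : y ∈ p.support
  · have := dist_split hconn p hl hy
    have : 0 < G.dist y x := hconn.pos_dist_of_ne hadj.ne'
    rw [SimpleGraph.dist_comm] at hxy
    omega
  · have hpath : (p.concat hadj).IsPath := by
      rw [← Walk.isPath_reverse_iff, Walk.reverse_concat]
      exact hp.reverse.cons (by simpa [Walk.support_reverse] using hy)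
    have := tree_path_length hT _ hpath
    rw [Walk.length_concat, hl, ← he] at this
    omega

/-- Parity of distances in a tree: `dist o u + dist u v ≡ dist o v (mod 2)`. -/
lemma dist_parity (hT : G.IsTree) (o u v : V) :
    (G.dist o u + G.dist u v) % 2 = G.dist o v % 2 := by
  have hconn := hT.isConnected
  obtain ⟨p, hl⟩ := hconn.exists_walk_length_eq_dist u v
  suffices h : ∀ (a b : V) (q : G.Walk a b), (G.dist o a + q.length) % 2 = G.dist o b % 2 by
    rw [← hl]; exact h u v p
  intro a b q
  induction q with
  | nil => simp
  | cons hadj q ih =>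
    rename_i c d e
    have h1 : G.dist o c ≠ G.dist o d := adj_dist_ne hT o hadj
    have h2 : G.dist o d ≤ G.dist o c + 1 := by
      have := hconn.dist_triangle (u := o) (v := c) (w := d)
      have : G.dist c d = 1 := SimpleGraph.dist_eq_one_iff_adj.mpr hadj
      omega
    have h3 : G.dist o c ≤ G.dist o d + 1 := by
      have := hconn.dist_triangle (u := o) (v := d) (w := c)
      have : G.dist d c = 1 := SimpleGraph.dist_eq_one_iff_adj.mpr hadj.symm
      omega
    rw [Walk.length_cons]
    omega

/-- If a DN-connected set `A` (all of whose points are at distance ≥ 2 from `w`) has a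
point `a` at distance 2 from `w` lying strictly away from `o` (w.r.t. `w`), then the whole
set lies in that branch: distances from `o` are additive through `w`. -/
lemma cluster_below (hT : G.IsTree) (o w : V) {A : Set V}
    (hDN : ∀ x ∈ A, ∀ y ∈ A,
      Relation.ReflTransGen (fun a b => a ∈ A ∧ b ∈ A ∧ G.dist a b = 2) x y)
    (hlow : ∀ x ∈ A, 2 ≤ G.dist w x)
    {a : V} (ha : a ∈ A) (hd2 : G.dist w a = 2) (hdo : G.dist o a = G.dist o w + 2) :
    ∀ x ∈ A, G.dist o x = G.dist o w + G.dist w x := by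
  have hconn := hT.isConnected
  intro x hx
  have h := hDN a ha x hx
  clear hx
  induction h with
  | refl => omega
  | tail h1 h2 ih =>
    rename_i b c
    obtain ⟨hb, hc, hbc⟩ := h2
    have ihb := ih
    by_cases hwo : w = o
    · subst hwo
      have : G.dist w w = 0 := SimpleGraph.dist_self
      omega
    -- gates
    obtain ⟨m0, hm0adj, hm0⟩ := gate_exists hconn hwo
    have hwb : w ≠ b := by
      have := hlow b hb
      intro he; rw [← he] at this; rw [SimpleGraph.dist_self] at this; omega
    have hwc : w ≠ c := by
      have := hlow c hc
      intro he; rw [← he] at this; rw [SimpleGraph.dist_self] at this; omega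
    obtain ⟨mb, hmbadj, hmb⟩ := gate_exists hconn hwb
    obtain ⟨mc, hmcadj, hmc⟩ := gate_exists hconn hwc
    have hmbne : mb ≠ m0 := by
      intro he
      subst he
      have e1 : G.dist o b = G.dist o w + G.dist w b := ihb
      have e2 : G.dist mb b + 1 = G.dist w b := hmb
      have e3 : G.dist mb o + 1 = G.dist w o := hm0
      have e4 : G.dist o mb = G.dist mb o := SimpleGraph.dist_comm
      have e5 : G.dist w o = G.dist o w := SimpleGraph.dist_comm
      have t1 : G.dist o b ≤ G.dist o mb + G.dist mb b := hconn.dist_triangle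
      omega
    have hmceq : mc = mb := by
      by_contra hne
      have := dist_add_of_ne_gate hT hmbadj hmcadj (fun h => hne h.symm) hmb hmc
      have hb2 := hlow b hb
      have hc2 := hlow c hc
      have e1 : G.dist b c = G.dist b w + G.dist w c := this
      have e2 : G.dist b w = G.dist w b := SimpleGraph.dist_comm
      omega
    subst hmceq
    have := dist_add_of_ne_gate hT hm0adj hmcadj (fun h => hmbne h.symm) hm0 hmc
    have e2 : G.dist o w = G.dist w o := SimpleGraph.dist_comm
    omega

/-- Uniqueness of the vertex under which a cluster sits. -/
lemma below_unique (hT : G.IsTree) (o : V) {w w' : V} {A : Set V}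
    (hDN : ∀ x ∈ A, ∀ y ∈ A,
      Relation.ReflTransGen (fun a b => a ∈ A ∧ b ∈ A ∧ G.dist a b = 2) x y)
    (hlow : ∀ x ∈ A, 2 ≤ G.dist w x) (hlow' : ∀ x ∈ A, 2 ≤ G.dist w' x)
    {a : V} (ha : a ∈ A) (hd2 : G.dist w a = 2) (hdo : G.dist o a = G.dist o w + 2)
    {a' : V} (ha' : a' ∈ A) (hd2' : G.dist w' a' = 2)
    (hdo' : G.dist o a' = G.dist o w' + 2) :
    w = w' := by
  have hconn := hT.isConnected
  have hbr := cluster_below hT o w hDN hlow ha hd2 hdo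
  have hbr' := cluster_below hT o w' hDN hlow' ha' hd2' hdo'
  -- equal depths
  have h1 : G.dist o a = G.dist o w' + G.dist w' a := hbr' a ha
  have h2 : G.dist o a' = G.dist o w + G.dist w a' := hbr a' ha'
  have h3 : 2 ≤ G.dist w' a := hlow' a ha
  have h4 : 2 ≤ G.dist w a' := hlow a' ha'
  have hdepth : G.dist o w = G.dist o w' := by omega
  have hwa2 : G.dist w' a = 2 := by omega
  -- both w, w' are at distance 2 from a, on the o-side
  have hao : a ≠ o := by
    intro he; rw [he, SimpleGraph.dist_self] at hdo; omega
  have haw : a ≠ w := by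
    intro he; rw [← he, SimpleGraph.dist_self] at hd2; omega
  have haw' : a ≠ w' := by
    intro he; rw [← he, SimpleGraph.dist_self] at hwa2; omega
  obtain ⟨n0, hn0adj, hn0⟩ := gate_exists hconn hao
  obtain ⟨nw, hnwadj, hnw⟩ := gate_exists hconn haw
  obtain ⟨nw', hnwadj', hnw'⟩ := gate_exists hconn haw'
  have hca : G.dist a w = 2 := by
    have : G.dist a w = G.dist w a := SimpleGraph.dist_comm
    omega
  have hca' : G.dist a w' = 2 := by
    have : G.dist a w' = G.dist w' a := SimpleGraph.dist_comm
    omega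
  have hao2 : G.dist a o = G.dist o w + 2 := by
    have : G.dist a o = G.dist o a := SimpleGraph.dist_comm
    omega
  have hnweq : nw = n0 := by
    by_contra hne
    have := dist_add_of_ne_gate hT hn0adj hnwadj (fun h => hne h.symm) hn0 hnw
    have e1 : G.dist o w = G.dist o a + G.dist a w := this
    omega
  have hnweq' : nw' = n0 := by
    by_contra hne
    have := dist_add_of_ne_gate hT hn0adj hnwadj' (fun h => hne h.symm) hn0 hnw'
    have e1 : G.dist o w' = G.dist o a + G.dist a w' := this
    omega
  rw [hnweq] at hnw hnwadj
  rw [hnweq'] at hnw' hnwadj'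
  -- n0 is adjacent to both w and w', at equal smaller depth: gate uniqueness at n0
  have hdn0w : G.dist n0 w = 1 := by omega
  have hdn0w' : G.dist n0 w' = 1 := by omega
  have hadjw : G.Adj n0 w := SimpleGraph.dist_eq_one_iff_adj.mp hdn0w
  have hadjw' : G.Adj n0 w' := SimpleGraph.dist_eq_one_iff_adj.mp hdn0w'
  have hd1 : G.dist w o + 1 = G.dist n0 o := by
    have e1 : G.dist w o = G.dist o w := SimpleGraph.dist_comm
    omega
  have hd2'' : G.dist w' o + 1 = G.dist n0 o := by
    have e1 : G.dist w' o = G.dist o w' := SimpleGraph.dist_comm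
    omega
  exact gate_unique hT hadjw hadjw' hd1 hd2''


end TreeHelpers

/-- `A` sits at distance 2 from `w`, inside a branch at `w` pointing away from `o`. -/
def BelowCl {V : Type} (G : SimpleGraph V) (o : V) (A : Set V) (w : V) : Prop :=
  setDist G A w = 2 ∧ ∃ a ∈ A, G.dist w a = 2 ∧ G.dist o a = G.dist o w + 2

lemma not_below_le {V : Type} {G : SimpleGraph V} (hT : G.IsTree) (o w a : V)
    (hd2 : G.dist a w = 2) (hnb : G.dist o a ≠ G.dist o w + 2) :
    G.dist o a ≤ G.dist o w := by
  have hconn := hT.isConnected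
  have hpar := dist_parity hT o a w
  have t1 : G.dist o w ≤ G.dist o a + G.dist a w := hconn.dist_triangle
  have t2 : G.dist o a ≤ G.dist o w + G.dist w a := hconn.dist_triangle
  have hc : G.dist w a = G.dist a w := SimpleGraph.dist_comm
  omega

/-- **Lemma.** On the infinite `d`-regular tree, if `A` is the disjoint union of
`k ≥ 1` pairwise non-adjacent odd clusters `A₁, …, A_k` and `W` is the set of vertices
at graph distance `2` from at least two distinct clusters, then `|W| ≤ k - 1`. -/
theorem number_of_extra_points (d : ℕ) (hd : 3 ≤ d)
    (V : Type) (G : SimpleGraph V) (o : V)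
    (hconn : G.Connected) (hacyc : G.IsAcyclic)
    (hreg : ∀ v : V, (G.neighborSet v).ncard = d)
    (k : ℕ) (hk : 1 ≤ k) (As : Fin k → Set V)
    (hAs : ∀ i, IsOddCluster G o (As i))
    (hAadj : ∀ i j, i ≠ j → NonAdj G (As i) (As j)) :
    (Wset G As).ncard ≤ k - 1 := by
  classical
  have hT : G.IsTree := ⟨hconn, hacyc⟩
  set W := Wset G As with hW
  have hdisj : ∀ i j : Fin k, i ≠ j → Disjoint (As i) (As j) := fun i j h => (hAadj i j h).1
  have hnadj : ∀ i j : Fin k, i ≠ j → ∀ a ∈ As i, ∀ b ∈ As j, G.dist a b ≠ 2 :=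
    fun i j h => (hAadj i j h).2
  have sdle : ∀ (A : Set V) (x a : V), a ∈ A → setDist G A x ≤ G.dist a x := by
    intro A x a ha; exact Nat.sInf_le ⟨a, ha, rfl⟩
  have sdex : ∀ (A : Set V) (x : V), A.Nonempty → ∃ a ∈ A, G.dist a x = setDist G A x := by
    intro A x hA
    obtain ⟨a, ha, he⟩ := Nat.sInf_mem (hA.image (fun a => G.dist a x))
    exact ⟨a, ha, he⟩
  have hlow : ∀ (j : Fin k) (w : V), setDist G (As j) w = 2 → ∀ x ∈ As j, 2 ≤ G.dist w x := by
    intro j w hs x hx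
    have h1 := sdle (As j) w x hx
    have hc : G.dist w x = G.dist x w := SimpleGraph.dist_comm
    omega
  -- Step 1: every W-point has a cluster strictly "below" it
  have hex : ∀ w ∈ W, ∃ j, BelowCl G o (As j) w := by
    intro w hw
    obtain ⟨i, j, hij, hi, hj⟩ := hw
    obtain ⟨ai, hai, hdi⟩ := sdex (As i) w (hAs i).2.1
    obtain ⟨aj, haj, hdj⟩ := sdex (As j) w (hAs j).2.1
    rw [hi] at hdi; rw [hj] at hdj
    by_cases hbi : G.dist o ai = G.dist o w + 2
    · exact ⟨i, hi, ai, hai, by rw [SimpleGraph.dist_comm]; exact hdi, hbi⟩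
    by_cases hbj : G.dist o aj = G.dist o w + 2
    · exact ⟨j, hj, aj, haj, by rw [SimpleGraph.dist_comm]; exact hdj, hbj⟩
    exfalso
    have hlei : G.dist o ai ≤ G.dist o w := not_below_le hT o w ai hdi hbi
    have hlej : G.dist o aj ≤ G.dist o w := not_below_le hT o w aj hdj hbj
    have hwo : w ≠ o := by
      intro he
      rw [he] at hdi
      apply hbi
      have h1 : G.dist o ai = G.dist ai o := SimpleGraph.dist_comm
      have h2 : G.dist o w = 0 := by rw [he, SimpleGraph.dist_self]
      omega
    obtain ⟨m0, hm0adj, hm0⟩ := gate_exists hconn hwo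
    have hwai : w ≠ ai := by
      intro he; rw [← he, SimpleGraph.dist_self] at hdi; omega
    have hwaj : w ≠ aj := by
      intro he; rw [← he, SimpleGraph.dist_self] at hdj; omega
    obtain ⟨mi, hmiadj, hmi⟩ := gate_exists hconn hwai
    obtain ⟨mj, hmjadj, hmj⟩ := gate_exists hconn hwaj
    have hcomi : G.dist w ai = 2 := by
      have : G.dist w ai = G.dist ai w := SimpleGraph.dist_comm; omega
    have hcomj : G.dist w aj = 2 := by
      have : G.dist w aj = G.dist aj w := SimpleGraph.dist_comm; omega
    have hmieq : mi = m0 := by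
      by_contra hne
      have h := dist_add_of_ne_gate hT hm0adj hmiadj (fun h => hne h.symm) hm0 hmi
      have e1 : G.dist o ai = G.dist o w + G.dist w ai := h
      omega
    have hmjeq : mj = m0 := by
      by_contra hne
      have h := dist_add_of_ne_gate hT hm0adj hmjadj (fun h => hne h.symm) hm0 hmj
      have e1 : G.dist o aj = G.dist o w + G.dist w aj := h
      omega
    rw [hmieq] at hmi
    rw [hmjeq] at hmj
    have hd1 : G.dist m0 ai = 1 := by omega
    have hd2 : G.dist m0 aj = 1 := by omega
    have htriaa : G.dist ai aj ≤ G.dist ai m0 + G.dist m0 aj := hconn.dist_triangle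
    have hcm : G.dist ai m0 = G.dist m0 ai := SimpleGraph.dist_comm
    have hneaa : ai ≠ aj := by
      intro he
      exact (Set.disjoint_left.mp (hdisj i j (ne_of_lt hij)) hai) (he ▸ haj)
    have h0 : G.dist ai aj ≠ 0 := fun h => hneaa (hconn.dist_eq_zero_iff.mp h)
    have h2' : G.dist ai aj ≠ 2 := hnadj i j (ne_of_lt hij) ai hai aj haj
    have h1 : G.dist ai aj = 1 := by omega
    obtain ⟨ti, hti⟩ := (hAs i).2.2.1 ai hai
    obtain ⟨tj, htj⟩ := (hAs j).2.2.1 aj haj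
    have hpar := dist_parity hT o ai aj
    omega
  -- Step 2: the "below" relation determines `w` uniquely
  have huniq : ∀ (j : Fin k) (w w' : V), BelowCl G o (As j) w → BelowCl G o (As j) w' →
      w = w' := by
    rintro j w w' ⟨hs, a, ha, h2, h3⟩ ⟨hs', a', ha', h2', h3'⟩
    exact below_unique hT o ((hAs j).2.2.2) (hlow j w hs) (hlow j w' hs')
      ha h2 h3 ha' h2' h3'
  -- the choice function
  let f : V → Fin k := fun w => if h : ∃ j, BelowCl G o (As j) w then h.choose else ⟨0, hk⟩
  have hfP : ∀ w ∈ W, BelowCl G o (As (f w)) w := by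
    intro w hw
    have h := hex w hw
    show BelowCl G o (As (dite _ _ _)) w
    rw [dif_pos h]
    exact h.choose_spec
  have hinj : Set.InjOn f W := by
    intro w hw w' hw' he
    exact huniq (f w) w w' (hfP w hw) (he ▸ hfP w' hw')
  -- Step 3: f is not surjective onto Fin k
  have hns : ∃ j0 : Fin k, j0 ∉ f '' W := by
    by_contra hcon
    push_neg at hcon
    obtain ⟨j0, -, hmin⟩ := Finset.exists_min_image Finset.univ
      (fun j => setDist G (As j) o) ⟨⟨0, hk⟩, Finset.mem_univ _⟩
    obtain ⟨w0, hw0, hfw0⟩ := hcon j0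
    have hPw0 : BelowCl G o (As j0) w0 := hfw0 ▸ hfP w0 hw0
    obtain ⟨hs0, a0, ha0, h20, h30⟩ := hPw0
    have hbr := cluster_below hT o w0 ((hAs j0).2.2.2) (hlow j0 w0 hs0) ha0 h20 h30
    have hδ0 : setDist G (As j0) o = G.dist o w0 + 2 := by
      apply le_antisymm
      · have h1 := sdle (As j0) o a0 ha0
        have h2 : G.dist a0 o = G.dist o a0 := SimpleGraph.dist_comm
        omega
      · apply le_csInf ((hAs j0).2.1.image _)
        rintro b ⟨x, hx, rfl⟩
        show G.dist o w0 + 2 ≤ G.dist x o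
        have h1 := hbr x hx
        have h2 := hlow j0 w0 hs0 x hx
        have h3 : G.dist x o = G.dist o x := SimpleGraph.dist_comm
        omega
    obtain ⟨i, j, hij, hi, hj⟩ := hw0
    have hl : ∃ l : Fin k, l ≠ j0 ∧ setDist G (As l) w0 = 2 := by
      by_cases h : i = j0
      · refine ⟨j, ?_, hj⟩
        rw [← h]; exact (ne_of_lt hij).symm
      · exact ⟨i, h, hi⟩
    obtain ⟨l, hlne, hsl⟩ := hl
    obtain ⟨al, hal, hdl⟩ := sdex (As l) w0 (hAs l).2.1
    rw [hsl] at hdl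
    by_cases hbl : G.dist o al = G.dist o w0 + 2
    · have hPl : BelowCl G o (As l) w0 :=
        ⟨hsl, al, hal, by rw [SimpleGraph.dist_comm]; exact hdl, hbl⟩
      obtain ⟨w1, hw1, hfw1⟩ := hcon l
      have hww : w1 = w0 := huniq l w1 w0 (hfw1 ▸ hfP w1 hw1) hPl
      rw [hww] at hfw1
      exact hlne (by rw [← hfw1, hfw0])
    · have hle := not_below_le hT o w0 al hdl hbl
      have h1 := sdle (As l) o al hal
      have h2 : G.dist al o = G.dist o al := SimpleGraph.dist_comm
      have h3 := hmin l (Finset.mem_univ l)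
      omega
  -- Step 4: counting
  obtain ⟨j0, hj0⟩ := hns
  have hsub : f '' W ⊆ {j0}ᶜ := by
    intro x hx
    simp only [Set.mem_compl_iff, Set.mem_singleton_iff]
    intro he
    exact hj0 (he ▸ hx)
  calc W.ncard = (f '' W).ncard := (Set.ncard_image_of_injOn hinj).symm
    _ ≤ ({j0}ᶜ : Set (Fin k)).ncard := Set.ncard_le_ncard hsub (Set.toFinite _)
    _ = k - 1 := by
      rw [Set.ncard_eq_toFinset_card']
      rw [Set.toFinset_compl, Set.toFinset_singleton, Finset.card_compl,
        Finset.card_singleton, Fintype.card_fin]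
end

section
/- Let A ⊆ V be the disjoint union of k pairwise non-adjacent odd clusters A₁, …, A_k in T_d, let W = {x : ∃ 1 ≤ i < j ≤ k with dist(A_i,x) = dist(A_j,x) = 2}, and let W* ⊆ W. Suppose A ∪ W* is the disjoint union of pairwise non-adjacent odd clusters A*₁, …, A*_{k*}. Then every B ∈ ℬ_{W*} can be written as a disjoint union of nonempty sets of even vertices B*₁, …, B*_{k*} such that: (1) B*_i ∈ ℬ(A*_i) for every 1 ≤ i ≤ k*; (2) B*_i and B*_j are non-adjacent for all 1 ≤ i < j ≤ k*; (3) for each i, the set induced by B*_i is contained in A*_i. -/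
open MeasureTheory

section Tools
open SimpleGraph
variable {V : Type} {G : SimpleGraph V}

lemma path_length_eq_dist (hconn : G.Connected) (hacyc : G.IsAcyclic)
    {u v : V} (p : G.Walk u v) (hp : p.IsPath) : p.length = G.dist u v := by
  obtain ⟨q, hq, hql⟩ := hconn.exists_path_of_dist u v
  have huniq := isAcyclic_iff_path_unique.mp hacyc ⟨p, hp⟩ ⟨q, hq⟩
  have : p = q := congrArg Subtype.val huniq
  rw [this, hql]

lemma mid_unique (hacyc : G.IsAcyclic) {u v w w' : V} (huv : u ≠ v)
    (h1 : G.Adj u w) (h2 : G.Adj w v) (h3 : G.Adj u w') (h4 : G.Adj w' v) : w = w' := by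
  have hp1 : (Walk.cons h1 (Walk.cons h2 Walk.nil)).IsPath := by
    simp [Walk.isPath_def, h1.ne, h2.ne, huv]
  have hp2 : (Walk.cons h3 (Walk.cons h4 Walk.nil)).IsPath := by
    simp [Walk.isPath_def, h3.ne, h4.ne, huv]
  have huniq := isAcyclic_iff_path_unique.mp hacyc ⟨_, hp1⟩ ⟨_, hp2⟩
  have heq : (Walk.cons h1 (Walk.cons h2 Walk.nil)) = (Walk.cons h3 (Walk.cons h4 Walk.nil)) :=
    congrArg Subtype.val huniq
  have hs := congrArg Walk.support heq
  simp [Walk.support_cons] at hs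
  exact hs

lemma adj_dist_ne_s13 (hconn : G.Connected) (hacyc : G.IsAcyclic) (o : V)
    {u v : V} (h : G.Adj u v) : G.dist o u ≠ G.dist o v := by
  classical
  intro heq
  obtain ⟨p, hp, hpl⟩ := hconn.exists_path_of_dist o u
  by_cases hv : v ∈ p.support
  · have ht : (p.takeUntil v hv).IsPath := hp.takeUntil hv
    have htl : (p.takeUntil v hv).length = G.dist o v :=
      path_length_eq_dist hconn hacyc _ ht
    have hsum := congrArg Walk.length (p.take_spec hv)
    rw [Walk.length_append] at hsum
    have : (p.dropUntil v hv).length = 0 := by omega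
    exact h.ne (Walk.eq_of_length_eq_zero this).symm
  · have hp' : (p.concat h).IsPath := by
      rw [Walk.isPath_def, Walk.support_concat]
      simpa [List.concat_eq_append, List.nodup_append] using ⟨hp.support_nodup, fun a ha hav => hv (hav ▸ ha)⟩
    have := path_length_eq_dist hconn hacyc _ hp'
    rw [Walk.length_concat] at this
    omega

lemma adj_parity (hconn : G.Connected) (hacyc : G.IsAcyclic) (o : V)
    {u v : V} (h : G.Adj u v) : (Odd (G.dist o u) ↔ Even (G.dist o v)) := by
  have hne := adj_dist_ne_s13 hconn hacyc o h
  have h1 : G.dist o v ≤ G.dist o u + 1 := by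
    have := hconn.dist_triangle (u := o) (v := u) (w := v)
    rwa [dist_eq_one_iff_adj.mpr h] at this
  have h2 : G.dist o u ≤ G.dist o v + 1 := by
    have := hconn.dist_triangle (u := o) (v := v) (w := u)
    rwa [dist_eq_one_iff_adj.mpr h.symm] at this
  rw [Nat.odd_iff, Nat.even_iff]
  omega

lemma not_adj_same_parity (hconn : G.Connected) (hacyc : G.IsAcyclic) (o : V)
    {u v : V} (hu : Odd (G.dist o u)) (hv : Odd (G.dist o v)) : ¬ G.Adj u v := by
  intro h
  have := (adj_parity hconn hacyc o h).mp hu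
  rw [Nat.even_iff] at this
  rw [Nat.odd_iff] at hv
  omega

lemma dist_eq_two_of (hconn : G.Connected) {u v w : V} (hne : u ≠ v) (hnadj : ¬ G.Adj u v)
    (h1 : G.Adj u w) (h2 : G.Adj w v) : G.dist u v = 2 := by
  have hle : G.dist u v ≤ 2 := by
    have := SimpleGraph.dist_le (Walk.cons h1 (Walk.cons h2 Walk.nil))
    simpa using this
  have h0 : G.dist u v ≠ 0 := fun hh => hne (hconn.dist_eq_zero_iff.mp hh)
  have h1' : G.dist u v ≠ 1 := fun hh => hnadj (dist_eq_one_iff_adj.mp hh)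
  omega

lemma exists_mid (h : G.dist u v = 2) : ∃ w, G.Adj u w ∧ G.Adj w v := by
  obtain ⟨p, hpl⟩ := SimpleGraph.exists_walk_of_dist_ne_zero (by omega : G.dist u v ≠ 0)
  rw [h] at hpl
  refine ⟨p.getVert 1, ?_, ?_⟩
  · have := p.adj_getVert_succ (i := 0) (by omega)
    simpa using this
  · have := p.adj_getVert_succ (i := 1) (by omega)
    have h2 : p.getVert 2 = v := by
      have := p.getVert_length
      rwa [hpl] at this
    rwa [h2] at this

end Tools

section Chain
open SimpleGraph
variable {V : Type} {G : SimpleGraph V}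

lemma chain_walk_avoid (hconn : G.Connected) (hacyc : G.IsAcyclic) (o : V) {x : V} {S : Set V}
    (hS : ∀ s ∈ S, Odd (G.dist o s)) (hx : Odd (G.dist o x)) (hxS : x ∉ S)
    {a b : V} (hch : Relation.ReflTransGen (fun c d => c ∈ S ∧ d ∈ S ∧ G.dist c d = 2) a b)
    (ha : a ∈ S) : ∃ w : G.Walk a b, x ∉ w.support := by
  induction hch using Relation.ReflTransGen.head_induction_on with
  | refl =>
    refine ⟨Walk.nil, ?_⟩
    simp only [Walk.support_nil, List.mem_singleton]
    exact fun h => hxS (h ▸ ha)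
  | head h' hrest ih =>
    obtain ⟨haS, hcS, hd⟩ := h'
    obtain ⟨m, hm1, hm2⟩ := exists_mid hd
    obtain ⟨w, hw⟩ := ih hcS
    refine ⟨Walk.cons hm1 (Walk.cons hm2 w), ?_⟩
    simp only [Walk.support_cons, List.mem_cons]
    push_neg
    refine ⟨fun h => hxS (h ▸ haS), fun h => ?_, hw⟩
    have hmev : Even (G.dist o m) := (adj_parity hconn hacyc o hm1).mp (hS _ haS)
    rw [← h] at hmev
    rw [Nat.even_iff] at hmev; rw [Nat.odd_iff] at hx; omega

lemma no_cross (hconn : G.Connected) (hacyc : G.IsAcyclic) (o : V) {x : V} {S : Set V}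
    (hS : ∀ s ∈ S, Odd (G.dist o s)) (hx : Odd (G.dist o x)) (hxS : x ∉ S)
    {a b : V} (hch : Relation.ReflTransGen (fun c d => c ∈ S ∧ d ∈ S ∧ G.dist c d = 2) a b)
    (ha : a ∈ S) {p : G.Walk a b} (hp : p.IsPath) (hxp : x ∈ p.support) : False := by
  classical
  obtain ⟨w, hw⟩ := chain_walk_avoid hconn hacyc o hS hx hxS hch ha
  have hbp : w.bypass.IsPath := Walk.bypass_isPath w
  have hpq : p = w.bypass :=
    congrArg Subtype.val (isAcyclic_iff_path_unique.mp hacyc ⟨p, hp⟩ ⟨w.bypass, hbp⟩)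
  exact hw (Walk.support_bypass_subset w (hpq ▸ hxp))

end Chain



/-- **Lemma.** Let `A` be the disjoint union of `k` pairwise non-adjacent odd clusters
`A₁, …, A_k`, let `W` be the set of vertices at distance `2` from two distinct
clusters, let `W* ⊆ W`, and suppose `A ∪ W*` is the disjoint union of pairwise
non-adjacent odd clusters `A*₁, …, A*_{k*}`.  Then every `B ∈ ℬ_{W*}` (i.e.
`B ∈ ℬ(A)` with `Prr(A_i, B) ≠ ∅` for all `i` and `φ(B) = W*`) is a disjoint union of
nonempty even vertex sets `B*₁, …, B*_{k*}` such that (1) `B*_i ∈ ℬ(A*_i)` for all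
`i`, (2) the `B*_i` are pairwise non-adjacent, and (3) each `B*_i` induces an odd
subset of `A*_i`. -/

theorem multiple_cluster_cannot_merge (d : ℕ) (hd : 3 ≤ d)
    (V : Type) (G : SimpleGraph V) (o : V)
    (hconn : G.Connected) (hacyc : G.IsAcyclic)
    (hreg : ∀ v : V, (G.neighborSet v).ncard = d)
    (k : ℕ) (As : Fin k → Set V)
    (hAs : ∀ i, IsOddCluster G o (As i))
    (hAadj : ∀ i j, i ≠ j → NonAdj G (As i) (As j))
    (Wst : Set V) (hWst : Wst ⊆ Wset G As)
    (kst : ℕ) (Ast : Fin kst → Set V)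
    (hAst : ∀ i, IsOddCluster G o (Ast i))
    (hAstadj : ∀ i j, i ≠ j → NonAdj G (Ast i) (Ast j))
    (hAstU : (⋃ i, As i) ∪ Wst = ⋃ i, Ast i)
    (B : Set V)
    (hB : B ∈ minimalB G (⋃ i, As i))
    (hBstar : ∀ i, (Prr G (As i) B).Nonempty)
    (hphi : {w ∈ Wset G As | TwoNbrsIn G B w} = Wst) :
    ∃ Bs : Fin kst → Set V,
      (∀ i, (Bs i).Nonempty ∧ ∀ x ∈ Bs i, IsEvenV G o x) ∧
      (∀ i j, i ≠ j → Disjoint (Bs i) (Bs j)) ∧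
      B = (⋃ i, Bs i) ∧
      (∀ i, Bs i ∈ minimalB G (Ast i)) ∧
      (∀ i j, i ≠ j → NonAdj G (Bs i) (Bs j)) ∧
      (∀ i, inducedSet G (Bs i) ⊆ Ast i) := by
  classical
  have hodd : ∀ i, ∀ a ∈ As i, Odd (G.dist o a) := fun i => (hAs i).2.2.1
  have hoddst : ∀ i, ∀ a ∈ Ast i, Odd (G.dist o a) := fun i => (hAst i).2.2.1
  have hBsub : B ⊆ nbhd G (⋃ i, As i) := hB.1
  have hAsub : (⋃ i, As i) ⊆ ⋃ i, Ast i := by rw [← hAstU]; exact Set.subset_union_left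
  have hWsubst : Wst ⊆ ⋃ i, Ast i := by rw [← hAstU]; exact Set.subset_union_right
  have hBeven : ∀ b ∈ B, Even (G.dist o b) := by
    intro b hb
    obtain ⟨a, ha, hadj⟩ := hBsub hb
    obtain ⟨i, hi⟩ := Set.mem_iUnion.mp ha
    exact (adj_parity hconn hacyc o hadj).mp (hodd i a hi)
  have AstDisj : ∀ i j, i ≠ j → Disjoint (Ast i) (Ast j) := fun i j h => (hAstadj i j h).1
  have clusterEq : ∀ {i j : Fin kst} {u u' w : V},
      u ∈ Ast i → u' ∈ Ast j → G.Adj u w → G.Adj u' w → i = j := by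
    intro i j u u' w hu hu' h h'
    by_contra hne
    rcases eq_or_ne u u' with rfl | hne'
    · exact (Set.disjoint_left.mp (AstDisj i j hne) hu) hu'
    · have hnadj : ¬ G.Adj u u' :=
        not_adj_same_parity hconn hacyc o (hoddst i u hu) (hoddst j u' hu')
      have hd2 : G.dist u u' = 2 := dist_eq_two_of hconn hne' hnadj h h'.symm
      exact (hAstadj i j hne).2 u hu u' hu' hd2
  have hAsIn : ∀ j, ∃ l, As j ⊆ Ast l := by
    intro j
    obtain ⟨a0, ha0⟩ := (hAs j).2.1
    obtain ⟨l, hl⟩ := Set.mem_iUnion.mp (hAsub (Set.mem_iUnion.mpr ⟨j, ha0⟩))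
    refine ⟨l, fun a ha => ?_⟩
    have hch := (hAs j).2.2.2 a0 ha0 a ha
    clear ha
    induction hch with
    | refl => exact hl
    | tail h1 h2 ih =>
      obtain ⟨hbS, hcS, hd⟩ := h2
      obtain ⟨l', hl'⟩ := Set.mem_iUnion.mp (hAsub (Set.mem_iUnion.mpr ⟨j, hcS⟩))
      rcases eq_or_ne l' l with rfl | hne
      · exact hl'
      · exact absurd hd ((hAstadj l l' (fun hh => hne hh.symm)).2 _ ih _ hl')
  -- the decomposition
  set Bs : Fin kst → Set V := fun i => {b | b ∈ B ∧ ∃ a ∈ Ast i, G.Adj a b} with hBsdef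
  have hBsmem : ∀ {i : Fin kst} {b : V}, b ∈ Bs i ↔ (b ∈ B ∧ ∃ a ∈ Ast i, G.Adj a b) :=
    fun {i b} => Iff.rfl
  have hBsB : ∀ i, Bs i ⊆ B := fun i b hb => (hBsmem.mp hb).1
  have uniqBs : ∀ {b : V} {i j : Fin kst}, b ∈ Bs i → b ∈ Bs j → i = j := by
    intro b i j hbi hbj
    obtain ⟨_, a, ha, h⟩ := hBsmem.mp hbi
    obtain ⟨_, a', ha', h'⟩ := hBsmem.mp hbj
    exact clusterEq ha ha' h h'
  have hdisj : ∀ i j, i ≠ j → Disjoint (Bs i) (Bs j) := by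
    intro i j hne
    rw [Set.disjoint_left]
    intro b hbi hbj
    exact hne (uniqBs hbi hbj)
  have hcover : B = ⋃ i, Bs i := by
    ext b
    constructor
    · intro hb
      obtain ⟨a, ha, hadj⟩ := hBsub hb
      obtain ⟨l, hl⟩ := Set.mem_iUnion.mp (hAsub ha)
      exact Set.mem_iUnion.mpr ⟨l, hBsmem.mpr ⟨hb, a, hl, hadj⟩⟩
    · intro hb
      obtain ⟨l, hl⟩ := Set.mem_iUnion.mp hb
      exact hBsB l hl
  have nearCluster : ∀ {u : V} {i : Fin kst} {a : V},
      u ∈ Ast i → a ∈ ⋃ n, Ast n → G.dist a u = 2 → a ∈ Ast i := by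
    intro u i a hu ha hd
    obtain ⟨l, hl⟩ := Set.mem_iUnion.mp ha
    rcases eq_or_ne l i with rfl | hne
    · exact hl
    · exact absurd hd ((hAstadj l i hne).2 a hl u hu)
  have meetSub : ∀ {j : Fin k} {i : Fin kst} {a : V}, a ∈ As j → a ∈ Ast i → As j ⊆ Ast i := by
    intro j i a haj hai
    obtain ⟨l, hl⟩ := hAsIn j
    rcases eq_or_ne l i with rfl | hne
    · exact hl
    · exact absurd hai (Set.disjoint_left.mp (AstDisj l i hne) (hl haj))
  have setDistElem : ∀ {p : Fin k} {u : V}, setDist G (As p) u = 2 → ∃ a ∈ As p, G.dist a u = 2 := by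
    intro p u hsd
    have hne : ((fun a => G.dist a u) '' (As p)).Nonempty := (hAs p).2.1.image _
    have hmem : setDist G (As p) u ∈ (fun a => G.dist a u) '' (As p) := Nat.sInf_mem hne
    rw [hsd] at hmem
    obtain ⟨a, ha, hd⟩ := hmem
    exact ⟨a, ha, hd⟩
  have setDistTwo : ∀ {x : V} {p : Fin k} {α y : V}, α ∈ As p → G.Adj α y → G.Adj x y →
      x ∉ (⋃ n, As n) → Odd (G.dist o x) → setDist G (As p) x = 2 := by
    intro x p α y hα h1 h2 hxA hxodd
    have hxα : α ≠ x := fun h => hxA (Set.mem_iUnion.mpr ⟨p, h ▸ hα⟩)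
    have hnadj : ¬ G.Adj α x := not_adj_same_parity hconn hacyc o (hodd p α hα) hxodd
    have hd : G.dist α x = 2 := dist_eq_two_of hconn hxα hnadj h1 h2.symm
    have hle : setDist G (As p) x ≤ 2 := by
      have hm : G.dist α x ∈ (fun a => G.dist a x) '' (As p) := ⟨α, hα, rfl⟩
      have := Nat.sInf_le hm
      rw [hd] at this
      exact this
    have hnemp : ((fun a => G.dist a x) '' (As p)).Nonempty := (hAs p).2.1.image _
    have hmem : setDist G (As p) x ∈ (fun a => G.dist a x) '' (As p) := Nat.sInf_mem hnemp
    obtain ⟨β, hβ, hβd⟩ := hmem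
    have h0 : G.dist β x ≠ 0 :=
      fun hh => hxA (Set.mem_iUnion.mpr ⟨p, (hconn.dist_eq_zero_iff.mp hh) ▸ hβ⟩)
    have h1' : G.dist β x ≠ 1 := fun hh =>
      (not_adj_same_parity hconn hacyc o (hodd p β hβ) hxodd) (SimpleGraph.dist_eq_one_iff_adj.mp hh)
    simp only at hβd
    omega
  have wstarMem : ∀ {x : V}, x ∈ Wset G As → TwoNbrsIn G B x → x ∈ ⋃ n, Ast n := by
    intro x hx h2
    apply hWsubst
    rw [← hphi]
    exact ⟨hx, h2⟩
  have mkWset : ∀ {x : V} {p q : Fin k}, p ≠ q →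
      setDist G (As p) x = 2 → setDist G (As q) x = 2 → x ∈ Wset G As := by
    intro x p q hne h1 h2
    rcases lt_or_gt_of_ne hne with h | h
    · exact ⟨p, q, h, h1, h2⟩
    · exact ⟨q, p, h, h2, h1⟩
  have hnonempty : ∀ i, (Bs i).Nonempty := by
    intro i
    obtain ⟨u, hu⟩ := (hAst i).2.1
    have huU : u ∈ (⋃ n, As n) ∪ Wst := by
      rw [hAstU]; exact Set.mem_iUnion.mpr ⟨i, hu⟩
    have hj : ∃ j, As j ⊆ Ast i := by
      rcases huU with hA | hW
      · obtain ⟨j, hjm⟩ := Set.mem_iUnion.mp hA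
        exact ⟨j, meetSub hjm hu⟩
      · obtain ⟨p, q, hlt, h1, h2⟩ := hWst hW
        obtain ⟨a, ha, hd⟩ := setDistElem h1
        have hai : a ∈ Ast i := nearCluster hu (hAsub (Set.mem_iUnion.mpr ⟨p, ha⟩)) hd
        exact ⟨p, meetSub ha hai⟩
    obtain ⟨j, hjsub⟩ := hj
    obtain ⟨a', ha', y, hy, z, hz, hyz, h1, h2⟩ := hBstar j
    exact ⟨y, hBsmem.mpr ⟨hy, a', hjsub ha', h1⟩⟩
  have hmin : ∀ i, Bs i ∈ minimalB G (Ast i) := by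
    intro i
    constructor
    · intro b hb
      obtain ⟨hbB, a, ha, hadj⟩ := hBsmem.mp hb
      exact ⟨a, ha, hadj⟩
    · intro B' hB' heq
      obtain ⟨xx, hxxBs, hxxB'⟩ := Set.exists_of_ssubset hB'
      have hB'sub : B' ⊆ Bs i := hB'.1
      have hsub : B' ∪ (B \ Bs i) ⊆ B := by
        intro b hb
        rcases hb with hb | hb
        · exact hBsB i (hB'sub hb)
        · exact hb.1
      have hxx : xx ∉ B' ∪ (B \ Bs i) := by
        intro h
        rcases h with h | h
        · exact hxxB' h
        · exact h.2 hxxBs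
      have hss : B' ∪ (B \ Bs i) ⊂ B :=
        ⟨hsub, fun hsup => hxx (hsup (hBsB i hxxBs))⟩
      apply hB.2 _ hss
      ext a
      constructor
      · rintro ⟨haA, y, hy, z, hz, hyz, h1, h2⟩
        exact ⟨haA, y, hsub hy, z, hsub hz, hyz, h1, h2⟩
      · rintro ⟨haA, y, hy, z, hz, hyz, h1, h2⟩
        obtain ⟨j, hj⟩ := Set.mem_iUnion.mp haA
        obtain ⟨l, hl⟩ := hAsIn j
        have hal : a ∈ Ast l := hl hj
        have hyBs : y ∈ Bs l := hBsmem.mpr ⟨hy, a, hal, h1⟩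
        have hzBs : z ∈ Bs l := hBsmem.mpr ⟨hz, a, hal, h2⟩
        rcases eq_or_ne l i with rfl | hne
        · have hmem : a ∈ Prr G (Ast l) (Bs l) := ⟨hal, y, hyBs, z, hzBs, hyz, h1, h2⟩
          rw [← heq] at hmem
          obtain ⟨_, y', hy', z', hz', hyz', h1', h2'⟩ := hmem
          exact ⟨haA, y', Or.inl hy', z', Or.inl hz', hyz', h1', h2'⟩
        · exact ⟨haA, y, Or.inr ⟨hy, fun hh => hne (uniqBs hyBs hh)⟩,
            z, Or.inr ⟨hz, fun hh => hne (uniqBs hzBs hh)⟩, hyz, h1, h2⟩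
  have hnonadj : ∀ i j, i ≠ j → NonAdj G (Bs i) (Bs j) := by
    intro i j hij
    refine ⟨hdisj i j hij, ?_⟩
    intro b hb b' hb' hd
    obtain ⟨hbB, a, ha, hab⟩ := hBsmem.mp hb
    obtain ⟨hb'B, a', ha', hab'⟩ := hBsmem.mp hb'
    obtain ⟨α, hα, hαb⟩ := hBsub hbB
    obtain ⟨α', hα', hαb'⟩ := hBsub hb'B
    obtain ⟨p, hp⟩ := Set.mem_iUnion.mp hα
    obtain ⟨q, hq⟩ := Set.mem_iUnion.mp hα'
    rcases eq_or_ne p q with rfl | hpq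
    · obtain ⟨l, hl⟩ := hAsIn p
      have h1 : l = i := clusterEq (hl hp) ha hαb hab
      have h2 : l = j := clusterEq (hl hq) ha' hαb' hab'
      exact hij (h1.symm.trans h2)
    · obtain ⟨m, hm1, hm2⟩ := exists_mid hd
      have hbb' : b ≠ b' := by
        intro h
        rw [h, SimpleGraph.dist_self] at hd
        omega
      have h2n : TwoNbrsIn G B m := ⟨b, hbB, b', hb'B, hbb', hm1.symm, hm2⟩
      have hmodd : Odd (G.dist o m) := (adj_parity hconn hacyc o hm1.symm).mpr (hBeven b hbB)
      have hmAst : m ∈ ⋃ n, Ast n := by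
        by_cases hmA : m ∈ ⋃ n, As n
        · exact hAsub hmA
        · have hs1 : setDist G (As p) m = 2 := setDistTwo hp hαb hm1.symm hmA hmodd
          have hs2 : setDist G (As q) m = 2 := setDistTwo hq hαb' hm2 hmA hmodd
          exact wstarMem (mkWset hpq hs1 hs2) h2n
      obtain ⟨l, hl⟩ := Set.mem_iUnion.mp hmAst
      have h1 : l = i := clusterEq hl ha hm1.symm hab
      have h2 : l = j := clusterEq hl ha' hm2 hab'
      exact hij (h1.symm.trans h2)
  have hinduced : ∀ i, inducedSet G (Bs i) ⊆ Ast i := by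
    intro i x hx
    obtain ⟨hxBs, y, hyBs, z, hzBs, hyz, hxy, hxz⟩ := hx
    obtain ⟨hyB, a, ha, hay⟩ := hBsmem.mp hyBs
    obtain ⟨hzB, az, haz, hazz⟩ := hBsmem.mp hzBs
    have hxodd : Odd (G.dist o x) := (adj_parity hconn hacyc o hxy).mpr (hBeven y hyB)
    have key : x ∈ ⋃ n, Ast n → x ∈ Ast i := by
      intro hxA
      obtain ⟨l, hl⟩ := Set.mem_iUnion.mp hxA
      have hli : l = i := clusterEq hl ha hxy hay
      exact hli ▸ hl
    by_cases hxU : x ∈ ⋃ n, As n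
    · exact key (hAsub hxU)
    · obtain ⟨α, hα, hαy⟩ := hBsub hyB
      obtain ⟨α', hα', hαz⟩ := hBsub hzB
      obtain ⟨p, hp⟩ := Set.mem_iUnion.mp hα
      obtain ⟨q, hq⟩ := Set.mem_iUnion.mp hα'
      rcases eq_or_ne p q with rfl | hpq
      · exfalso
        have hxα : x ≠ α := fun h => hxU (Set.mem_iUnion.mpr ⟨p, h ▸ hp⟩)
        have hxα' : x ≠ α' := fun h => hxU (Set.mem_iUnion.mpr ⟨p, h ▸ hq⟩)
        rcases eq_or_ne α α' with rfl | hαne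
        · exact hxα (mid_unique hacyc hyz hxy.symm hxz hαy.symm hαz)
        · have hαodd := hodd p α hp
          have hα'odd := hodd p α' hq
          have hyev := hBeven y hyB
          have hzev := hBeven z hzB
          have e1 : G.Adj α y := hαy
          have e2 : G.Adj y x := hxy.symm
          have e3 : G.Adj x z := hxz
          have e4 : G.Adj z α' := hαz.symm
          have hαz' : α ≠ z := by
            intro h
            rw [h] at hαodd
            rw [Nat.odd_iff] at hαodd; rw [Nat.even_iff] at hzev; omega
          have hyα' : y ≠ α' := by
            intro h
            rw [← h] at hα'odd
            rw [Nat.odd_iff] at hα'odd; rw [Nat.even_iff] at hyev; omega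
          have hP : (SimpleGraph.Walk.cons e1 (SimpleGraph.Walk.cons e2
              (SimpleGraph.Walk.cons e3 (SimpleGraph.Walk.cons e4 SimpleGraph.Walk.nil)))).IsPath := by
            rw [SimpleGraph.Walk.isPath_def]
            simp only [SimpleGraph.Walk.support_cons, SimpleGraph.Walk.support_nil]
            refine List.nodup_cons.mpr ⟨?_, List.nodup_cons.mpr ⟨?_,
              List.nodup_cons.mpr ⟨?_, List.nodup_cons.mpr ⟨?_, List.nodup_singleton _⟩⟩⟩⟩
            · intro hmem
              simp only [List.mem_cons, List.not_mem_nil, or_false] at hmem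
              rcases hmem with h | h | h | h
              exacts [e1.ne h, hxα h.symm, hαz' h, hαne h]
            · intro hmem
              simp only [List.mem_cons, List.not_mem_nil, or_false] at hmem
              rcases hmem with h | h | h
              exacts [e2.ne h, hyz h, hyα' h]
            · intro hmem
              simp only [List.mem_cons, List.not_mem_nil, or_false] at hmem
              rcases hmem with h | h
              exacts [e3.ne h, hxα' h]
            · intro hmem
              simp only [List.mem_cons, List.not_mem_nil, or_false] at hmem
              exact e4.ne hmem
          have hxP : x ∈ (SimpleGraph.Walk.cons e1 (SimpleGraph.Walk.cons e2
              (SimpleGraph.Walk.cons e3 (SimpleGraph.Walk.cons e4 SimpleGraph.Walk.nil)))).support := by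
            simp [SimpleGraph.Walk.support_cons]
          exact no_cross hconn hacyc o (hodd p) hxodd
            (fun h => hxU (Set.mem_iUnion.mpr ⟨p, h⟩))
            ((hAs p).2.2.2 α hp α' hq) hp hP hxP
      · apply key
        have hs1 := setDistTwo hp hαy hxy hxU hxodd
        have hs2 := setDistTwo hq hαz hxz hxU hxodd
        exact wstarMem (mkWset hpq hs1 hs2) ⟨y, hyB, z, hzB, hyz, hxy, hxz⟩
  exact ⟨Bs, fun i => ⟨hnonempty i, fun x hxx => hBeven x (hBsB i hxx)⟩, hdisj, hcover,
    hmin, hnonadj, hinduced⟩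
end
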